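/- arXiv:1701.06348 — 6 statements merged into one kernel-verified Lean document; each statement's English description precedes it below -/
import Mathlib

section
/- Let k be a finite field with q elements, V a finite-dimensional k-vector space, and W a fixed flag of type w = (w_1,…,w_m). Let σ = (σ_{ij}) be an upper-triangular m×m matrix with entries in ℕ whose i-th row sum equals w_i, and let t = (t_1,…,t_m) be its sequence of column sums. Let F^W_{t,σ} be the set of flags F = (0 = F_0 ⊆ F_1 ⊆ ⋯ ⊆ F_m = V) of type t such that dim_k( (W_i ∩ F_j)/(W_{i−1} ∩ F_j + W_i ∩ F_{j−1}) ) = σ_{ij} for all 1 ≤ i, j ≤ m. Then #F^W_{t,σ} = q^{Σ_{i > k, j < l} σ_{ij} σ_{kl}} · ∏_{i=1}^{m} [w_i]!_q / ( [σ_{ii}]!_q · [σ_{i,i+1}]!_q ⋯ [σ_{im}]!_q ). -/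
open scoped Classical
noncomputable section

/-- Quantum integer `[a]_q = (q^a − 1)/(q − 1)`. -/
def qInt (q : ℕ) (a : ℤ) : ℚ := ((q : ℚ) ^ a - 1) / ((q : ℚ) - 1)

/-- Quantum factorial `[a]!_q = ∏_{i=1}^{a} [i]_q`. -/
def qFact (q : ℕ) (a : ℕ) : ℚ := ∏ i ∈ Finset.range a, qInt q ((i : ℤ) + 1)

namespace FlagCount

/-- Fiber-counting: if every fiber of `g` over `T` has `c` elements, total = card T * c. -/
lemma card_fiber_mul {α β : Type*} [Finite α] (g : α → β) (T : Set β)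
    (hmem : ∀ a, g a ∈ T) (c : ℕ) (hfib : ∀ b, b ∈ T → Nat.card {a // g a = b} = c) :
    Nat.card α = Nat.card T * c := by
  rcases Nat.eq_zero_or_pos c with hc | hc
  · subst hc
    rw [mul_zero]
    rw [Nat.card_eq_zero]
    left
    by_contra h
    rw [not_isEmpty_iff] at h
    obtain ⟨a⟩ := h
    have h1 := hfib (g a) (hmem a)
    have : Nonempty {x // g x = g a} := ⟨⟨a, rfl⟩⟩
    have : 0 < Nat.card {x // g x = g a} := Nat.card_pos
    omega
  · have hTr : T ⊆ Set.range g := by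
      intro b hb
      have h1 := hfib b hb
      have : 0 < Nat.card {a // g a = b} := h1 ▸ hc
      have : Nonempty {a // g a = b} := Nat.card_pos_iff.mp this |>.1
      obtain ⟨⟨a, ha⟩⟩ := this
      exact ⟨a, ha⟩
    have hTf : T.Finite := (Set.finite_range g).subset hTr
    letI : Fintype α := Fintype.ofFinite α
    letI : Fintype T := hTf.fintype
    have e : α ≃ Σ b : T, {a // g a = (b : β)} :=
      { toFun := fun a => ⟨⟨g a, hmem a⟩, a, rfl⟩
        invFun := fun x => x.2.1
        left_inv := fun a => rfl
        right_inv := by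
          rintro ⟨⟨b, hb⟩, ⟨a, ha⟩⟩
          simp only at ha
          subst ha
          rfl }
    rw [Nat.card_congr e]
    rw [Nat.card_eq_fintype_card, Fintype.card_sigma]
    rw [Nat.card_eq_fintype_card]
    have : ∀ b : T, Fintype.card {a // g a = (b : β)} = c := by
      intro b
      rw [← Nat.card_eq_fintype_card]
      exact hfib b b.2
    rw [Finset.sum_congr rfl (fun b _ => this b), Finset.sum_const, Finset.card_univ, smul_eq_mul]


/-! ### q-algebra -/

/-- `∏_{l<a} (q^n - q^l)` over ℚ. -/
def gp (q n a : ℕ) : ℚ := ∏ l ∈ Finset.range a, ((q : ℚ) ^ n - (q : ℚ) ^ l)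

/-- `∏_{l<a} (q^n - q^l)` over ℕ. -/
def gpN (q n a : ℕ) : ℕ := ∏ l ∈ Finset.range a, (q ^ n - q ^ l)

variable {q : ℕ}

lemma qInt_cast_pos (hq : 2 ≤ q) {a : ℕ} (ha : 1 ≤ a) : 0 < qInt q (a : ℤ) := by
  rw [qInt, zpow_natCast]
  apply div_pos
  · have : (1:ℚ) < (q:ℚ) := by exact_mod_cast hq
    have : (1:ℚ) < (q:ℚ)^a := one_lt_pow₀ this (by omega)
    linarith
  · have : (1:ℚ) < (q:ℚ) := by exact_mod_cast hq
    linarith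

lemma qFact_pos (hq : 2 ≤ q) (a : ℕ) : 0 < qFact q a := by
  rw [qFact]
  apply Finset.prod_pos
  intro i _
  have : ((i:ℤ) + 1) = (((i+1 : ℕ)) : ℤ) := by push_cast; ring
  rw [this]
  exact qInt_cast_pos hq (by omega)

lemma qFact_ne_zero (hq : 2 ≤ q) (a : ℕ) : qFact q a ≠ 0 := (qFact_pos hq a).ne'

lemma qFact_succ (s : ℕ) : qFact q (s + 1) = qFact q s * qInt q ((s : ℤ) + 1) := by
  rw [qFact, qFact, Finset.prod_range_succ]

lemma gp_pos (hq : 2 ≤ q) {n a : ℕ} (h : a ≤ n) : 0 < gp q n a := by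
  rw [gp]
  apply Finset.prod_pos
  intro l hl
  rw [Finset.mem_range] at hl
  have h1 : (1:ℚ) < (q:ℚ) := by exact_mod_cast hq
  have : (q:ℚ) ^ l < (q:ℚ) ^ n := pow_lt_pow_right₀ h1 (by omega)
  linarith

lemma gp_ne_zero (hq : 2 ≤ q) {n a : ℕ} (h : a ≤ n) : gp q n a ≠ 0 := (gp_pos hq h).ne'

lemma gp_cast (hq : 2 ≤ q) {n a : ℕ} (h : a ≤ n) : (gpN q n a : ℚ) = gp q n a := by
  rw [gpN, gp, Nat.cast_prod]
  apply Finset.prod_congr rfl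
  intro l hl
  rw [Finset.mem_range] at hl
  have : q ^ l ≤ q ^ n := Nat.pow_le_pow_right (by omega) (by omega)
  push_cast [this]
  ring

lemma gp_fact (hq : 2 ≤ q) {n a : ℕ} (h : a ≤ n) :
    gp q n a * qFact q (n - a) =
      (q:ℚ) ^ (∑ l ∈ Finset.range a, l) * ((q:ℚ) - 1) ^ a * qFact q n := by
  induction a with
  | zero => simp [gp]
  | succ a ih =>
    have ha : a ≤ n := by omega
    have hlt : a < n := by omega
    have key : (q:ℚ) ^ n - (q:ℚ) ^ a = (q:ℚ)^a * ((q:ℚ) - 1) * qInt q ((n - a : ℕ) : ℤ) := by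
      rw [qInt, zpow_natCast]
      have hq1 : ((q:ℚ) - 1) ≠ 0 := by
        have : (1:ℚ) < (q:ℚ) := by exact_mod_cast hq
        linarith
      field_simp
      have hpa : (q:ℚ)^a * (q:ℚ)^(n-a) = (q:ℚ)^n := by
        rw [← pow_add, Nat.add_sub_cancel' ha]
      linear_combination (-1:ℚ) * hpa
    have hfs : qFact q (n - a) = qFact q (n - (a+1)) * qInt q ((n - a : ℕ) : ℤ) := by
      have h1 : n - a = (n - (a+1)) + 1 := by omega
      rw [h1, qFact_succ]
      have h2 : (((n - (a+1) : ℕ)) : ℤ) + 1 = ((n - a : ℕ) : ℤ) := by push_cast; omega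
      rw [h2, ← h1]
    have expand : gp q n (a+1) = gp q n a * ((q:ℚ) ^ n - (q:ℚ) ^ a) := by
      rw [gp, gp, Finset.prod_range_succ]
    rw [expand]
    calc gp q n a * ((q:ℚ) ^ n - (q:ℚ) ^ a) * (qFact q (n - (a + 1)))
        = gp q n a * ((q:ℚ)^a * ((q:ℚ) - 1) * qInt q ((n - a : ℕ) : ℤ)) * qFact q (n - (a+1)) := by
          rw [key]
      _ = (gp q n a * (qFact q (n - (a+1)) * qInt q ((n - a : ℕ) : ℤ))) * ((q:ℚ)^a * ((q:ℚ) - 1)) := by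
          ring
      _ = ((q:ℚ) ^ (∑ l ∈ Finset.range a, l) * ((q:ℚ) - 1) ^ a * qFact q n) * ((q:ℚ)^a * ((q:ℚ) - 1)) := by
          rw [← hfs, ih ha]
      _ = (q:ℚ) ^ (∑ l ∈ Finset.range (a+1), l) * ((q:ℚ) - 1) ^ (a+1) * qFact q n := by
          rw [Finset.sum_range_succ, pow_add, pow_succ]
          ring

/-- Key ratio: `gp (x+y) x / gp x x = qFact (x+y) / (qFact x * qFact y)`. -/
lemma gp_ratio (hq : 2 ≤ q) (x y : ℕ) :
    gp q (x + y) x * qFact q x * qFact q y = gp q x x * qFact q (x + y) := by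
  have h1 := gp_fact hq (Nat.le_add_right x y)
  have h2 := gp_fact hq (le_refl x)
  rw [Nat.add_sub_cancel_left] at h1
  rw [Nat.sub_self] at h2
  have h2' : gp q x x = (q:ℚ) ^ (∑ l ∈ Finset.range x, l) * ((q:ℚ) - 1) ^ x * qFact q x := by
    simpa [qFact] using h2
  calc gp q (x + y) x * qFact q x * qFact q y
      = (gp q (x+y) x * qFact q y) * qFact q x := by ring
    _ = ((q:ℚ) ^ (∑ l ∈ Finset.range x, l) * ((q:ℚ) - 1) ^ x * qFact q (x+y)) * qFact q x := by rw [h1]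
    _ = ((q:ℚ) ^ (∑ l ∈ Finset.range x, l) * ((q:ℚ) - 1) ^ x * qFact q x) * qFact q (x+y) := by ring
    _ = gp q x x * qFact q (x + y) := by rw [← h2']


/-! ### Subspace counting -/

variable {k : Type*} [Field k] [Fintype k] {V : Type*} [AddCommGroup V] [Module k V]
  [FiniteDimensional k V]

open Module Submodule

/-- Number of independent `a`-tuples in a finite-dim. space over a finite field. -/
lemma card_li_tuples (q : ℕ) (hq : Fintype.card k = q) (a : ℕ) :
    Nat.card {s : Fin a → V // LinearIndependent k s} = gpN q (finrank k V) a := by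
  haveI : Finite V := Module.finite_of_finite k
  by_cases ha : a ≤ finrank k V
  · rw [card_linearIndependent ha, hq, gpN]
    exact Fin.prod_univ_eq_prod_range (fun l => q ^ finrank k V - q ^ l) a
  · have he : IsEmpty {s : Fin a → V // LinearIndependent k s} := by
      constructor
      rintro ⟨s, hs⟩
      have := hs.fintype_card_le_finrank
      simp only [Fintype.card_fin] at this
      omega
    rw [Nat.card_of_isEmpty, gpN]
    have hc : finrank k V ∈ Finset.range a := Finset.mem_range.mpr (by omega)
    rw [eq_comm]
    apply Finset.prod_eq_zero hc
    simp

/-- Counting tuples independent mod `M`. -/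
lemma card_li_mod (q : ℕ) (hq : Fintype.card k = q) (M : Submodule k V) (a : ℕ) :
    Nat.card {s : Fin a → V // LinearIndependent k (M.mkQ ∘ s)} =
      q ^ (a * finrank k M) * gpN q (finrank k (V ⧸ M)) a := by
  haveI : Finite V := Module.finite_of_finite k
  have hsec : ∀ x : V ⧸ M, M.mkQ (Function.surjInv M.mkQ_surjective x) = x :=
    fun x => Function.surjInv_eq M.mkQ_surjective x
  set sec := Function.surjInv M.mkQ_surjective with hsecdef
  have e : {s : Fin a → V // LinearIndependent k (M.mkQ ∘ s)} ≃
      {t : Fin a → V ⧸ M // LinearIndependent k t} × (Fin a → M) :=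
    { toFun := fun s => ⟨⟨M.mkQ ∘ s.1, s.2⟩, fun i =>
        ⟨s.1 i - sec (M.mkQ (s.1 i)), by
          have : M.mkQ (s.1 i - sec (M.mkQ (s.1 i))) = 0 := by
            rw [map_sub, hsec, sub_self]
          rwa [← LinearMap.mem_ker, Submodule.ker_mkQ] at this⟩⟩
      invFun := fun tm => ⟨fun i => sec (tm.1.1 i) + (tm.2 i : V), by
        have hcomp : M.mkQ ∘ (fun i => sec (tm.1.1 i) + (tm.2 i : V)) = tm.1.1 := by
          funext i
          simp only [Function.comp_apply, map_add, hsec]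
          have h0 : M.mkQ (tm.2 i : V) = 0 := by
            rw [← LinearMap.mem_ker, Submodule.ker_mkQ]; exact (tm.2 i).2
          rw [h0, add_zero]
        rw [hcomp]; exact tm.1.2⟩
      left_inv := by
        rintro ⟨s, hs⟩
        apply Subtype.ext
        funext i
        simp
      right_inv := by
        rintro ⟨⟨t, ht⟩, m⟩
        have hmk : ∀ i, M.mkQ (sec (t i) + (m i : V)) = t i := by
          intro i
          have h0 : M.mkQ ((m i : V)) = 0 := by
            rw [← LinearMap.mem_ker, Submodule.ker_mkQ]; exact (m i).2
          rw [map_add, h0, add_zero, hsec]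
        apply Prod.ext
        · apply Subtype.ext
          funext i
          simpa using hmk i
        · funext i
          apply Subtype.ext
          simp [hmk i] }
  rw [Nat.card_congr e, Nat.card_prod, card_li_tuples q hq a, Nat.card_fun]
  have hM : Nat.card M = q ^ finrank k M := by
    haveI : Fintype M := Fintype.ofFinite M
    rw [Nat.card_eq_fintype_card, card_eq_pow_finrank (K := k) (V := M), hq]
  rw [hM, Nat.card_eq_fintype_card, Fintype.card_fin, ← pow_mul]
  ring

/-- L0: number of `a`-dim subspaces intersecting `M` trivially. -/
lemma card_avoid (q : ℕ) (hq : Fintype.card k = q) (M : Submodule k V) (a : ℕ) :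
    Nat.card {U : Submodule k V // finrank k ↥U = a ∧ U ⊓ M = ⊥} * gpN q a a =
      q ^ (a * finrank k M) * gpN q (finrank k V - finrank k M) a := by
  haveI : Finite V := Module.finite_of_finite k
  haveI : Finite (Submodule k V) := Finite.of_injective (fun U => (U : Set V)) SetLike.coe_injective
  have key : Nat.card {s : Fin a → V // LinearIndependent k (M.mkQ ∘ s)} =
      Nat.card {U : Submodule k V | finrank k ↥U = a ∧ U ⊓ M = ⊥} * gpN q a a := by
    apply card_fiber_mul (fun s => Submodule.span k (Set.range s.1))
    · rintro ⟨s, hs⟩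
      have hli : LinearIndependent k s := hs.of_comp M.mkQ
      constructor
      · rw [finrank_span_eq_card hli, Fintype.card_fin]
      · rw [eq_bot_iff]
        rintro x ⟨hx1, hx2⟩
        obtain ⟨c, hc⟩ := mem_span_range_iff_exists_fun k |>.mp hx1
        have h0 : M.mkQ x = 0 := by
          rw [← LinearMap.mem_ker, Submodule.ker_mkQ]; exact hx2
        have : ∑ i, c i • (M.mkQ ∘ s) i = 0 := by
          rw [← h0, ← hc, map_sum]
          simp
        have hz := Fintype.linearIndependent_iff.mp hs c this
        simp only [Submodule.mem_bot]
        rw [← hc]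
        simp [hz]
    · rintro U ⟨hUa, hUM⟩
      have hmemU : ∀ (s' : {s' : {s : Fin a → V // LinearIndependent k (M.mkQ ∘ s)} //
          Submodule.span k (Set.range (s'.1 : Fin a → V)) = U}) (i : Fin a),
          (s'.1 : Fin a → V) i ∈ U := by
        intro s' i
        have h1 : (s'.1 : Fin a → V) i ∈ Submodule.span k (Set.range (s'.1 : Fin a → V)) :=
          Submodule.subset_span (Set.mem_range_self i)
        rwa [s'.2] at h1
      have e2 : {s' : {s : Fin a → V // LinearIndependent k (M.mkQ ∘ s)} //
          Submodule.span k (Set.range (s'.1 : Fin a → V)) = U} ≃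
            {t : Fin a → U // LinearIndependent k t} :=
        { toFun := fun s' => ⟨fun i => ⟨(s'.1 : Fin a → V) i, hmemU s' i⟩, by
            have hli : LinearIndependent k (s'.1 : Fin a → V) := s'.1.2.of_comp M.mkQ
            have hcm : U.subtype ∘ (fun i => (⟨(s'.1 : Fin a → V) i, hmemU s' i⟩ : U))
                = (s'.1 : Fin a → V) := by
              funext i; rfl
            exact LinearIndependent.of_comp U.subtype (by rw [hcm]; exact hli)⟩
          invFun := fun t => ⟨⟨fun i => (t.1 i : V), by
            rw [Fintype.linearIndependent_iff]
            intro c hc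
            have hmem : (∑ i, c i • (t.1 i : V)) ∈ U := by
              apply Submodule.sum_mem
              intro i _
              exact Submodule.smul_mem _ _ (t.1 i).2
            have hmemM : (∑ i, c i • (t.1 i : V)) ∈ M := by
              have h0 : M.mkQ (∑ i, c i • (t.1 i : V)) = 0 := by
                rw [map_sum]
                simpa using hc
              rwa [← LinearMap.mem_ker, Submodule.ker_mkQ] at h0
            have : (∑ i, c i • (t.1 i : V)) ∈ U ⊓ M := ⟨hmem, hmemM⟩
            rw [hUM, Submodule.mem_bot] at this
            have hsum : (∑ i, c i • t.1 i : U) = 0 := by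
              apply Subtype.ext
              push_cast
              simpa using this
            exact Fintype.linearIndependent_iff.mp t.2 c hsum⟩, by
            have : Set.range (fun i => (t.1 i : V)) = U.subtype '' Set.range t.1 := by
              rw [← Set.range_comp]; rfl
            rw [this, ← Submodule.map_span]
            have hsp : Submodule.span k (Set.range t.1) = (⊤ : Submodule k U) := by
              apply Submodule.eq_top_of_finrank_eq
              rw [finrank_span_eq_card t.2, Fintype.card_fin, hUa]
            rw [hsp, Submodule.map_subtype_top]⟩
          left_inv := by
            rintro ⟨⟨s, hs⟩, hsp⟩
            apply Subtype.ext
            apply Subtype.ext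
            funext i
            rfl
          right_inv := by
            rintro ⟨t, ht⟩
            apply Subtype.ext
            funext i
            apply Subtype.ext
            rfl }
      rw [Nat.card_congr e2]
      have : finrank k ↥U = a := hUa
      rw [card_li_tuples q hq a, this]
  have hsame : Nat.card {U : Submodule k V // finrank k ↥U = a ∧ U ⊓ M = ⊥} =
      Nat.card ↑{U : Submodule k V | finrank k ↥U = a ∧ U ⊓ M = ⊥} := rfl
  rw [hsame, ← key, card_li_mod q hq M a]
  congr 2
  have := Submodule.finrank_quotient_add_finrank M
  omega


/-- L0 relative: `a`-dim subspaces of `N` meeting `M ≤ N` trivially. -/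
lemma card_avoid_le (q : ℕ) (hq : Fintype.card k = q) (M N : Submodule k V) (hMN : M ≤ N)
    (a : ℕ) :
    Nat.card {U : Submodule k V // U ≤ N ∧ U ⊓ M = ⊥ ∧ finrank k ↥U = a} * gpN q a a =
      q ^ (a * finrank k ↥M) * gpN q (finrank k ↥N - finrank k ↥M) a := by
  have hinj : Function.Injective N.subtype := Submodule.injective_subtype N
  have hMc : finrank k ↥(Submodule.comap N.subtype M) = finrank k ↥M :=
    (Submodule.comapSubtypeEquivOfLe hMN).finrank_eq
  have hE : {U'' : Submodule k ↥N // finrank k ↥U'' = a ∧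
        U'' ⊓ Submodule.comap N.subtype M = ⊥} ≃
      {U : Submodule k V // U ≤ N ∧ U ⊓ M = ⊥ ∧ finrank k ↥U = a} :=
    { toFun := fun U'' => ⟨Submodule.map N.subtype U''.1, by
        refine ⟨Submodule.map_subtype_le N U''.1, ?_, ?_⟩
        · rw [eq_bot_iff]
          rintro x ⟨hx1, hx2⟩
          obtain ⟨y, hy, rfl⟩ := hx1
          have hyM : y ∈ Submodule.comap N.subtype M := hx2
          have : y ∈ U''.1 ⊓ Submodule.comap N.subtype M := ⟨hy, hyM⟩
          rw [U''.2.2, Submodule.mem_bot] at this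
          simp [this]
        · rw [← (Submodule.equivMapOfInjective N.subtype hinj U''.1).finrank_eq]
          exact U''.2.1⟩
      invFun := fun U => ⟨Submodule.comap N.subtype U.1, by
        have hmc : Submodule.map N.subtype (Submodule.comap N.subtype U.1) = U.1 := by
          rw [Submodule.map_comap_subtype]
          exact inf_eq_right.mpr U.2.1
        constructor
        · have := (Submodule.comapSubtypeEquivOfLe U.2.1).finrank_eq
          rw [this]; exact U.2.2.2
        · rw [← Submodule.comap_inf, U.2.2.1, Submodule.comap_bot, Submodule.ker_subtype]⟩
      left_inv := fun U'' => Subtype.ext (Submodule.comap_map_eq_of_injective hinj U''.1)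
      right_inv := fun U => Subtype.ext (by
        simp only
        rw [Submodule.map_comap_subtype]
        exact inf_eq_right.mpr U.2.1) }
  rw [← Nat.card_congr hE, card_avoid q hq (Submodule.comap N.subtype M) a, hMc]

/-- Monotone chains. -/
lemma chain_le {m : ℕ} {W : ℕ → Submodule k V} (hmono : ∀ i, i < m → W i ≤ W (i + 1))
    {i j : ℕ} (hij : i ≤ j) (hj : j ≤ m) : W i ≤ W j := by
  induction j with
  | zero => simp_all
  | succ j ih =>
    rcases Nat.eq_or_lt_of_le hij with h | h
    · rw [h]
    · exact le_trans (ih (by omega) (by omega)) (hmono j (by omega))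


/-! ### Quotient helpers -/

lemma two_le_card (q : ℕ) (hq : Fintype.card k = q) : 2 ≤ q := by
  rw [← hq]
  exact Fintype.one_lt_card

lemma gp_cast' {q : ℕ} (hq : 2 ≤ q) (n a : ℕ) : (gpN q n a : ℚ) = gp q n a := by
  by_cases h : a ≤ n
  · exact gp_cast hq h
  · have h1 : gpN q n a = 0 := by
      rw [gpN]
      apply Finset.prod_eq_zero (Finset.mem_range.mpr (show n < a by omega))
      simp
    have h2 : gp q n a = 0 := by
      rw [gp]
      apply Finset.prod_eq_zero (Finset.mem_range.mpr (show n < a by omega))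
      simp
    rw [h1, h2, Nat.cast_zero]

lemma card_avoid_le_Q (q : ℕ) (hq : Fintype.card k = q) (M N : Submodule k V) (hMN : M ≤ N)
    (a : ℕ) :
    (Nat.card {U : Submodule k V // U ≤ N ∧ U ⊓ M = ⊥ ∧ finrank k ↥U = a} : ℚ) =
      (q : ℚ) ^ (a * finrank k ↥M) *
        gp q (finrank k ↥N - finrank k ↥M) a / gp q a a := by
  have hq2 : 2 ≤ q := two_le_card q hq
  have h := card_avoid_le q hq M N hMN a
  have hcast : (Nat.card {U : Submodule k V // U ≤ N ∧ U ⊓ M = ⊥ ∧ finrank k ↥U = a} : ℚ) *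
      gp q a a = (q : ℚ) ^ (a * finrank k ↥M) * gp q (finrank k ↥N - finrank k ↥M) a := by
    rw [← gp_cast' hq2, ← gp_cast' hq2, ← Nat.cast_mul, h]
    push_cast
    ring
  have hne : gp q a a ≠ 0 := gp_ne_zero hq2 (le_refl a)
  field_simp at hcast ⊢
  linarith [hcast]

lemma card_fiber_mul_Q {α β : Type*} [Finite α] (g : α → β) (T : Set β)
    (hmem : ∀ a, g a ∈ T) (φ : ℚ)
    (hfib : ∀ b, b ∈ T → (Nat.card {a // g a = b} : ℚ) = φ) :
    (Nat.card α : ℚ) = (Nat.card T : ℚ) * φ := by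
  by_cases hT : Nonempty T
  · obtain ⟨⟨b0, hb0⟩⟩ := hT
    set c := Nat.card {a // g a = b0} with hc
    have hφ : φ = (c : ℚ) := (hfib b0 hb0).symm
    have : Nat.card α = Nat.card T * c := by
      apply card_fiber_mul g T hmem
      intro b hb
      have := (hfib b hb).trans hφ
      exact_mod_cast this
    rw [this, hφ]
    push_cast
    ring
  · have : IsEmpty α := ⟨fun a => hT ⟨⟨g a, hmem a⟩⟩⟩
    have h1 : Nat.card α = 0 := Nat.card_of_isEmpty
    have h2 : Nat.card T = 0 := by
      have : IsEmpty T := not_nonempty_iff.mp hT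
      exact Nat.card_of_isEmpty
    rw [h1, h2]
    simp

/-- rank-nullity for `map mkQ`. -/
lemma finrank_map_mkQ (U' P : Submodule k V) (h : U' ≤ P) :
    finrank k ↥(Submodule.map U'.mkQ P) + finrank k ↥U' = finrank k ↥P := by
  have hr := LinearMap.finrank_range_add_finrank_ker (U'.mkQ.comp P.subtype)
  have h1 : LinearMap.range (U'.mkQ.comp P.subtype) = Submodule.map U'.mkQ P := by
    rw [LinearMap.range_comp, Submodule.range_subtype]
  have h2 : finrank k ↥(LinearMap.ker (U'.mkQ.comp P.subtype)) = finrank k ↥U' := by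
    have : LinearMap.ker (U'.mkQ.comp P.subtype) = Submodule.comap P.subtype U' := by
      rw [LinearMap.ker_comp, Submodule.ker_mkQ]
    rw [this]
    exact (Submodule.comapSubtypeEquivOfLe h).finrank_eq
  rw [h1, h2] at hr
  exact hr

lemma map_comap_mkQ_self (U' : Submodule k V) (Q : Submodule k (V ⧸ U')) :
    Submodule.map U'.mkQ (Submodule.comap U'.mkQ Q) = Q := by
  rw [Submodule.map_comap_eq, Submodule.range_mkQ, top_inf_eq]

lemma comap_map_mkQ_self (U' P : Submodule k V) (h : U' ≤ P) :
    Submodule.comap U'.mkQ (Submodule.map U'.mkQ P) = P := by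
  rw [Submodule.comap_map_mkQ, sup_eq_right.mpr h]

lemma map_mkQ_inf (U' P1 P2 : Submodule k V) (h1 : U' ≤ P1) (h2 : U' ≤ P2) :
    Submodule.map U'.mkQ (P1 ⊓ P2) =
      Submodule.map U'.mkQ P1 ⊓ Submodule.map U'.mkQ P2 := by
  have hc : Submodule.comap U'.mkQ
      (Submodule.map U'.mkQ P1 ⊓ Submodule.map U'.mkQ P2) = P1 ⊓ P2 := by
    rw [Submodule.comap_inf, comap_map_mkQ_self U' P1 h1, comap_map_mkQ_self U' P2 h2]
  rw [← hc, map_comap_mkQ_self]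

/-- Telescoping finrank along a chain. -/
lemma finrank_chain {m : ℕ} {W : ℕ → Submodule k V} (hW0 : W 0 = ⊥) (f : ℕ → ℕ)
    (hw : ∀ i, 1 ≤ i → i ≤ m → finrank k ↥(W i) = finrank k ↥(W (i - 1)) + f i) :
    ∀ j, j ≤ m → finrank k ↥(W j) = ∑ i ∈ Finset.Icc 1 j, f i := by
  intro j
  induction j with
  | zero => intro _; simp [hW0]
  | succ j ih =>
    intro hj
    rw [hw (j+1) (by omega) hj]
    have h1 := ih (by omega)
    have h2 : j + 1 - 1 = j := by omega
    rw [h2, h1, Finset.sum_Icc_succ_top (by omega : 1 ≤ j + 1)]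


/-- L1: number of subspaces of `W m` with prescribed intersection dimensions along the flag. -/
lemma card_flag_slice (q : ℕ) (hq : Fintype.card k = q) (m : ℕ) :
    ∀ (W : ℕ → Submodule k V), W 0 = ⊥ → (∀ i, i < m → W i ≤ W (i + 1)) →
    ∀ a b : ℕ → ℕ, (∀ i, 1 ≤ i → i ≤ m →
      finrank k ↥(W i) = finrank k ↥(W (i - 1)) + (a i + b i)) →
    (Nat.card {U : Submodule k V // U ≤ W m ∧ ∀ i, 1 ≤ i → i ≤ m →
        finrank k ↥(W i ⊓ U) = ∑ i' ∈ Finset.Icc 1 i, a i'} : ℚ) =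
      (q : ℚ) ^ (∑ i ∈ Finset.Icc 1 m, a i * ∑ kk ∈ Finset.Ico 1 i, b kk) *
        ∏ i ∈ Finset.Icc 1 m, (gp q (a i + b i) (a i) / gp q (a i) (a i)) := by
  haveI : Finite V := Module.finite_of_finite k
  haveI : Finite (Submodule k V) := Finite.of_injective (fun U => (U : Set V)) SetLike.coe_injective
  have hq2 : 2 ≤ q := two_le_card q hq
  induction m with
  | zero =>
    intro W hW0 hmono a b hw
    have hu : ∀ x : {U : Submodule k V // U ≤ W 0 ∧ ∀ i, 1 ≤ i → i ≤ 0 →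
        finrank k ↥(W i ⊓ U) = ∑ i' ∈ Finset.Icc 1 i, a i'},
        x = ⟨⊥, by rw [hW0]; exact ⟨le_refl _, by intro i h1 h2; omega⟩⟩ := by
      rintro ⟨U, hU1, hU2⟩
      apply Subtype.ext
      rw [hW0] at hU1
      exact le_bot_iff.mp hU1
    haveI : Unique {U : Submodule k V // U ≤ W 0 ∧ ∀ i, 1 ≤ i → i ≤ 0 →
        finrank k ↥(W i ⊓ U) = ∑ i' ∈ Finset.Icc 1 i, a i'} :=
      ⟨⟨⟨⊥, by rw [hW0]; exact ⟨le_refl _, by intro i h1 h2; omega⟩⟩⟩, hu⟩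
    rw [Nat.card_unique]
    simp
  | succ m IH =>
    intro W hW0 hmono a b hw
    have hmono' : ∀ i, i < m → W i ≤ W (i + 1) := fun i h => hmono i (by omega)
    have hw' : ∀ i, 1 ≤ i → i ≤ m →
        finrank k ↥(W i) = finrank k ↥(W (i - 1)) + (a i + b i) :=
      fun i h1 h2 => hw i h1 (by omega)
    have hWm1 : W m ≤ W (m + 1) := hmono m (by omega)
    have hrankW : ∀ j, j ≤ m + 1 → finrank k ↥(W j) = ∑ i ∈ Finset.Icc 1 j, (a i + b i) :=
      finrank_chain hW0 (fun i => a i + b i) hw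
    -- target set and fibering
    set T : Set (Submodule k V) := {U' | U' ≤ W m ∧ ∀ i, 1 ≤ i → i ≤ m →
        finrank k ↥(W i ⊓ U') = ∑ i' ∈ Finset.Icc 1 i, a i'} with hT
    set φ : ℚ := (q : ℚ) ^ (a (m+1) * ∑ kk ∈ Finset.Icc 1 m, b kk) *
        (gp q (a (m+1) + b (m+1)) (a (m+1)) / gp q (a (m+1)) (a (m+1))) with hφ
    have main : (Nat.card {U : Submodule k V // U ≤ W (m+1) ∧ ∀ i, 1 ≤ i → i ≤ m + 1 →
        finrank k ↥(W i ⊓ U) = ∑ i' ∈ Finset.Icc 1 i, a i'} : ℚ) = (Nat.card T : ℚ) * φ := by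
      apply card_fiber_mul_Q (fun U => U.1 ⊓ W m) T
      · -- membership
        rintro ⟨U, hU1, hU2⟩
        constructor
        · exact inf_le_right
        · intro i h1 h2
          have hWiWm : W i ≤ W m := chain_le (m := m + 1) hmono (show i ≤ m by omega) (show m ≤ m + 1 by omega)
          have heq : W i ⊓ (U ⊓ W m) = W i ⊓ U := by
            rw [← inf_assoc]
            exact inf_eq_left.mpr (le_trans inf_le_left hWiWm)
          rw [heq]
          exact hU2 i h1 (by omega)
      · -- fibers
        rintro U' hU'
        obtain ⟨hU'W, hU'dims⟩ := hU'
        have hU'dim : finrank k ↥U' = ∑ i' ∈ Finset.Icc 1 m, a i' := by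
          rcases Nat.eq_zero_or_pos m with rfl | hm
          · have hb : U' = ⊥ := le_bot_iff.mp (hW0 ▸ hU'W)
            simp [hb]
          · have := hU'dims m hm (le_refl m)
            rwa [inf_eq_right.mpr hU'W] at this
        -- the fiber is equivalent to the set of subspaces X
        have e1 : {u : {U : Submodule k V // U ≤ W (m+1) ∧ ∀ i, 1 ≤ i → i ≤ m + 1 →
              finrank k ↥(W i ⊓ U) = ∑ i' ∈ Finset.Icc 1 i, a i'} //
              (fun U => U.1 ⊓ W m) u = U'} ≃
            {X : Submodule k V // X ≤ W (m+1) ∧ X ⊓ W m = U' ∧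
              finrank k ↥X = ∑ i' ∈ Finset.Icc 1 (m+1), a i'} :=
          { toFun := fun u => ⟨u.1.1, u.1.2.1, u.2, by
              have := u.1.2.2 (m+1) (by omega) (le_refl _)
              rwa [inf_eq_right.mpr u.1.2.1] at this⟩
            invFun := fun x => ⟨⟨x.1, x.2.1, by
              intro i h1 h2
              rcases Nat.lt_or_ge i (m+1) with hi | hi
              · have hWiWm : W i ≤ W m := chain_le (m := m + 1) hmono (show i ≤ m by omega) (show m ≤ m + 1 by omega)
                have heq : W i ⊓ x.1 = W i ⊓ U' := by
                  calc W i ⊓ x.1 = (W i ⊓ x.1) ⊓ W m :=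
                        (inf_eq_left.mpr (le_trans inf_le_left hWiWm)).symm
                    _ = W i ⊓ (x.1 ⊓ W m) := inf_assoc _ _ _
                    _ = W i ⊓ U' := by rw [x.2.2.1]
                rw [heq]
                exact hU'dims i h1 (by omega)
              · have hieq : i = m + 1 := by omega
                subst hieq
                rw [inf_eq_right.mpr x.2.1]
                exact x.2.2.2⟩, x.2.2.1⟩
            left_inv := fun u => Subtype.ext (Subtype.ext rfl)
            right_inv := fun x => Subtype.ext rfl }
        rw [Nat.card_congr e1]
        -- now transport to the quotient V ⧸ U'
        have hU'Wm1 : U' ≤ W (m+1) := le_trans hU'W hWm1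
        have e2 : {X : Submodule k V // X ≤ W (m+1) ∧ X ⊓ W m = U' ∧
              finrank k ↥X = ∑ i' ∈ Finset.Icc 1 (m+1), a i'} ≃
            {Ub : Submodule k (V ⧸ U') // Ub ≤ Submodule.map U'.mkQ (W (m+1)) ∧
              Ub ⊓ Submodule.map U'.mkQ (W m) = ⊥ ∧ finrank k ↥Ub = a (m+1)} :=
          { toFun := fun x => ⟨Submodule.map U'.mkQ x.1, by
              have hU'X : U' ≤ x.1 := by
                have h := inf_le_left (a := x.1) (b := W m)
                rw [x.2.2.1] at h
                exact h
              refine ⟨Submodule.map_mono x.2.1, ?_, ?_⟩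
              · rw [← map_mkQ_inf U' x.1 (W m) hU'X hU'W, x.2.2.1, Submodule.mkQ_map_self]
              · have h1 := finrank_map_mkQ U' x.1 hU'X
                have h2 := x.2.2.2
                have hsum : ∑ i' ∈ Finset.Icc 1 (m+1), a i' =
                    (∑ i' ∈ Finset.Icc 1 m, a i') + a (m+1) :=
                  Finset.sum_Icc_succ_top (by omega : 1 ≤ m + 1) a
                omega⟩
            invFun := fun u => ⟨Submodule.comap U'.mkQ u.1, by
              have hU'X : U' ≤ Submodule.comap U'.mkQ u.1 := Submodule.le_comap_mkQ U' u.1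
              have hmapX : Submodule.map U'.mkQ (Submodule.comap U'.mkQ u.1) = u.1 :=
                map_comap_mkQ_self U' u.1
              refine ⟨?_, ?_, ?_⟩
              · calc Submodule.comap U'.mkQ u.1
                    ≤ Submodule.comap U'.mkQ (Submodule.map U'.mkQ (W (m+1))) :=
                      Submodule.comap_mono u.2.1
                  _ = W (m+1) := comap_map_mkQ_self U' (W (m+1)) hU'Wm1
              · have hm1 : Submodule.map U'.mkQ (Submodule.comap U'.mkQ u.1 ⊓ W m) = ⊥ := by
                  rw [map_mkQ_inf U' _ (W m) hU'X hU'W, hmapX, u.2.2.1]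
                have hge : U' ≤ Submodule.comap U'.mkQ u.1 ⊓ W m := le_inf hU'X hU'W
                have := comap_map_mkQ_self U' (Submodule.comap U'.mkQ u.1 ⊓ W m) hge
                rw [hm1, Submodule.comap_bot, Submodule.ker_mkQ] at this
                exact this.symm
              · have h1 := finrank_map_mkQ U' (Submodule.comap U'.mkQ u.1) hU'X
                rw [hmapX, u.2.2.2] at h1
                rw [Finset.sum_Icc_succ_top (by omega : 1 ≤ m + 1), ← hU'dim]
                omega⟩
            left_inv := fun x => Subtype.ext (by
              have hU'X : U' ≤ x.1 := by
                have h := inf_le_left (a := x.1) (b := W m)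
                rw [x.2.2.1] at h
                exact h
              exact comap_map_mkQ_self U' x.1 hU'X)
            right_inv := fun u => Subtype.ext (map_comap_mkQ_self U' u.1) }
        rw [Nat.card_congr e2]
        rw [card_avoid_le_Q q hq _ _ (Submodule.map_mono hWm1) (a (m+1))]
        -- compute the dimensions
        have hrm : finrank k ↥(Submodule.map U'.mkQ (W m)) + finrank k ↥U' =
            finrank k ↥(W m) := finrank_map_mkQ U' (W m) hU'W
        have hrm1 : finrank k ↥(Submodule.map U'.mkQ (W (m+1))) + finrank k ↥U' =
            finrank k ↥(W (m+1)) := finrank_map_mkQ U' (W (m+1)) hU'Wm1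
        have hWmval := hrankW m (by omega)
        have hWm1val := hrankW (m+1) (le_refl _)
        rw [Finset.sum_Icc_succ_top (by omega : 1 ≤ m + 1)] at hWm1val
        have hsplit : ∑ i ∈ Finset.Icc 1 m, (a i + b i) =
            (∑ i ∈ Finset.Icc 1 m, a i) + ∑ i ∈ Finset.Icc 1 m, b i :=
          Finset.sum_add_distrib
        have hrmval : finrank k ↥(Submodule.map U'.mkQ (W m)) = ∑ i ∈ Finset.Icc 1 m, b i := by
          omega
        have hrdiff : finrank k ↥(Submodule.map U'.mkQ (W (m+1))) -
            finrank k ↥(Submodule.map U'.mkQ (W m)) = a (m+1) + b (m+1) := by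
          omega
        rw [hrdiff, hrmval, hφ]
        ring
    -- use induction hypothesis on T
    have hTcard : (Nat.card T : ℚ) =
        (q : ℚ) ^ (∑ i ∈ Finset.Icc 1 m, a i * ∑ kk ∈ Finset.Ico 1 i, b kk) *
          ∏ i ∈ Finset.Icc 1 m, (gp q (a i + b i) (a i) / gp q (a i) (a i)) := by
      have hsame : Nat.card T = Nat.card {U : Submodule k V // U ≤ W m ∧
          ∀ i, 1 ≤ i → i ≤ m → finrank k ↥(W i ⊓ U) = ∑ i' ∈ Finset.Icc 1 i, a i'} := rfl
      rw [hsame]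
      exact IH W hW0 hmono' a b hw'
    rw [main, hTcard]
    rw [Finset.sum_Icc_succ_top (by omega : 1 ≤ m + 1),
      Finset.prod_Icc_succ_top (by omega : 1 ≤ m + 1), hφ]
    have hIco : Finset.Ico 1 (m+1) = Finset.Icc 1 m := rfl
    rw [hIco, pow_add]
    ring


/-! ### Peeling lemmas -/

lemma Icc_sum_peel {M : Type*} [AddCommMonoid M] (f : ℕ → M) (n : ℕ) :
    ∑ j ∈ Finset.Icc 1 (n+1), f j = f 1 + ∑ j ∈ Finset.Icc 1 n, f (j+1) := by
  induction n with
  | zero => simp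
  | succ n ih =>
    rw [Finset.sum_Icc_succ_top (by omega : 1 ≤ n + 2) f, ih,
      Finset.sum_Icc_succ_top (by omega : 1 ≤ n + 1) (fun j => f (j+1)), add_assoc]

lemma Icc_prod_peel {M : Type*} [CommMonoid M] (f : ℕ → M) (n : ℕ) :
    ∏ j ∈ Finset.Icc 1 (n+1), f j = f 1 * ∏ j ∈ Finset.Icc 1 n, f (j+1) := by
  induction n with
  | zero => simp
  | succ n ih =>
    rw [Finset.prod_Icc_succ_top (by omega : 1 ≤ n + 2) f, ih,
      Finset.prod_Icc_succ_top (by omega : 1 ≤ n + 1) (fun j => f (j+1)), mul_assoc]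

/-- Splitting of the exponent sum when peeling the first column. -/
lemma exp_split (f g : ℕ → ℕ) (n : ℕ) :
    ∑ l ∈ Finset.Icc 1 (n+1), ∑ j ∈ Finset.Ico 1 l, f j * g l =
      f 1 * (∑ l ∈ Finset.Icc 1 n, g (l+1)) +
        ∑ l ∈ Finset.Icc 1 n, ∑ j ∈ Finset.Ico 1 l, f (j+1) * g (l+1) := by
  induction n with
  | zero => simp
  | succ n ih =>
    rw [Finset.sum_Icc_succ_top (by omega : 1 ≤ n + 2)
        (fun l => ∑ j ∈ Finset.Ico 1 l, f j * g l), ih]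
    rw [Finset.sum_Icc_succ_top (by omega : 1 ≤ n + 1) (fun l => g (l+1))]
    rw [Finset.sum_Icc_succ_top (by omega : 1 ≤ n + 1)
        (fun l => ∑ j ∈ Finset.Ico 1 l, f (j+1) * g (l+1))]
    have h1 : ∑ j ∈ Finset.Ico 1 (n+2), f j * g (n+2) =
        f 1 * g (n+2) + ∑ j ∈ Finset.Ico 1 (n+1), f (j+1) * g (n+2) := by
      have e1 : Finset.Ico 1 (n+2) = Finset.Icc 1 (n+1) := Finset.Ico_add_one_right_eq_Icc 1 (n+1)
      rw [e1, Finset.Ico_add_one_right_eq_Icc, Icc_sum_peel (fun j => f j * g (n+2)) n]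
    rw [h1]
    ring


/-- MAIN: number of flags in prescribed relative position to a fixed flag. -/
lemma card_flag_rel {k : Type*} [Field k] [Fintype k] (q : ℕ) (hq : Fintype.card k = q)
    (n : ℕ) :
    ∀ (V : Type v) [AddCommGroup V] [Module k V] [FiniteDimensional k V]
      (m : ℕ) (W : ℕ → Submodule k V) (σ : ℕ → ℕ → ℕ),
      W 0 = ⊥ → W m = ⊤ → (∀ i, i < m → W i ≤ W (i + 1)) →
      (∀ i, 1 ≤ i → i ≤ m → finrank k ↥(W i) =
        finrank k ↥(W (i - 1)) + ∑ j ∈ Finset.Icc 1 n, σ i j) →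
      (Nat.card {F : ℕ → Submodule k V // F 0 = ⊥ ∧ (∀ j, n ≤ j → F j = ⊤) ∧
          (∀ j, j < n → F j ≤ F (j + 1)) ∧
          (∀ i j, 1 ≤ i → i ≤ m → 1 ≤ j → j ≤ n →
            finrank k ↥(W i ⊓ F j) =
              ∑ i' ∈ Finset.Icc 1 i, ∑ j' ∈ Finset.Icc 1 j, σ i' j')} : ℚ) =
        (q : ℚ) ^ (∑ i ∈ Finset.Icc 1 m, ∑ l ∈ Finset.Icc 1 n,
            ∑ kk ∈ Finset.Ico 1 i, ∑ j ∈ Finset.Ico 1 l, σ i j * σ kk l) *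
          ∏ i ∈ Finset.Icc 1 m,
            (qFact q (∑ j ∈ Finset.Icc 1 n, σ i j) /
              ∏ j ∈ Finset.Icc 1 n, qFact q (σ i j)) := by
  have hq2 : 2 ≤ q := by
    rw [← hq]; exact Fintype.one_lt_card
  induction n with
  | zero =>
    intro V _ _ _ m W σ hW0 hWm hmono hw
    -- the space is zero-dimensional, and there is exactly one flag
    have hdim : finrank k V = 0 := by
      have h1 : finrank k ↥(W m) = ∑ i ∈ Finset.Icc 1 m, (0 : ℕ) :=
        finrank_chain hW0 (fun _ => 0) (fun i h1 h2 => by simpa using hw i h1 h2) m le_rfl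
      rw [hWm, finrank_top] at h1
      simpa using h1
    have hbot : ∀ p : Submodule k V, p = ⊥ := by
      intro p
      rw [← Submodule.finrank_eq_zero (R := k) (M := V)]
      have := Submodule.finrank_le p
      omega
    haveI : Unique {F : ℕ → Submodule k V // F 0 = ⊥ ∧ (∀ j, 0 ≤ j → F j = ⊤) ∧
        (∀ j, j < 0 → F j ≤ F (j + 1)) ∧
        (∀ i j, 1 ≤ i → i ≤ m → 1 ≤ j → j ≤ 0 →
          finrank k ↥(W i ⊓ F j) =
            ∑ i' ∈ Finset.Icc 1 i, ∑ j' ∈ Finset.Icc 1 j, σ i' j')} := by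
      have htopbot : (⊤ : Submodule k V) = ⊥ := hbot ⊤
      refine ⟨⟨⟨fun _ => ⊤, ?_, ?_, ?_, ?_⟩⟩, ?_⟩
      · exact htopbot
      · intro j _; rfl
      · intro j hj; omega
      · intro i j h1 h2 h3 h4; omega
      · rintro ⟨F, hF0, hFtop, hFmono, hFdim⟩
        apply Subtype.ext
        funext j
        exact (hFtop j (by omega)).trans rfl
    rw [Nat.card_unique]
    simp [qFact]
  | succ n IH =>
    intro V _ _ _ m W σ hW0 hWm hmono hw
    haveI : Finite V := Module.finite_of_finite k
    haveI : Finite (Submodule k V) :=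
      Finite.of_injective (fun U => (U : Set V)) SetLike.coe_injective
    -- global dimension facts
    have hVdim : finrank k V = ∑ i ∈ Finset.Icc 1 m, ∑ j ∈ Finset.Icc 1 (n+1), σ i j := by
      have h1 := finrank_chain hW0 (fun i => ∑ j ∈ Finset.Icc 1 (n+1), σ i j) hw m le_rfl
      rw [hWm, finrank_top] at h1
      exact h1
    -- the flag set is finite
    haveI hSfin : Finite {F : ℕ → Submodule k V // F 0 = ⊥ ∧ (∀ j, n + 1 ≤ j → F j = ⊤) ∧
        (∀ j, j < n + 1 → F j ≤ F (j + 1)) ∧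
        (∀ i j, 1 ≤ i → i ≤ m → 1 ≤ j → j ≤ n + 1 →
          finrank k ↥(W i ⊓ F j) =
            ∑ i' ∈ Finset.Icc 1 i, ∑ j' ∈ Finset.Icc 1 j, σ i' j')} := by
      apply Finite.of_injective (fun F => (fun j : Fin (n+2) => F.1 j.val))
      intro F G h
      apply Subtype.ext
      funext j
      by_cases hj : j ≤ n + 1
      · have := congrFun h ⟨j, by omega⟩
        simpa using this
      · rw [F.2.2.1 j (by omega), G.2.2.1 j (by omega)]
    set T : Set (Submodule k V) := {U | U ≤ W m ∧ ∀ i, 1 ≤ i → i ≤ m →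
        finrank k ↥(W i ⊓ U) = ∑ i' ∈ Finset.Icc 1 i, σ i' 1} with hTdef
    set φfib : ℚ := (q : ℚ) ^ (∑ i ∈ Finset.Icc 1 m, ∑ l ∈ Finset.Icc 1 n,
        ∑ kk ∈ Finset.Ico 1 i, ∑ j ∈ Finset.Ico 1 l, σ i (j+1) * σ kk (l+1)) *
      ∏ i ∈ Finset.Icc 1 m, (qFact q (∑ j ∈ Finset.Icc 1 n, σ i (j+1)) /
        ∏ j ∈ Finset.Icc 1 n, qFact q (σ i (j+1))) with hφfib
    have hmain : (Nat.card {F : ℕ → Submodule k V // F 0 = ⊥ ∧ (∀ j, n + 1 ≤ j → F j = ⊤) ∧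
        (∀ j, j < n + 1 → F j ≤ F (j + 1)) ∧
        (∀ i j, 1 ≤ i → i ≤ m → 1 ≤ j → j ≤ n + 1 →
          finrank k ↥(W i ⊓ F j) =
            ∑ i' ∈ Finset.Icc 1 i, ∑ j' ∈ Finset.Icc 1 j, σ i' j')} : ℚ) =
        (Nat.card T : ℚ) * φfib := by
      apply card_fiber_mul_Q (fun F => F.1 1) T
      · -- membership of F 1 in T
        rintro ⟨F, hF0, hFtop, hFmono, hFdim⟩
        constructor
        · rw [hWm]; exact le_top
        · intro i h1 h2
          have h := hFdim i 1 h1 h2 le_rfl (by omega)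
          simpa using h
      · -- fibers
        rintro U hU
        obtain ⟨hUW, hUdim⟩ := hU
        have hUtop : finrank k ↥U = ∑ i' ∈ Finset.Icc 1 m, σ i' 1 := by
          rcases Nat.eq_zero_or_pos m with rfl | hm
          · have hUb : U = ⊥ := le_bot_iff.mp (hW0 ▸ hUW)
            simp [hUb]
          · have h := hUdim m hm le_rfl
            rwa [hWm, top_inf_eq] at h
        -- quotient flag facts
        have hW'alt : ∀ i, Submodule.map U.mkQ (W i ⊔ U) = Submodule.map U.mkQ (W i) := by
          intro i
          rw [Submodule.map_sup, Submodule.mkQ_map_self, sup_bot_eq]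
        have hWiUdim : ∀ i, i ≤ m →
            finrank k ↥(W i ⊓ U) = ∑ i' ∈ Finset.Icc 1 i, σ i' 1 := by
          intro i hi
          rcases Nat.eq_zero_or_pos i with rfl | hi1
          · simp [hW0]
          · exact hUdim i hi1 hi
        have hC1 : ∀ i, i ≤ m → finrank k ↥(Submodule.map U.mkQ (W i)) +
            (∑ i' ∈ Finset.Icc 1 i, σ i' 1) = finrank k ↥(W i) := by
          intro i hi
          have hsup := Submodule.finrank_sup_add_finrank_inf_eq (W i) U
          have hmap := finrank_map_mkQ U (W i ⊔ U) le_sup_right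
          rw [hW'alt i] at hmap
          have hinf := hWiUdim i hi
          omega
        have hW'0 : Submodule.map U.mkQ (W 0) = ⊥ := by rw [hW0, Submodule.map_bot]
        have hW'm : Submodule.map U.mkQ (W m) = ⊤ := by
          rw [hWm, Submodule.map_top, Submodule.range_mkQ]
        have hW'mono : ∀ i, i < m → Submodule.map U.mkQ (W i) ≤ Submodule.map U.mkQ (W (i+1)) :=
          fun i hi => Submodule.map_mono (hmono i hi)
        have hrow' : ∀ i, 1 ≤ i → i ≤ m →
            finrank k ↥(Submodule.map U.mkQ (W i)) =
              finrank k ↥(Submodule.map U.mkQ (W (i-1))) +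
                ∑ j ∈ Finset.Icc 1 n, σ i (j+1) := by
          intro i h1 h2
          have hc1 := hC1 i h2
          have hc2 := hC1 (i-1) (by omega)
          have hwi := hw i h1 h2
          rw [Icc_sum_peel (σ i) n] at hwi
          have hD1rec : ∑ i' ∈ Finset.Icc 1 i, σ i' 1 =
              (∑ i' ∈ Finset.Icc 1 (i-1), σ i' 1) + σ i 1 := by
            have hi1 : i - 1 + 1 = i := by omega
            rw [← hi1, Finset.sum_Icc_succ_top (by omega : 1 ≤ i - 1 + 1) (fun i' => σ i' 1)]
            rw [hi1]
          omega
        -- the fiber equivalence with flags in the quotient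
        have hUleF : ∀ (F : ℕ → Submodule k V), (∀ j, j < n + 1 → F j ≤ F (j + 1)) →
            F 1 = U → ∀ jj, 1 ≤ jj → jj ≤ n + 1 → U ≤ F jj := by
          intro F hFmono hF1 jj h1 h2
          rw [← hF1]
          exact chain_le (m := n + 1) hFmono h1 h2
        have htriv : n = 0 → ∀ p : Submodule k (V ⧸ U), p = ⊥ := by
          intro hn p
          have hq1 := Submodule.finrank_quotient_add_finrank U
          have hz : finrank k (V ⧸ U) = 0 := by
            subst hn
            have hV1 : finrank k V = ∑ i ∈ Finset.Icc 1 m, σ i 1 := by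
              rw [hVdim]
              apply Finset.sum_congr rfl
              intro i _
              simp
            omega
          rw [← Submodule.finrank_eq_zero (R := k)]
          have := Submodule.finrank_le p
          omega
        have e : {u : {F : ℕ → Submodule k V // F 0 = ⊥ ∧ (∀ j, n + 1 ≤ j → F j = ⊤) ∧
            (∀ j, j < n + 1 → F j ≤ F (j + 1)) ∧
            (∀ i j, 1 ≤ i → i ≤ m → 1 ≤ j → j ≤ n + 1 →
              finrank k ↥(W i ⊓ F j) =
                ∑ i' ∈ Finset.Icc 1 i, ∑ j' ∈ Finset.Icc 1 j, σ i' j')} //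
              (fun F => F.1 1) u = U} ≃
            {G : ℕ → Submodule k (V ⧸ U) // G 0 = ⊥ ∧ (∀ j, n ≤ j → G j = ⊤) ∧
            (∀ j, j < n → G j ≤ G (j + 1)) ∧
            (∀ i j, 1 ≤ i → i ≤ m → 1 ≤ j → j ≤ n →
              finrank k ↥(Submodule.map U.mkQ (W i) ⊓ G j) =
                ∑ i' ∈ Finset.Icc 1 i, ∑ j' ∈ Finset.Icc 1 j, σ i' (j'+1))} := by
          refine Equiv.mk
            (fun u => ⟨fun j => if j = 0 then ⊥ else Submodule.map U.mkQ (u.1.1 (j+1)),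
              ?_, ?_, ?_, ?_⟩)
            (fun G => ⟨⟨fun j => if j = 0 then ⊥ else Submodule.comap U.mkQ (G.1 (j-1)),
              ?_, ?_, ?_, ?_⟩, ?_⟩) ?_ ?_
          · simp
          · -- top condition in quotient
            intro j hj
            dsimp only
            by_cases hj0 : j = 0
            · subst hj0
              rw [if_pos rfl]
              exact (htriv (by omega) ⊤).symm
            · rw [if_neg hj0, u.1.2.2.1 (j+1) (by omega), Submodule.map_top,
                Submodule.range_mkQ]
          · -- monotone in quotient
            intro j hj
            dsimp only
            by_cases hj0 : j = 0
            · rw [if_pos hj0]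
              exact bot_le
            · rw [if_neg hj0, if_neg (by omega : ¬ j + 1 = 0)]
              exact Submodule.map_mono (u.1.2.2.2.1 (j+1) (by omega))
          · -- dimension condition in quotient
            intro i j h1 h2 h3 h4
            dsimp only
            beta_reduce
            rw [if_neg (by omega : ¬ j = 0)]
            have hUF : U ≤ u.1.1 (j+1) :=
              hUleF u.1.1 u.1.2.2.2.1 u.2 (j+1) (by omega) (by omega)
            have hmod : (W i ⊔ U) ⊓ u.1.1 (j+1) = (W i ⊓ u.1.1 (j+1)) ⊔ U := by
              rw [sup_comm (W i) U, sup_inf_assoc_of_le (W i) hUF,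
                sup_comm U (W i ⊓ u.1.1 (j+1))]
            have hinfmap : Submodule.map U.mkQ (W i) ⊓ Submodule.map U.mkQ (u.1.1 (j+1)) =
                Submodule.map U.mkQ ((W i ⊓ u.1.1 (j+1)) ⊔ U) := by
              rw [← hW'alt i, ← map_mkQ_inf U (W i ⊔ U) (u.1.1 (j+1)) le_sup_right hUF, hmod]
            rw [hinfmap]
            have hrk1 := finrank_map_mkQ U ((W i ⊓ u.1.1 (j+1)) ⊔ U) le_sup_right
            have hrk2 := Submodule.finrank_sup_add_finrank_inf_eq (W i ⊓ u.1.1 (j+1)) U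
            have hinf2 : (W i ⊓ u.1.1 (j+1)) ⊓ U = W i ⊓ U := by
              rw [inf_assoc, inf_eq_right.mpr hUF]
            rw [hinf2] at hrk2
            have hWiU := hWiUdim i h2
            have hWiF := u.1.2.2.2.2 i (j+1) h1 h2 (by omega) (by omega)
            have hDsplit : (∑ i' ∈ Finset.Icc 1 i, ∑ j' ∈ Finset.Icc 1 j, σ i' (j'+1)) +
                ∑ i' ∈ Finset.Icc 1 i, σ i' 1 =
                ∑ i' ∈ Finset.Icc 1 i, ∑ j' ∈ Finset.Icc 1 (j+1), σ i' j' := by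
              rw [← Finset.sum_add_distrib]
              apply Finset.sum_congr rfl
              intro i' _
              rw [Icc_sum_peel (σ i') j]
              exact Nat.add_comm _ _
            omega
          · -- F 0 = ⊥
            simp
          · -- F j = ⊤ for j ≥ n+1
            intro j hj
            dsimp only
            rw [if_neg (by omega : ¬ j = 0), G.2.2.1 (j-1) (by omega), Submodule.comap_top]
          · -- monotone
            intro j hj
            dsimp only
            by_cases hj0 : j = 0
            · rw [if_pos hj0]
              exact bot_le
            · rw [if_neg hj0, if_neg (by omega : ¬ j + 1 = 0)]
              apply Submodule.comap_mono
              have hmono1 := G.2.2.2.1 (j-1) (by omega)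
              have hj1 : j - 1 + 1 = j := by omega
              rw [hj1] at hmono1
              have hj2 : j + 1 - 1 = j := by omega
              rw [hj2]
              exact hmono1
          · -- dimension condition downstairs
            intro i j h1 h2 h3 h4
            dsimp only
            beta_reduce
            rw [if_neg (by omega : ¬ j = 0)]
            by_cases hj1 : j = 1
            · subst hj1
              rw [show (1:ℕ) - 1 = 0 from rfl, G.2.1, Submodule.comap_bot, Submodule.ker_mkQ]
              rw [hWiUdim i h2]
              apply Finset.sum_congr rfl
              intro i' _
              simp
            · have hUX : U ≤ Submodule.comap U.mkQ (G.1 (j-1)) := Submodule.le_comap_mkQ U _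
              have hmapX : Submodule.map U.mkQ (Submodule.comap U.mkQ (G.1 (j-1))) =
                  G.1 (j-1) := map_comap_mkQ_self U _
              have hmod : (W i ⊔ U) ⊓ Submodule.comap U.mkQ (G.1 (j-1)) =
                  (W i ⊓ Submodule.comap U.mkQ (G.1 (j-1))) ⊔ U := by
                rw [sup_comm (W i) U, sup_inf_assoc_of_le (W i) hUX,
                  sup_comm U (W i ⊓ Submodule.comap U.mkQ (G.1 (j-1)))]
              have hmap2 : Submodule.map U.mkQ
                  ((W i ⊓ Submodule.comap U.mkQ (G.1 (j-1))) ⊔ U) =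
                  Submodule.map U.mkQ (W i) ⊓ G.1 (j-1) := by
                rw [← hmod, map_mkQ_inf U (W i ⊔ U) _ le_sup_right hUX, hW'alt i, hmapX]
              have hrk1 := finrank_map_mkQ U
                ((W i ⊓ Submodule.comap U.mkQ (G.1 (j-1))) ⊔ U) le_sup_right
              rw [hmap2] at hrk1
              have hrk2 := Submodule.finrank_sup_add_finrank_inf_eq
                (W i ⊓ Submodule.comap U.mkQ (G.1 (j-1))) U
              have hinf2 : (W i ⊓ Submodule.comap U.mkQ (G.1 (j-1))) ⊓ U = W i ⊓ U := by
                rw [inf_assoc, inf_eq_right.mpr hUX]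
              rw [hinf2] at hrk2
              have hWiU := hWiUdim i h2
              have hGdim := G.2.2.2.2 i (j-1) h1 h2 (by omega) (by omega)
              have hj1' : j - 1 + 1 = j := by omega
              have hDsplit : (∑ i' ∈ Finset.Icc 1 i,
                  ∑ j' ∈ Finset.Icc 1 (j-1), σ i' (j'+1)) +
                  ∑ i' ∈ Finset.Icc 1 i, σ i' 1 =
                  ∑ i' ∈ Finset.Icc 1 i, ∑ j' ∈ Finset.Icc 1 j, σ i' j' := by
                rw [← Finset.sum_add_distrib]
                apply Finset.sum_congr rfl
                intro i' _
                have hpeel := Icc_sum_peel (σ i') (j-1)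
                rw [hj1'] at hpeel
                rw [hpeel]
                exact Nat.add_comm _ _
              omega
          · -- the fiber condition : F 1 = U
            dsimp only
            rw [if_neg one_ne_zero, show (1:ℕ) - 1 = 0 from rfl, G.2.1,
              Submodule.comap_bot, Submodule.ker_mkQ]
          · -- left inverse
            intro u
            apply Subtype.ext
            apply Subtype.ext
            funext j
            dsimp only
            by_cases hj0 : j = 0
            · rw [if_pos hj0, hj0]
              exact u.1.2.1.symm
            · rw [if_neg hj0]
              by_cases hj1 : j = 1
              · subst hj1
                rw [show (1:ℕ) - 1 = 0 from rfl, if_pos rfl, Submodule.comap_bot,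
                  Submodule.ker_mkQ]
                exact u.2.symm
              · rw [if_neg (by omega : ¬ j - 1 = 0)]
                have hj1' : j - 1 + 1 = j := by omega
                rw [hj1']
                have hUFj : U ≤ u.1.1 j := by
                  by_cases hjn : j ≤ n + 1
                  · exact hUleF u.1.1 u.1.2.2.2.1 u.2 j (by omega) hjn
                  · rw [u.1.2.2.1 j (by omega)]
                    exact le_top
                exact comap_map_mkQ_self U (u.1.1 j) hUFj
          · -- right inverse
            intro G
            apply Subtype.ext
            funext j
            dsimp only
            by_cases hj0 : j = 0
            · rw [if_pos hj0, hj0]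
              exact G.2.1.symm
            · rw [if_neg hj0, if_neg (by omega : ¬ j + 1 = 0),
                show j + 1 - 1 = j by omega]
              exact map_comap_mkQ_self U (G.1 j)
        have hIH := IH (V ⧸ U) m (fun i => Submodule.map U.mkQ (W i)) (fun i j => σ i (j+1))
          hW'0 hW'm hW'mono hrow'
        calc ((Nat.card {u : {F : ℕ → Submodule k V // F 0 = ⊥ ∧ (∀ j, n + 1 ≤ j → F j = ⊤) ∧
            (∀ j, j < n + 1 → F j ≤ F (j + 1)) ∧
            (∀ i j, 1 ≤ i → i ≤ m → 1 ≤ j → j ≤ n + 1 →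
              finrank k ↥(W i ⊓ F j) =
                ∑ i' ∈ Finset.Icc 1 i, ∑ j' ∈ Finset.Icc 1 j, σ i' j')} //
              (fun F => F.1 1) u = U}) : ℚ)
            = (Nat.card {G : ℕ → Submodule k (V ⧸ U) // G 0 = ⊥ ∧ (∀ j, n ≤ j → G j = ⊤) ∧
            (∀ j, j < n → G j ≤ G (j + 1)) ∧
            (∀ i j, 1 ≤ i → i ≤ m → 1 ≤ j → j ≤ n →
              finrank k ↥(Submodule.map U.mkQ (W i) ⊓ G j) =
                ∑ i' ∈ Finset.Icc 1 i, ∑ j' ∈ Finset.Icc 1 j, σ i' (j'+1))} : ℚ) := by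
              rw [Nat.card_congr e]
          _ = φfib := hIH
    -- count of T by the single-subspace lemma
    have hwL1 : ∀ i, 1 ≤ i → i ≤ m → finrank k ↥(W i) =
        finrank k ↥(W (i-1)) + (σ i 1 + ∑ j ∈ Finset.Icc 1 n, σ i (j+1)) := by
      intro i h1 h2
      have h := hw i h1 h2
      rwa [Icc_sum_peel (σ i) n] at h
    have hTval : (Nat.card T : ℚ) =
        (q : ℚ) ^ (∑ i ∈ Finset.Icc 1 m, σ i 1 * ∑ kk ∈ Finset.Ico 1 i,
            (∑ l ∈ Finset.Icc 1 n, σ kk (l+1))) *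
          ∏ i ∈ Finset.Icc 1 m, (gp q (σ i 1 + ∑ j ∈ Finset.Icc 1 n, σ i (j+1)) (σ i 1) /
            gp q (σ i 1) (σ i 1)) := by
      have hsame : Nat.card T = Nat.card {U : Submodule k V // U ≤ W m ∧
          ∀ i, 1 ≤ i → i ≤ m →
            finrank k ↥(W i ⊓ U) = ∑ i' ∈ Finset.Icc 1 i, σ i' 1} := rfl
      rw [hsame]
      exact card_flag_slice q hq m W hW0 hmono (fun i => σ i 1)
        (fun i => ∑ j ∈ Finset.Icc 1 n, σ i (j+1)) hwL1
    rw [hmain, hTval, hφfib]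
    -- now pure algebra
    have hE : (∑ i ∈ Finset.Icc 1 m, ∑ l ∈ Finset.Icc 1 (n+1),
        ∑ kk ∈ Finset.Ico 1 i, ∑ j ∈ Finset.Ico 1 l, σ i j * σ kk l) =
        (∑ i ∈ Finset.Icc 1 m, σ i 1 * ∑ kk ∈ Finset.Ico 1 i,
            (∑ l ∈ Finset.Icc 1 n, σ kk (l+1))) +
          ∑ i ∈ Finset.Icc 1 m, ∑ l ∈ Finset.Icc 1 n,
            ∑ kk ∈ Finset.Ico 1 i, ∑ j ∈ Finset.Ico 1 l, σ i (j+1) * σ kk (l+1) := by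
      rw [← Finset.sum_add_distrib]
      apply Finset.sum_congr rfl
      intro i _
      rw [Finset.sum_comm, Finset.mul_sum]
      have hswap : (∑ l ∈ Finset.Icc 1 n, ∑ kk ∈ Finset.Ico 1 i,
          ∑ j ∈ Finset.Ico 1 l, σ i (j+1) * σ kk (l+1)) =
          ∑ kk ∈ Finset.Ico 1 i, ∑ l ∈ Finset.Icc 1 n,
          ∑ j ∈ Finset.Ico 1 l, σ i (j+1) * σ kk (l+1) := Finset.sum_comm
      rw [hswap, ← Finset.sum_add_distrib]
      apply Finset.sum_congr rfl
      intro kk _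
      exact exp_split (σ i) (σ kk) n
    rw [hE, pow_add]
    have hprod : ∀ i ∈ Finset.Icc 1 m,
        (gp q (σ i 1 + ∑ j ∈ Finset.Icc 1 n, σ i (j+1)) (σ i 1) / gp q (σ i 1) (σ i 1)) *
          (qFact q (∑ j ∈ Finset.Icc 1 n, σ i (j+1)) /
            ∏ j ∈ Finset.Icc 1 n, qFact q (σ i (j+1))) =
        qFact q (∑ j ∈ Finset.Icc 1 (n+1), σ i j) /
          ∏ j ∈ Finset.Icc 1 (n+1), qFact q (σ i j) := by
      intro i _
      set x := σ i 1 with hx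
      set y := ∑ j ∈ Finset.Icc 1 n, σ i (j+1) with hy
      rw [Icc_sum_peel (σ i) n, Icc_prod_peel (fun j => qFact q (σ i j)) n]
      have hgr := gp_ratio hq2 x y
      have h1 : gp q x x ≠ 0 := gp_ne_zero hq2 le_rfl
      have h2 : qFact q x ≠ 0 := qFact_ne_zero hq2 x
      have h3 : qFact q y ≠ 0 := qFact_ne_zero hq2 y
      have h4 : (∏ j ∈ Finset.Icc 1 n, qFact q (σ i (j+1))) ≠ 0 :=
        Finset.prod_ne_zero_iff.mpr (fun j _ => qFact_ne_zero hq2 _)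
      have h2' : qFact q (σ i 1) ≠ 0 := qFact_ne_zero hq2 _
      field_simp
      have hc : qFact q (σ i 1) = qFact q x := rfl
      rw [hc]
      linear_combination hgr
    have hP : (∏ i ∈ Finset.Icc 1 m,
        (gp q (σ i 1 + ∑ j ∈ Finset.Icc 1 n, σ i (j+1)) (σ i 1) / gp q (σ i 1) (σ i 1))) *
        ∏ i ∈ Finset.Icc 1 m, (qFact q (∑ j ∈ Finset.Icc 1 n, σ i (j+1)) /
          ∏ j ∈ Finset.Icc 1 n, qFact q (σ i (j+1))) =
        ∏ i ∈ Finset.Icc 1 m, (qFact q (∑ j ∈ Finset.Icc 1 (n+1), σ i j) /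
          ∏ j ∈ Finset.Icc 1 (n+1), qFact q (σ i j)) := by
      rw [← Finset.prod_mul_distrib]
      exact Finset.prod_congr rfl hprod
    rw [← hP]
    ring

lemma qFact_zero (q : ℕ) : qFact q 0 = 1 := by simp [qFact]

end FlagCount

open FlagCount Module

theorem cardinality_flag_set
    (k : Type*) [Field k] [Fintype k] (q : ℕ) (hq : Fintype.card k = q)
    (V : Type*) [AddCommGroup V] [Module k V] [FiniteDimensional k V]
    (m : ℕ) (W : ℕ → Submodule k V) (w : ℕ → ℕ)
    (hW0 : W 0 = ⊥) (hWm : W m = ⊤)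
    (hWmono : ∀ i, i < m → W i ≤ W (i + 1))
    (hWtype : ∀ i, 1 ≤ i → i ≤ m →
      Module.finrank k ↥(W i) = Module.finrank k ↥(W (i - 1)) + w i)
    -- σ is an upper-triangular m×m matrix of naturals whose i-th row sum is w i
    (σ : ℕ → ℕ → ℕ)
    (hσtri : ∀ i j, 1 ≤ i → i ≤ m → 1 ≤ j → j ≤ m → j < i → σ i j = 0)
    (hσrow : ∀ i, 1 ≤ i → i ≤ m → ∑ j ∈ Finset.Icc 1 m, σ i j = w i)
    -- t is the sequence of column sums of σ
    (t : ℕ → ℕ) (ht : ∀ j, 1 ≤ j → j ≤ m → t j = ∑ i ∈ Finset.Icc 1 m, σ i j) :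
    (({F : ℕ → Submodule k V |
        -- F is a flag of type t ...
        F 0 = ⊥ ∧ (∀ j, m ≤ j → F j = ⊤) ∧ (∀ j, j < m → F j ≤ F (j + 1)) ∧
        (∀ j, 1 ≤ j → j ≤ m →
          Module.finrank k ↥(F j) = Module.finrank k ↥(F (j - 1)) + t j) ∧
        -- ... such that dim((W_i ∩ F_j)/(W_{i−1} ∩ F_j + W_i ∩ F_{j−1})) = σ_{ij}
        (∀ i j, 1 ≤ i → i ≤ m → 1 ≤ j → j ≤ m →
          Module.finrank k ↥(W i ⊓ F j) =
            Module.finrank k ↥((W (i - 1) ⊓ F j) ⊔ (W i ⊓ F (j - 1))) + σ i j)} :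
        Set (ℕ → Submodule k V)).ncard : ℚ) =
      (q : ℚ) ^ (∑ i ∈ Finset.Icc 1 m, ∑ l ∈ Finset.Icc 1 m,
          ∑ kk ∈ Finset.Ico 1 i, ∑ j ∈ Finset.Ico 1 l, σ i j * σ kk l) *
        ∏ i ∈ Finset.Icc 1 m, (qFact q (w i) / ∏ j ∈ Finset.Icc i m, qFact q (σ i j)) := by
  -- the double partial sums of σ
  have hDrec : ∀ i j, 1 ≤ i → 1 ≤ j →
      (∑ i' ∈ Finset.Icc 1 i, ∑ j' ∈ Finset.Icc 1 j, σ i' j') +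
        (∑ i' ∈ Finset.Icc 1 (i-1), ∑ j' ∈ Finset.Icc 1 (j-1), σ i' j') =
      (∑ i' ∈ Finset.Icc 1 (i-1), ∑ j' ∈ Finset.Icc 1 j, σ i' j') +
        (∑ i' ∈ Finset.Icc 1 i, ∑ j' ∈ Finset.Icc 1 (j-1), σ i' j') + σ i j := by
    intro i j h1 h2
    have hi : i - 1 + 1 = i := by omega
    have hj : j - 1 + 1 = j := by omega
    have e1 : ∀ jj, (∑ i' ∈ Finset.Icc 1 i, ∑ j' ∈ Finset.Icc 1 jj, σ i' j') =
        (∑ i' ∈ Finset.Icc 1 (i-1), ∑ j' ∈ Finset.Icc 1 jj, σ i' j') +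
          ∑ j' ∈ Finset.Icc 1 jj, σ i j' := by
      intro jj
      conv_lhs => rw [← hi]
      rw [Finset.sum_Icc_succ_top (by omega : 1 ≤ i - 1 + 1)
        (fun i' => ∑ j' ∈ Finset.Icc 1 jj, σ i' j'), hi]
    have e2 : (∑ j' ∈ Finset.Icc 1 j, σ i j') =
        (∑ j' ∈ Finset.Icc 1 (j-1), σ i j') + σ i j := by
      conv_lhs => rw [← hj]
      rw [Finset.sum_Icc_succ_top (by omega : 1 ≤ j - 1 + 1) (σ i), hj]
    rw [e1 j, e1 (j-1), e2]
    omega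
  -- rewrite the set
  have hset : {F : ℕ → Submodule k V |
        F 0 = ⊥ ∧ (∀ j, m ≤ j → F j = ⊤) ∧ (∀ j, j < m → F j ≤ F (j + 1)) ∧
        (∀ j, 1 ≤ j → j ≤ m →
          Module.finrank k ↥(F j) = Module.finrank k ↥(F (j - 1)) + t j) ∧
        (∀ i j, 1 ≤ i → i ≤ m → 1 ≤ j → j ≤ m →
          Module.finrank k ↥(W i ⊓ F j) =
            Module.finrank k ↥((W (i - 1) ⊓ F j) ⊔ (W i ⊓ F (j - 1))) + σ i j)} =
      {F : ℕ → Submodule k V | F 0 = ⊥ ∧ (∀ j, m ≤ j → F j = ⊤) ∧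
        (∀ j, j < m → F j ≤ F (j + 1)) ∧
        (∀ i j, 1 ≤ i → i ≤ m → 1 ≤ j → j ≤ m →
          finrank k ↥(W i ⊓ F j) =
            ∑ i' ∈ Finset.Icc 1 i, ∑ j' ∈ Finset.Icc 1 j, σ i' j')} := by
    ext F
    simp only [Set.mem_setOf_eq]
    constructor
    · rintro ⟨hF0, hFtop, hFmono, hFtype, hFσ⟩
      refine ⟨hF0, hFtop, hFmono, ?_⟩
      have hd0 : ∀ i, finrank k ↥(W i ⊓ F 0) = 0 := by
        intro i; rw [hF0, inf_bot_eq, finrank_bot]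
      have hdi0 : ∀ j, finrank k ↥(W 0 ⊓ F j) = 0 := by
        intro j; rw [hW0, bot_inf_eq, finrank_bot]
      have hdrec : ∀ i j, 1 ≤ i → i ≤ m → 1 ≤ j → j ≤ m →
          finrank k ↥(W i ⊓ F j) + finrank k ↥(W (i-1) ⊓ F (j-1)) =
            finrank k ↥(W (i-1) ⊓ F j) + finrank k ↥(W i ⊓ F (j-1)) + σ i j := by
        intro i j h1 h2 h3 h4
        have hσc := hFσ i j h1 h2 h3 h4
        have hsup := Submodule.finrank_sup_add_finrank_inf_eq
          (W (i-1) ⊓ F j) (W i ⊓ F (j-1))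
        have hABinf : (W (i-1) ⊓ F j) ⊓ (W i ⊓ F (j-1)) = W (i-1) ⊓ F (j-1) := by
          rw [inf_inf_inf_comm,
            inf_eq_left.mpr (chain_le (m := m) hWmono (by omega : i - 1 ≤ i) h2),
            inf_eq_right.mpr (chain_le (m := m) hFmono (by omega : j - 1 ≤ j) h4)]
        rw [hABinf] at hsup
        omega
      have hdall : ∀ j, j ≤ m → ∀ i, i ≤ m → finrank k ↥(W i ⊓ F j) =
          ∑ i' ∈ Finset.Icc 1 i, ∑ j' ∈ Finset.Icc 1 j, σ i' j' := by
        intro j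
        induction j with
        | zero =>
          intro _ i _
          rw [hd0 i]
          simp
        | succ j ihj =>
          intro hj i
          induction i with
          | zero =>
            intro _
            rw [hdi0 (j+1)]
            simp
          | succ i ihi =>
            intro hi
            have h1 := hdrec (i+1) (j+1) (by omega) hi (by omega) hj
            have hred1 : i + 1 - 1 = i := rfl
            have hred2 : j + 1 - 1 = j := rfl
            rw [hred1, hred2] at h1
            have h2 := ihj (by omega) (i+1) hi
            have h3 := ihj (by omega) i (by omega)
            have h4 := ihi (by omega)
            have h5 := hDrec (i+1) (j+1) (by omega) (by omega)
            simp only [Nat.add_sub_cancel] at h5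
            omega
      exact fun i j h1 h2 h3 h4 => hdall j h4 i h2
    · rintro ⟨hF0, hFtop, hFmono, hFdims⟩
      have hd0 : ∀ i, finrank k ↥(W i ⊓ F 0) = 0 := by
        intro i; rw [hF0, inf_bot_eq, finrank_bot]
      have hdi0 : ∀ j, finrank k ↥(W 0 ⊓ F j) = 0 := by
        intro j; rw [hW0, bot_inf_eq, finrank_bot]
      have hdall : ∀ i, i ≤ m → ∀ j, j ≤ m → finrank k ↥(W i ⊓ F j) =
          ∑ i' ∈ Finset.Icc 1 i, ∑ j' ∈ Finset.Icc 1 j, σ i' j' := by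
        intro i hi j hj
        rcases Nat.eq_zero_or_pos i with rfl | hi1
        · rw [hdi0 j]; simp
        rcases Nat.eq_zero_or_pos j with rfl | hj1
        · rw [hd0 i]; simp
        exact hFdims i j hi1 hi hj1 hj
      refine ⟨hF0, hFtop, hFmono, ?_, ?_⟩
      · -- type condition
        intro j h1 h2
        have hgm : ∀ jj, jj ≤ m → finrank k ↥(F jj) =
            ∑ i' ∈ Finset.Icc 1 m, ∑ j' ∈ Finset.Icc 1 jj, σ i' j' := by
          intro jj hjj
          have h := hdall m le_rfl jj hjj
          rwa [hWm, top_inf_eq] at h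
        have e1 := hgm j h2
        have e2 := hgm (j-1) (by omega)
        have hj : j - 1 + 1 = j := by omega
        have hDcol : (∑ i' ∈ Finset.Icc 1 m, ∑ j' ∈ Finset.Icc 1 j, σ i' j') =
            (∑ i' ∈ Finset.Icc 1 m, ∑ j' ∈ Finset.Icc 1 (j-1), σ i' j') + t j := by
          rw [ht j h1 h2, ← Finset.sum_add_distrib]
          apply Finset.sum_congr rfl
          intro i' _
          conv_lhs => rw [← hj]
          rw [Finset.sum_Icc_succ_top (by omega : 1 ≤ j - 1 + 1) (σ i'), hj]
        omega
      · -- σ condition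
        intro i j h1 h2 h3 h4
        have hsup := Submodule.finrank_sup_add_finrank_inf_eq
          (W (i-1) ⊓ F j) (W i ⊓ F (j-1))
        have hABinf : (W (i-1) ⊓ F j) ⊓ (W i ⊓ F (j-1)) = W (i-1) ⊓ F (j-1) := by
          rw [inf_inf_inf_comm,
            inf_eq_left.mpr (chain_le (m := m) hWmono (by omega : i - 1 ≤ i) h2),
            inf_eq_right.mpr (chain_le (m := m) hFmono (by omega : j - 1 ≤ j) h4)]
        rw [hABinf] at hsup
        have v1 := hdall i h2 j h4
        have v2 := hdall (i-1) (by omega) j h4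
        have v3 := hdall i h2 (j-1) (by omega)
        have v4 := hdall (i-1) (by omega) (j-1) (by omega)
        have h5 := hDrec i j h1 h3
        omega
  rw [hset, ← Nat.card_coe_set_eq]
  have hrow' : ∀ i, 1 ≤ i → i ≤ m → finrank k ↥(W i) =
      finrank k ↥(W (i - 1)) + ∑ j ∈ Finset.Icc 1 m, σ i j := by
    intro i h1 h2
    rw [hWtype i h1 h2, hσrow i h1 h2]
  have hmain := card_flag_rel (k := k) q hq m V m W σ hW0 hWm hWmono hrow'
  calc ((Nat.card ↥{F : ℕ → Submodule k V | F 0 = ⊥ ∧ (∀ j, m ≤ j → F j = ⊤) ∧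
        (∀ j, j < m → F j ≤ F (j + 1)) ∧
        (∀ i j, 1 ≤ i → i ≤ m → 1 ≤ j → j ≤ m →
          finrank k ↥(W i ⊓ F j) =
            ∑ i' ∈ Finset.Icc 1 i, ∑ j' ∈ Finset.Icc 1 j, σ i' j')}) : ℚ)
      = (q : ℚ) ^ (∑ i ∈ Finset.Icc 1 m, ∑ l ∈ Finset.Icc 1 m,
          ∑ kk ∈ Finset.Ico 1 i, ∑ j ∈ Finset.Ico 1 l, σ i j * σ kk l) *
        ∏ i ∈ Finset.Icc 1 m, (qFact q (∑ j ∈ Finset.Icc 1 m, σ i j) /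
          ∏ j ∈ Finset.Icc 1 m, qFact q (σ i j)) := hmain
    _ = (q : ℚ) ^ (∑ i ∈ Finset.Icc 1 m, ∑ l ∈ Finset.Icc 1 m,
          ∑ kk ∈ Finset.Ico 1 i, ∑ j ∈ Finset.Ico 1 l, σ i j * σ kk l) *
        ∏ i ∈ Finset.Icc 1 m, (qFact q (w i) / ∏ j ∈ Finset.Icc i m, qFact q (σ i j)) := by
        congr 1
        apply Finset.prod_congr rfl
        intro i hi
        rw [Finset.mem_Icc] at hi
        rw [hσrow i hi.1 hi.2]
        have hden : ∏ j ∈ Finset.Icc i m, qFact q (σ i j) =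
            ∏ j ∈ Finset.Icc 1 m, qFact q (σ i j) := by
          apply Finset.prod_subset
          · intro j hj
            rw [Finset.mem_Icc] at hj ⊢
            omega
          · intro j hj hnj
            rw [Finset.mem_Icc] at hj
            rw [Finset.mem_Icc] at hnj
            have hji : j < i := by omega
            rw [hσtri i j hi.1 hi.2 hj.1 hj.2 hji, qFact_zero]
        rw [hden]
end
end

section
/- Let V be a finite-dimensional vector space over a field with flags V_• = (0 = V_0 ⊆ V_1 ⊆ V_2 ⊆ V_3 ⊆ V_4 = V) and V'_• = (0 = V'_0 ⊆ ⋯ ⊆ V'_m = V), and let s, t, t' be integer sequences of length m. Then the assignment U ↦ U^♭ (annihilator in the dual space V*) defines a bijection from Y_{s,t,t'}(V_•, V'_•) onto Y_{t'^♭, s'^♭, s^♭}(Ṽ_•, Ṽ'_•), where s' = s + t' − t. -/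
open scoped Classical
noncomputable section

/-- The set `Y_{s,t,t'}(V_•, V'_•)` for integer sequences `s, t, t'`:
subspaces `U` with `V_1 ⊆ U ⊆ V_3` satisfying conditions (i), (ii), (iii),
where `c_{2j} = dim(V_2 ∩ V'_j / V_2 ∩ V'_{j−1})`. -/
def YsetZ (K : Type*) [Field K] {V : Type*} [AddCommGroup V] [Module K V]
    (m : ℕ) (Vf : ℕ → Submodule K V) (V' : ℕ → Submodule K V) (s t t' : ℕ → ℤ) :
    Set (Submodule K V) :=
  {U | Vf 1 ≤ U ∧ U ≤ Vf 3 ∧ ∀ j, 1 ≤ j → j ≤ m →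
    -- (i) dim(U ∩ V_2 ∩ V'_j / U ∩ V_2 ∩ V'_{j−1}) = c_{2j} − s_j
    ((Module.finrank K ↥(U ⊓ Vf 2 ⊓ V' j) : ℤ) -
        (Module.finrank K ↥(U ⊓ Vf 2 ⊓ V' (j - 1)) : ℤ) =
      ((Module.finrank K ↥(Vf 2 ⊓ V' j) : ℤ) -
        (Module.finrank K ↥(Vf 2 ⊓ V' (j - 1)) : ℤ)) - s j) ∧
    -- (ii) dim(U ∩ (V_2 + V_3 ∩ V'_j) / U ∩ (V_2 + V_3 ∩ V'_{j−1})) = t'_j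
    ((Module.finrank K ↥(U ⊓ (Vf 2 ⊔ Vf 3 ⊓ V' j)) : ℤ) -
        (Module.finrank K ↥(U ⊓ (Vf 2 ⊔ Vf 3 ⊓ V' (j - 1))) : ℤ) = t' j) ∧
    -- (iii) dim((U ∩ V_2 + U ∩ V'_j)/(U ∩ V_2 + U ∩ V'_{j−1})) = t_j
    ((Module.finrank K ↥((U ⊓ Vf 2) ⊔ (U ⊓ V' j)) : ℤ) -
        (Module.finrank K ↥((U ⊓ Vf 2) ⊔ (U ⊓ V' (j - 1))) : ℤ) = t j)}


open Module Submodule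

section Aux
variable {K : Type*} [Field K] {V : Type*} [AddCommGroup V] [Module K V]
  [FiniteDimensional K V]

lemma frb (A : Submodule K V) :
    (finrank K A.dualAnnihilator : ℤ) = finrank K V - finrank K A := by
  have h1 := A.finrank_quotient_add_finrank
  have h2 : finrank K (V ⧸ A) = finrank K A.dualAnnihilator :=
    (Subspace.quotEquivAnnihilator A).finrank_eq
  omega

lemma frsup (A B : Submodule K V) :
    (finrank K ↥(A ⊔ B) : ℤ) = finrank K A + finrank K B - finrank K ↥(A ⊓ B) := by
  have := Submodule.finrank_sup_add_finrank_inf_eq A B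
  omega

-- Identity A
lemma idA {U V2 V3 : Submodule K V} (P : Submodule K V) (h23 : V2 ≤ V3) (hU3 : U ≤ V3) :
    (finrank K ↥((U ⊔ V2) ⊓ P) : ℤ) =
      finrank K ↥(U ⊓ (V2 ⊔ V3 ⊓ P)) - finrank K ↥(U ⊓ V2) + finrank K ↥(V2 ⊓ P) := by
  have hUV2 : U ⊔ V2 ≤ V3 := sup_le hU3 h23
  have e1 : (V2 ⊔ V3 ⊓ P) ⊓ (U ⊔ V2) = V2 ⊔ (U ⊔ V2) ⊓ P := by
    rw [sup_inf_assoc_of_le _ (le_sup_right : V2 ≤ U ⊔ V2)]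
    congr 1
    rw [inf_assoc, inf_comm P, ← inf_assoc, inf_eq_right.mpr hUV2, inf_comm]
  have e2 : (V2 ⊔ V3 ⊓ P) ⊓ (U ⊔ V2) = V2 ⊔ U ⊓ (V2 ⊔ V3 ⊓ P) := by
    rw [inf_comm, sup_comm U V2, sup_inf_assoc_of_le _ (le_sup_left : V2 ≤ V2 ⊔ V3 ⊓ P)]
  have f1 := frsup V2 ((U ⊔ V2) ⊓ P)
  have f2 := frsup V2 (U ⊓ (V2 ⊔ V3 ⊓ P))
  have g1 : V2 ⊓ ((U ⊔ V2) ⊓ P) = V2 ⊓ P := by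
    rw [← inf_assoc, inf_eq_left.mpr (le_sup_right : V2 ≤ U ⊔ V2)]
  have g2 : V2 ⊓ (U ⊓ (V2 ⊔ V3 ⊓ P)) = U ⊓ V2 := by
    rw [← inf_assoc, inf_comm V2 U, inf_eq_left.mpr (le_trans inf_le_right
      (le_sup_left : V2 ≤ V2 ⊔ V3 ⊓ P))]
  rw [g1] at f1; rw [g2] at f2
  have := congrArg (fun A : Submodule K V => (finrank K A : ℤ)) (e1.symm.trans e2)
  rw [f1, f2] at this
  linarith

-- Identity B
lemma idB {U V1 V2 : Submodule K V} (P : Submodule K V) (h12 : V1 ≤ V2) (hU1 : V1 ≤ U) :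
    (finrank K ↥(U ⊔ V2 ⊓ (V1 ⊔ P)) : ℤ) =
      finrank K U + finrank K ↥(V2 ⊓ P) - finrank K ↥(U ⊓ V2 ⊓ P) := by
  have e0 : V2 ⊓ (V1 ⊔ P) = V1 ⊔ V2 ⊓ P := by
    rw [inf_comm, sup_inf_assoc_of_le _ h12, inf_comm]
  have e1 : U ⊔ V2 ⊓ (V1 ⊔ P) = U ⊔ V2 ⊓ P := by
    rw [e0, ← sup_assoc, sup_eq_left.mpr hU1]
  rw [e1, frsup, inf_assoc]

-- Identity C
lemma idC {U V2 : Submodule K V} (P : Submodule K V) :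
    (finrank K ↥((U ⊔ V2) ⊓ (U ⊔ P)) : ℤ) =
      finrank K U + finrank K ↥((U ⊔ V2) ⊓ P) - finrank K ↥(U ⊓ P) := by
  have e1 : (U ⊔ V2) ⊓ (U ⊔ P) = U ⊔ (U ⊔ V2) ⊓ P := by
    rw [inf_comm, sup_inf_assoc_of_le _ (le_sup_left : U ≤ U ⊔ V2)]
    congr 1
    exact inf_comm _ _
  have g : U ⊓ ((U ⊔ V2) ⊓ P) = U ⊓ P := by
    rw [← inf_assoc, inf_eq_left.mpr (le_sup_left : U ≤ U ⊔ V2)]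
  rw [e1, frsup, g]

-- Identity D
lemma idD {U V2 : Submodule K V} (P : Submodule K V) :
    (finrank K ↥((U ⊓ V2) ⊔ (U ⊓ P)) : ℤ) =
      finrank K ↥(U ⊓ V2) + finrank K ↥(U ⊓ P) - finrank K ↥(U ⊓ V2 ⊓ P) := by
  have g : (U ⊓ V2) ⊓ (U ⊓ P) = U ⊓ V2 ⊓ P := by
    ext x; simp only [Submodule.mem_inf]; tauto
  rw [frsup, g]

lemma key {U V1 V2 V3 : Submodule K V} (P Q : Submodule K V)
    (h12 : V1 ≤ V2) (h23 : V2 ≤ V3) (hU1 : V1 ≤ U) (hU3 : U ≤ V3)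
    (σ τ τ' : ℤ) :
    (((finrank K ↥(U ⊓ V2 ⊓ P) : ℤ) - finrank K ↥(U ⊓ V2 ⊓ Q) =
        ((finrank K ↥(V2 ⊓ P) : ℤ) - finrank K ↥(V2 ⊓ Q)) - σ) ∧
      ((finrank K ↥(U ⊓ (V2 ⊔ V3 ⊓ P)) : ℤ) - finrank K ↥(U ⊓ (V2 ⊔ V3 ⊓ Q)) = τ') ∧
      ((finrank K ↥((U ⊓ V2) ⊔ (U ⊓ P)) : ℤ) - finrank K ↥((U ⊓ V2) ⊔ (U ⊓ Q)) = τ))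
    ↔
    (((finrank K ↥(U.dualAnnihilator ⊓ V2.dualAnnihilator ⊓ Q.dualAnnihilator) : ℤ) -
        finrank K ↥(U.dualAnnihilator ⊓ V2.dualAnnihilator ⊓ P.dualAnnihilator) =
        ((finrank K ↥(V2.dualAnnihilator ⊓ Q.dualAnnihilator) : ℤ) -
          finrank K ↥(V2.dualAnnihilator ⊓ P.dualAnnihilator)) - τ') ∧
      ((finrank K ↥(U.dualAnnihilator ⊓
          (V2.dualAnnihilator ⊔ V1.dualAnnihilator ⊓ Q.dualAnnihilator)) : ℤ) -
        finrank K ↥(U.dualAnnihilator ⊓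
          (V2.dualAnnihilator ⊔ V1.dualAnnihilator ⊓ P.dualAnnihilator)) = σ) ∧
      ((finrank K ↥((U.dualAnnihilator ⊓ V2.dualAnnihilator) ⊔
          (U.dualAnnihilator ⊓ Q.dualAnnihilator)) : ℤ) -
        finrank K ↥((U.dualAnnihilator ⊓ V2.dualAnnihilator) ⊔
          (U.dualAnnihilator ⊓ P.dualAnnihilator)) = σ + τ' - τ)) := by
  rw [show U.dualAnnihilator ⊓ V2.dualAnnihilator ⊓ Q.dualAnnihilator
      = (U ⊔ V2 ⊔ Q).dualAnnihilator by rw [dualAnnihilator_sup_eq, dualAnnihilator_sup_eq],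
    show U.dualAnnihilator ⊓ V2.dualAnnihilator ⊓ P.dualAnnihilator
      = (U ⊔ V2 ⊔ P).dualAnnihilator by rw [dualAnnihilator_sup_eq, dualAnnihilator_sup_eq],
    show V2.dualAnnihilator ⊓ Q.dualAnnihilator = (V2 ⊔ Q).dualAnnihilator from
      (dualAnnihilator_sup_eq V2 Q).symm,
    show V2.dualAnnihilator ⊓ P.dualAnnihilator = (V2 ⊔ P).dualAnnihilator from
      (dualAnnihilator_sup_eq V2 P).symm,
    show U.dualAnnihilator ⊓ (V2.dualAnnihilator ⊔ V1.dualAnnihilator ⊓ Q.dualAnnihilator)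
      = (U ⊔ V2 ⊓ (V1 ⊔ Q)).dualAnnihilator by
        rw [← dualAnnihilator_sup_eq V1 Q, ← Subspace.dualAnnihilator_inf_eq,
          ← dualAnnihilator_sup_eq],
    show U.dualAnnihilator ⊓ (V2.dualAnnihilator ⊔ V1.dualAnnihilator ⊓ P.dualAnnihilator)
      = (U ⊔ V2 ⊓ (V1 ⊔ P)).dualAnnihilator by
        rw [← dualAnnihilator_sup_eq V1 P, ← Subspace.dualAnnihilator_inf_eq,
          ← dualAnnihilator_sup_eq],
    show (U.dualAnnihilator ⊓ V2.dualAnnihilator) ⊔ (U.dualAnnihilator ⊓ Q.dualAnnihilator)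
      = ((U ⊔ V2) ⊓ (U ⊔ Q)).dualAnnihilator by
        rw [← dualAnnihilator_sup_eq U V2, ← dualAnnihilator_sup_eq U Q,
          ← Subspace.dualAnnihilator_inf_eq],
    show (U.dualAnnihilator ⊓ V2.dualAnnihilator) ⊔ (U.dualAnnihilator ⊓ P.dualAnnihilator)
      = ((U ⊔ V2) ⊓ (U ⊔ P)).dualAnnihilator by
        rw [← dualAnnihilator_sup_eq U V2, ← dualAnnihilator_sup_eq U P,
          ← Subspace.dualAnnihilator_inf_eq]]
  simp only [frb]
  have aP := idA P h23 hU3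
  have aQ := idA Q h23 hU3
  have bP := idB P h12 hU1
  have bQ := idB Q h12 hU1
  have cP := idC (V2 := V2) P (U := U)
  have cQ := idC (V2 := V2) Q (U := U)
  have dP := idD (V2 := V2) P (U := U)
  have dQ := idD (V2 := V2) Q (U := U)
  have sP := frsup (U ⊔ V2) P
  have sQ := frsup (U ⊔ V2) Q
  have s2P := frsup V2 P
  have s2Q := frsup V2 Q
  constructor <;> rintro ⟨h1, h2, h3⟩ <;>
    exact ⟨by linarith, by linarith, by linarith⟩

end Aux

section Main
open Module Submodule

variable {K : Type*} [Field K] {V : Type*} [AddCommGroup V] [Module K V]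
  [FiniteDimensional K V]

lemma mem_dual_iff (m : ℕ) (Vf : ℕ → Submodule K V)
    (hVfmono : ∀ i, i < 4 → Vf i ≤ Vf (i + 1))
    (V' : ℕ → Submodule K V) (s t t' : ℕ → ℤ) (U : Submodule K V) :
    U ∈ YsetZ K m Vf V' s t t' ↔
      U.dualAnnihilator ∈ YsetZ K m
        (fun i => (Vf (4 - i)).dualAnnihilator)
        (fun j => (V' (m - j)).dualAnnihilator)
        (fun i => t' (m + 1 - i))
        (fun i => s (m + 1 - i) + t' (m + 1 - i) - t (m + 1 - i))
        (fun i => s (m + 1 - i)) := by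
  have h12 : Vf 1 ≤ Vf 2 := hVfmono 1 (by norm_num)
  have h23 : Vf 2 ≤ Vf 3 := hVfmono 2 (by norm_num)
  simp only [YsetZ, Set.mem_setOf_eq, show (4:ℕ) - 1 = 3 from rfl,
    show (4:ℕ) - 2 = 2 from rfl, show (4:ℕ) - 3 = 1 from rfl]
  constructor
  · rintro ⟨hU1, hU3, h⟩
    refine ⟨Subspace.dualAnnihilator_le_dualAnnihilator_iff.mpr hU3,
      Subspace.dualAnnihilator_le_dualAnnihilator_iff.mpr hU1, ?_⟩
    intro i hi1 him
    have e1 : m - i = (m + 1 - i) - 1 := by omega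
    have e2 : m - (i - 1) = m + 1 - i := by omega
    beta_reduce
    rw [e1, e2]
    exact (key (V' (m + 1 - i)) (V' (m + 1 - i - 1)) h12 h23 hU1 hU3
      (s (m + 1 - i)) (t (m + 1 - i)) (t' (m + 1 - i))).mp
      (h (m + 1 - i) (by omega) (by omega))
  · rintro ⟨hW1, hW3, h⟩
    have hU1 : Vf 1 ≤ U := Subspace.dualAnnihilator_le_dualAnnihilator_iff.mp hW3
    have hU3 : U ≤ Vf 3 := Subspace.dualAnnihilator_le_dualAnnihilator_iff.mp hW1
    refine ⟨hU1, hU3, ?_⟩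
    intro j hj1 hjm
    have hh := h (m + 1 - j) (by omega) (by omega)
    beta_reduce at hh
    rw [show m - (m + 1 - j) = j - 1 by omega,
      show m - (m + 1 - j - 1) = j by omega,
      show m + 1 - (m + 1 - j) = j by omega] at hh
    exact (key (V' j) (V' (j - 1)) h12 h23 hU1 hU3 (s j) (t j) (t' j)).mpr hh

end Main

theorem dual_bijection_Y
    (K : Type*) [Field K] (V : Type*) [AddCommGroup V] [Module K V]
    [FiniteDimensional K V]
    (m : ℕ)
    (Vf : ℕ → Submodule K V) (hVf0 : Vf 0 = ⊥) (hVf4 : Vf 4 = ⊤)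
    (hVfmono : ∀ i, i < 4 → Vf i ≤ Vf (i + 1))
    (V' : ℕ → Submodule K V) (hV'0 : V' 0 = ⊥) (hV'm : V' m = ⊤)
    (hV'mono : ∀ j, j < m → V' j ≤ V' (j + 1))
    (s t t' : ℕ → ℤ) :
    Set.BijOn (fun U : Submodule K V => U.dualAnnihilator)
      (YsetZ K m Vf V' s t t')
      (YsetZ K m
        (fun i => (Vf (4 - i)).dualAnnihilator)
        (fun j => (V' (m - j)).dualAnnihilator)
        (fun i => t' (m + 1 - i))
        (fun i => s (m + 1 - i) + t' (m + 1 - i) - t (m + 1 - i))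
        (fun i => s (m + 1 - i))) := by
  refine ⟨fun U hU => (mem_dual_iff m Vf hVfmono V' s t t' U).mp hU,
    fun U _ U' _ h => Subspace.dualAnnihilator_inj.mp h, ?_⟩
  intro W hW
  have hWU : (W.dualCoannihilator).dualAnnihilator = W :=
    Subspace.dualCoannihilator_dualAnnihilator_eq
  exact ⟨W.dualCoannihilator,
    (mem_dual_iff m Vf hVfmono V' s t t' _).mpr (by rw [hWU]; exact hW), hWU⟩
end
end

section
/- Let k be a finite field with q elements, V an even-dimensional k-vector space with a nondegenerate alternating bilinear form, m = 2r+1, and W an isotropic flag of type w (so W_i^⊥ = W_{m−i} for all i). Fix 1 ≤ j ≤ m and u ∈ ℕ, and let Y_j(V,W;u) = {U ⊆ V : U ⊆ U^⊥, dim_k U = u, U ⊆ W_j, U ∩ W_{j−1} = 0}. Then #Y_j(V,W;u) = q^{u Σ_{j'=1}^{j−1} w_{j'}} · qbinom(w_j, u) if j < r+1; #Y_j(V,W;u) = q^{u Σ_{j'=1}^{j−1} w_{j'}} · ∏_{i=0}^{u−1} [w_j − 2i]_q / [i+1]_q if j = r+1; and #Y_j(V,W;u) = q^{u Σ_{j'=1}^{j−1}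 w_{j'} − u(u−1)/2} · qbinom(w_j, u) if j > r+1. -/
open scoped Classical
noncomputable section

/-- Gaussian binomial coefficient `qbinom(a,b) = ∏_{i=1}^{b} (q^{a-i+1} − 1)/(q^{i} − 1)`. -/
def qBinom (q : ℕ) (a : ℤ) (b : ℕ) : ℚ :=
  ∏ i ∈ Finset.range b, (((q : ℚ) ^ (a - (i : ℤ)) - 1) / ((q : ℚ) ^ (i + 1) - 1))

/-- `Y_j(V, W; u)`: isotropic `u`-dimensional subspaces `U ⊆ W_j` with `U ∩ W_{j−1} = 0`. -/
def Yj (k : Type*) [Field k] {V : Type*} [AddCommGroup V] [Module k V]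
    (B : LinearMap.BilinForm k V) (W : ℕ → Submodule k V) (j u : ℕ) :
    Set (Submodule k V) :=
  {U | U ≤ B.orthogonal U ∧ Module.finrank k ↥U = u ∧ U ≤ W j ∧ U ⊓ W (j - 1) = ⊥}

open Module Submodule Finset

section Helpers

lemma card_of_fibers {α β : Type*} [Finite α] [Finite β] (f : α → β) (c : ℕ)
    (h : ∀ b, Nat.card {a : α // f a = b} = c) : Nat.card α = Nat.card β * c := by
  haveI := Fintype.ofFinite α
  haveI := Fintype.ofFinite β
  rw [Nat.card_eq_fintype_card, Nat.card_eq_fintype_card,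
    ← Fintype.card_congr (Equiv.sigmaFiberEquiv f), Fintype.card_sigma]
  have : ∀ b : β, Fintype.card {a : α // f a = b} = c := by
    intro b
    rw [← Nat.card_eq_fintype_card, h]
  simp [this, Finset.sum_const, mul_comm]

lemma range_snoc {n : ℕ} {α : Type*} (f : Fin n → α) (x : α) :
    Set.range (Fin.snoc f x : Fin (n+1) → α) = insert x (Set.range f) := by
  ext y
  constructor
  · rintro ⟨i, rfl⟩
    induction i using Fin.lastCases with
    | last => simp [Fin.snoc_last]
    | cast i => right; exact ⟨i, by simp⟩
  · rintro (rfl | ⟨i, rfl⟩)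
    · exact ⟨Fin.last n, by simp⟩
    · exact ⟨i.castSucc, by simp⟩

end Helpers

section BilinSection

variable {k : Type*} [Field k] {V : Type*} [AddCommGroup V] [Module k V]
  [FiniteDimensional k V]

lemma orth_sup (B : LinearMap.BilinForm k V) (X Y : Submodule k V) :
    B.orthogonal (X ⊔ Y) = B.orthogonal X ⊓ B.orthogonal Y := by
  ext x
  simp only [Submodule.mem_inf, LinearMap.BilinForm.mem_orthogonal_iff]
  constructor
  · exact fun h => ⟨fun n hn => h n (Submodule.mem_sup_left hn),
      fun n hn => h n (Submodule.mem_sup_right hn)⟩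
  · rintro ⟨h1, h2⟩ n hn
    obtain ⟨a, ha, b, hb, rfl⟩ := Submodule.mem_sup.mp hn
    have ha' := h1 a ha
    have hb' := h2 b hb
    rw [map_add, LinearMap.add_apply, ha', hb', add_zero]

lemma finrank_add_orth {B : LinearMap.BilinForm k V} (href : B.IsRefl)
    (hnd : B.Nondegenerate) (S : Submodule k V) :
    finrank k S + finrank k (B.orthogonal S) = finrank k V := by
  have := LinearMap.BilinForm.finrank_add_finrank_orthogonal (B := B) href S
  rwa [LinearMap.BilinForm.orthogonal_top_eq_bot hnd, inf_bot_eq, finrank_bot, add_zero] at this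

lemma dim_inf_orth {B : LinearMap.BilinForm k V} (href : B.IsRefl)
    (hnd : B.Nondegenerate) (X U : Submodule k V) :
    finrank k ↥(X ⊓ B.orthogonal U) + finrank k ↥U
      = finrank k ↥X + finrank k ↥(U ⊓ B.orthogonal X) := by
  have h1 := Submodule.finrank_sup_add_finrank_inf_eq X (B.orthogonal U)
  have h2 := finrank_add_orth href hnd U
  have h3 := finrank_add_orth href hnd (X ⊔ B.orthogonal U)
  rw [orth_sup, LinearMap.BilinForm.orthogonal_orthogonal hnd href] at h3
  have h4 : finrank k ↥(B.orthogonal X ⊓ U) = finrank k ↥(U ⊓ B.orthogonal X) := by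
    rw [inf_comm]
  have h5 : finrank k ↥U ≤ finrank k V := Submodule.finrank_le U
  omega

/-- The general form of the sets `Y_j`. -/
def Yg (B : LinearMap.BilinForm k V) (A A' : Submodule k V) (u : ℕ) :
    Set (Submodule k V) :=
  {U | U ≤ B.orthogonal U ∧ Module.finrank k ↥U = u ∧ U ≤ A ∧ U ⊓ A' = ⊥}

/-- Frames: linearly independent tuples whose span lies in `Yg`. -/
def Frg (B : LinearMap.BilinForm k V) (A A' : Submodule k V) (u : ℕ) : Type _ :=
  {g : Fin u → V // LinearIndependent k g ∧ Submodule.span k (Set.range g) ∈ Yg B A A' u}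

lemma Yg_zero (B : LinearMap.BilinForm k V) (A A' : Submodule k V) :
    Yg B A A' 0 = {⊥} := by
  ext U
  simp only [Set.mem_singleton_iff, Yg, Set.mem_setOf_eq]
  constructor
  · rintro ⟨-, h, -, -⟩
    exact Submodule.finrank_eq_zero.mp h
  · rintro rfl
    exact ⟨bot_le, finrank_bot k V, bot_le, bot_inf_eq A'⟩

end BilinSection

section Counting

variable {k : Type*} [Field k] [Fintype k] {V : Type*} [AddCommGroup V] [Module k V]
  [FiniteDimensional k V]

lemma finite_submodule (k : Type*) [Field k] [Fintype k] {V : Type*} [AddCommGroup V]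
    [Module k V] [FiniteDimensional k V] : Finite (Submodule k V) := by
  haveI : Finite V := Module.finite_of_finite k
  exact Finite.of_injective (fun U : Submodule k V => (U : Set V)) SetLike.coe_injective

lemma card_submodule (E : Submodule k V) :
    Nat.card ↥E = Fintype.card k ^ finrank k ↥E := by
  haveI : Finite V := Module.finite_of_finite k
  haveI : Fintype ↥E := Fintype.ofFinite _
  rw [Nat.card_eq_fintype_card, card_eq_pow_finrank (K := k)]

lemma card_diff_submodules (E F : Submodule k V) (h : F ≤ E) :
    Nat.card ↥((E : Set V) \ (F : Set V)) =
      Fintype.card k ^ finrank k ↥E - Fintype.card k ^ finrank k ↥F := by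
  haveI : Finite V := Module.finite_of_finite k
  rw [Nat.card_coe_set_eq, Set.ncard_diff h (Set.toFinite _)]
  have hE : (E : Set V).ncard = Fintype.card k ^ finrank k ↥E := by
    rw [← Nat.card_coe_set_eq, ← card_submodule E]; rfl
  have hF : (F : Set V).ncard = Fintype.card k ^ finrank k ↥F := by
    rw [← Nat.card_coe_set_eq, ← card_submodule F]; rfl
  rw [hE, hF]

variable (B : LinearMap.BilinForm k V) (A A' : Submodule k V)

lemma frames_card (u : ℕ) :
    Nat.card (Frg B A A' u) =
      (Yg B A A' u).ncard * ∏ i ∈ Finset.range u,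
        (Fintype.card k ^ u - Fintype.card k ^ i) := by
  haveI : Finite V := Module.finite_of_finite k
  haveI : Finite (Submodule k V) := finite_submodule k
  haveI : Finite (Frg B A A' u) := by
    unfold Frg; infer_instance
  rw [← Nat.card_coe_set_eq]
  apply card_of_fibers (f := fun g : Frg B A A' u =>
    (⟨Submodule.span k (Set.range g.1), g.2.2⟩ : ↥(Yg B A A' u)))
  rintro ⟨U, hU⟩
  have hrank : finrank k ↥U = u := hU.2.1
  have hcount := card_linearIndependent (K := k) (V := ↥U) (k := u) (le_of_eq hrank.symm)
  rw [hrank] at hcount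
  have key : ∀ s : { s : Fin u → ↥U // LinearIndependent k s },
      Submodule.span k (Set.range (fun i => (s.1 i : V))) = U := by
    intro s
    have h1 : (fun i => (s.1 i : V)) = (U.subtype : ↥U →ₗ[k] V) ∘ s.1 := rfl
    rw [h1, Set.range_comp, Submodule.span_image]
    have htop : Submodule.span k (Set.range s.1) = ⊤ := by
      apply s.2.span_eq_top_of_card_eq_finrank'
      rw [Fintype.card_fin, hrank]
    rw [htop, Submodule.map_subtype_top]
  have hequiv : {a : Frg B A A' u // (⟨Submodule.span k (Set.range a.1), a.2.2⟩ :
      ↥(Yg B A A' u)) = ⟨U, hU⟩} ≃ { s : Fin u → ↥U // LinearIndependent k s } := by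
    refine ⟨fun g => ⟨fun i => ⟨g.1.1 i, ?_⟩, ?_⟩,
      fun s => ⟨⟨fun i => (s.1 i : V), ?_, ?_⟩, ?_⟩, fun g => ?_, fun s => ?_⟩
    · have hsp : Submodule.span k (Set.range g.1.1) = U := congrArg Subtype.val g.2
      have hmem := Submodule.subset_span (R := k) (Set.mem_range_self (f := g.1.1) i)
      rwa [hsp] at hmem
    · exact (g.1.2.1).of_comp U.subtype
    · exact s.2.map' U.subtype (Submodule.ker_subtype U)
    · show Submodule.span k (Set.range (fun i => (s.1 i : V))) ∈ Yg B A A' u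
      rw [key s]; exact hU
    · apply Subtype.ext
      show Submodule.span k (Set.range (fun i => (s.1 i : V))) = U
      exact key s
    · apply Subtype.ext; apply Subtype.ext; rfl
    · apply Subtype.ext; funext i; apply Subtype.ext; rfl
  rw [Nat.card_congr hequiv, hcount]
  rw [Finset.prod_range fun i => Fintype.card k ^ u - Fintype.card k ^ i]

end Counting

section ExtChar

variable {k : Type*} [Field k] {V : Type*} [AddCommGroup V] [Module k V]
  [FiniteDimensional k V]

lemma ext_char {B : LinearMap.BilinForm k V} {A A' : Submodule k V}
    (halt : B.IsAlt) (hA : A' ≤ A) {u : ℕ} {U : Submodule k V}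
    (hU : U ∈ Yg B A A' u) (v : V) :
    (v ∈ (A ⊓ B.orthogonal U : Submodule k V) ∧
      v ∉ ((A' ⊔ U) ⊓ (A ⊓ B.orthogonal U) : Submodule k V)) ↔
    (v ∉ U ∧ ((Submodule.span k {v} ⊔ U) ≤ B.orthogonal (Submodule.span k {v} ⊔ U) ∧
      (Submodule.span k {v} ⊔ U) ≤ A ∧ (Submodule.span k {v} ⊔ U) ⊓ A' = ⊥)) := by
  have href : B.IsRefl := halt.isRefl
  obtain ⟨hUo, hUr, hUA, hUA'⟩ := hU
  constructor
  · rintro ⟨hvE, hvF⟩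
    obtain ⟨hvA, hvO⟩ := Submodule.mem_inf.mp hvE
    have hvU : v ∉ U := fun h =>
      hvF (Submodule.mem_inf.mpr ⟨Submodule.mem_sup_right h, hvE⟩)
    have hvortho : ∀ x ∈ U, B v x = 0 := fun x hx => href x v (hvO x hx)
    refine ⟨hvU, ?_, ?_, ?_⟩
    · rw [orth_sup]
      refine sup_le (le_inf ?_ ?_) (le_inf ?_ hUo)
      · rw [Submodule.span_le, Set.singleton_subset_iff]
        intro n hn
        obtain ⟨a, rfl⟩ := Submodule.mem_span_singleton.mp hn
        show B (a • v) v = 0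
        rw [map_smul, LinearMap.smul_apply, halt v, smul_zero]
      · rw [Submodule.span_le, Set.singleton_subset_iff]
        exact hvO
      · intro x hx n hn
        obtain ⟨a, rfl⟩ := Submodule.mem_span_singleton.mp hn
        show B (a • v) x = 0
        rw [map_smul, LinearMap.smul_apply, hvortho x hx, smul_zero]
    · exact sup_le (by rw [Submodule.span_le, Set.singleton_subset_iff]; exact hvA) hUA
    · rw [eq_bot_iff]
      rintro x ⟨hx1, hx2⟩
      obtain ⟨p, hp, b, hb, rfl⟩ := Submodule.mem_sup.mp hx1
      obtain ⟨a, rfl⟩ := Submodule.mem_span_singleton.mp hp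
      by_cases ha : a = 0
      · rw [ha, zero_smul, zero_add] at hx2 ⊢
        have : b ∈ U ⊓ A' := ⟨hb, hx2⟩
        rw [hUA'] at this
        exact this
      · exfalso
        apply hvF
        refine Submodule.mem_inf.mpr ⟨?_, hvE⟩
        have : v = a⁻¹ • ((a • v + b) - b) := by
          rw [add_sub_cancel_right, smul_smul, inv_mul_cancel₀ ha, one_smul]
        rw [this]
        exact Submodule.smul_mem _ _ (Submodule.sub_mem _
          (Submodule.mem_sup_left hx2) (Submodule.mem_sup_right hb))
  · rintro ⟨hvU, hiso, hle, hbot⟩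
    have hvU' : v ∈ Submodule.span k {v} ⊔ U :=
      Submodule.mem_sup_left (Submodule.mem_span_singleton_self v)
    have hvE : v ∈ (A ⊓ B.orthogonal U : Submodule k V) := by
      refine Submodule.mem_inf.mpr ⟨hle hvU', ?_⟩
      exact B.orthogonal_le le_sup_right (hiso hvU')
    refine ⟨hvE, fun hvF => ?_⟩
    obtain ⟨hvsup, -⟩ := Submodule.mem_inf.mp hvF
    obtain ⟨a, ha, b, hb, hab⟩ := Submodule.mem_sup.mp hvsup
    have haU' : a ∈ (Submodule.span k {v} ⊔ U) ⊓ A' := by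
      refine ⟨?_, ha⟩
      have : a = v - b := by rw [← hab, add_sub_cancel_right]
      rw [this]
      exact Submodule.sub_mem _ hvU' (Submodule.mem_sup_right hb)
    rw [hbot] at haU'
    have : a = 0 := haU'
    rw [this, zero_add] at hab
    exact hvU (hab ▸ hb)

end ExtChar

section FrameStep

variable {k : Type*} [Field k] [Fintype k] {V : Type*} [AddCommGroup V] [Module k V]
  [FiniteDimensional k V]

lemma span_init_mem {B : LinearMap.BilinForm k V} {A A' : Submodule k V} {u : ℕ}
    (g : Frg B A A' (u+1)) :
    LinearIndependent k (Fin.init g.1) ∧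
      Submodule.span k (Set.range (Fin.init g.1)) ∈ Yg B A A' u := by
  obtain ⟨g, hgi, hgY⟩ := g
  have hindep : LinearIndependent k (Fin.init g) :=
    hgi.comp Fin.castSucc (Fin.castSucc_injective u)
  have hle : Submodule.span k (Set.range (Fin.init g)) ≤ Submodule.span k (Set.range g) := by
    apply Submodule.span_mono
    rintro _ ⟨i, rfl⟩
    exact ⟨i.castSucc, rfl⟩
  obtain ⟨hgo, hgr, hgA, hgA'⟩ := hgY
  refine ⟨hindep, ?_, ?_, le_trans hle hgA, ?_⟩
  · exact le_trans hle (le_trans hgo (B.orthogonal_le hle))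
  · rw [finrank_span_eq_card hindep, Fintype.card_fin]
  · rw [eq_bot_iff]
    calc Submodule.span k (Set.range (Fin.init g)) ⊓ A'
        ≤ Submodule.span k (Set.range g) ⊓ A' := inf_le_inf_right A' hle
      _ = ⊥ := hgA'

lemma frame_step {B : LinearMap.BilinForm k V} {A A' : Submodule k V}
    (halt : B.IsAlt) (hA : A' ≤ A) (u dE dF : ℕ)
    (hdE : ∀ U ∈ Yg B A A' u, finrank k ↥(A ⊓ B.orthogonal U) = dE)
    (hdF : ∀ U ∈ Yg B A A' u, finrank k ↥((A' ⊔ U) ⊓ (A ⊓ B.orthogonal U)) = dF) :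
    Nat.card (Frg B A A' (u+1)) =
      Nat.card (Frg B A A' u) * (Fintype.card k ^ dE - Fintype.card k ^ dF) := by
  haveI : Finite V := Module.finite_of_finite k
  haveI : Finite (Frg B A A' (u+1)) := by unfold Frg; infer_instance
  haveI : Finite (Frg B A A' u) := by unfold Frg; infer_instance
  apply card_of_fibers (f := fun g : Frg B A A' (u+1) =>
    (⟨Fin.init g.1, (span_init_mem g).1, (span_init_mem g).2⟩ : Frg B A A' u))
  intro f
  set U := Submodule.span k (Set.range f.1) with hUdef
  have hU : U ∈ Yg B A A' u := f.2.2
  have hsnocspan : ∀ v : V,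
      Submodule.span k (Set.range (Fin.snoc f.1 v : Fin (u+1) → V)) =
        Submodule.span k {v} ⊔ U := by
    intro v
    rw [range_snoc, Submodule.span_insert]
  have hequiv : {g : Frg B A A' (u+1) //
      (⟨Fin.init g.1, (span_init_mem g).1, (span_init_mem g).2⟩ : Frg B A A' u) = f} ≃
      ↥(((A ⊓ B.orthogonal U : Submodule k V) : Set V) \
        (((A' ⊔ U) ⊓ (A ⊓ B.orthogonal U) : Submodule k V) : Set V)) := by
    refine ⟨fun g => ⟨g.1.1 (Fin.last u), ?_⟩, fun v => ⟨⟨Fin.snoc f.1 v.1, ?_, ?_⟩, ?_⟩,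
      fun g => ?_, fun v => ?_⟩
    · have hinit : Fin.init g.1.1 = f.1 := congrArg Subtype.val g.2
      have hsnoc : g.1.1 = Fin.snoc f.1 (g.1.1 (Fin.last u)) := by
        rw [← hinit]
        exact (Fin.snoc_init_self g.1.1).symm
      have hgi := g.1.2.1
      rw [hsnoc, linearIndependent_fin_snoc] at hgi
      have hgY := g.1.2.2
      rw [hsnoc, hsnocspan] at hgY
      obtain ⟨ho, hr, hAle, hbot⟩ := hgY
      have := (ext_char halt hA hU (g.1.1 (Fin.last u))).mpr
        ⟨by rw [← hUdef] at hgi; exact hgi.2, ho, hAle, hbot⟩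
      exact ⟨this.1, this.2⟩
    · rw [linearIndependent_fin_snoc]
      refine ⟨f.2.1, ?_⟩
      have := (ext_char halt hA hU v.1).mp ⟨v.2.1, v.2.2⟩
      exact this.1
    · rw [hsnocspan]
      have hchar := (ext_char halt hA hU v.1).mp ⟨v.2.1, v.2.2⟩
      refine ⟨hchar.2.1, ?_, hchar.2.2.1, hchar.2.2.2⟩
      have hindep : LinearIndependent k (Fin.snoc f.1 v.1 : Fin (u+1) → V) := by
        rw [linearIndependent_fin_snoc]
        exact ⟨f.2.1, hchar.1⟩
      rw [← hsnocspan, finrank_span_eq_card hindep, Fintype.card_fin]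
    · apply Subtype.ext
      show Fin.init (Fin.snoc f.1 v.1 : Fin (u+1) → V) = f.1
      simp
    · apply Subtype.ext
      apply Subtype.ext
      show Fin.snoc f.1 (g.1.1 (Fin.last u)) = g.1.1
      have hinit : Fin.init g.1.1 = f.1 := congrArg Subtype.val g.2
      rw [← hinit]
      exact Fin.snoc_init_self g.1.1
    · apply Subtype.ext
      show (Fin.snoc f.1 v.1 : Fin (u+1) → V) (Fin.last u) = v.1
      simp
  rw [Nat.card_congr hequiv,
    card_diff_submodules _ _ inf_le_right, hdE U hU, hdF U hU]

end FrameStep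

section Master

variable {k : Type*} [Field k] [Fintype k] {V : Type*} [AddCommGroup V] [Module k V]
  [FiniteDimensional k V] {B : LinearMap.BilinForm k V} {A A' : Submodule k V}

lemma dimE_eq (halt : B.IsAlt) (hnd : B.Nondegenerate) {u : ℕ} {U : Submodule k V}
    (hU : U ∈ Yg B A A' u) :
    finrank k ↥(A ⊓ B.orthogonal U) + u
      = finrank k ↥A + finrank k ↥(U ⊓ B.orthogonal A) := by
  have h := dim_inf_orth halt.isRefl hnd A U
  rw [hU.2.1] at h
  exact h

lemma dimF_eq (halt : B.IsAlt) (hnd : B.Nondegenerate) (hA : A' ≤ A) {u : ℕ}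
    {U : Submodule k V} (hU : U ∈ Yg B A A' u) :
    finrank k ↥((A' ⊔ U) ⊓ (A ⊓ B.orthogonal U))
      = finrank k ↥A' + finrank k ↥(U ⊓ B.orthogonal A') := by
  obtain ⟨hUo, hUr, hUA, hUA'⟩ := hU
  have h1 : (A' ⊔ U) ⊓ (A ⊓ B.orthogonal U) = (A' ⊓ B.orthogonal U) ⊔ U := by
    have hsub : A' ⊔ U ≤ A := sup_le hA hUA
    calc (A' ⊔ U) ⊓ (A ⊓ B.orthogonal U) = ((A' ⊔ U) ⊓ A) ⊓ B.orthogonal U := by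
          rw [inf_assoc]
      _ = (A' ⊔ U) ⊓ B.orthogonal U := by rw [inf_eq_left.mpr hsub]
      _ = (U ⊔ A') ⊓ B.orthogonal U := by rw [sup_comm]
      _ = U ⊔ (A' ⊓ B.orthogonal U) := sup_inf_assoc_of_le A' hUo
      _ = (A' ⊓ B.orthogonal U) ⊔ U := by rw [sup_comm]
  have h2 := Submodule.finrank_sup_add_finrank_inf_eq (A' ⊓ B.orthogonal U) U
  have h3 : (A' ⊓ B.orthogonal U) ⊓ U = ⊥ := by
    rw [eq_bot_iff]
    calc (A' ⊓ B.orthogonal U) ⊓ U ≤ U ⊓ A' :=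
          le_inf inf_le_right (le_trans inf_le_left inf_le_left)
      _ = ⊥ := hUA'
  have h4 := dim_inf_orth halt.isRefl hnd A' U
  rw [hUr] at h4
  rw [h3, finrank_bot] at h2
  rw [h1]
  omega

lemma master (halt : B.IsAlt) (hnd : B.Nondegenerate) (hA : A' ≤ A) (a b : ℕ)
    (hα : ∀ u U, U ∈ Yg B A A' u → finrank k ↥(U ⊓ B.orthogonal A) = a * u)
    (hβ : ∀ u U, U ∈ Yg B A A' u → finrank k ↥(U ⊓ B.orthogonal A') = b * u)
    (u : ℕ) :
    ((Yg B A A' u).ncard : ℚ) * ∏ i ∈ Finset.range u,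
        ((Fintype.card k : ℚ) ^ u - (Fintype.card k : ℚ) ^ i)
      = ∏ i ∈ Finset.range u,
        ((Fintype.card k : ℚ) ^ ((finrank k ↥A : ℤ) + a * i - i)
          - (Fintype.card k : ℚ) ^ ((finrank k ↥A' : ℤ) + b * i)) := by
  have hq2 : 2 ≤ Fintype.card k := Fintype.one_lt_card
  have hcastP : ∀ t : ℕ, ((∏ i ∈ Finset.range t, (Fintype.card k ^ t - Fintype.card k ^ i) : ℕ) : ℚ)
      = ∏ i ∈ Finset.range t, ((Fintype.card k : ℚ) ^ t - (Fintype.card k : ℚ) ^ i) := by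
    intro t
    rw [Nat.cast_prod]
    refine Finset.prod_congr rfl fun i hi => ?_
    rw [Nat.cast_sub (Nat.pow_le_pow_right (by omega) (le_of_lt (Finset.mem_range.mp hi)))]
    push_cast
    ring
  induction u with
  | zero => simp [Yg_zero]
  | succ u ih =>
    by_cases hY : (Yg B A A' u).Nonempty
    · obtain ⟨U₀, hU₀⟩ := hY
      have hdE : ∀ U ∈ Yg B A A' u,
          finrank k ↥(A ⊓ B.orthogonal U) = finrank k ↥A + a * u - u := by
        intro U hU
        have h := dimE_eq halt hnd hU
        rw [hα u U hU] at h
        omega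
      have hdF : ∀ U ∈ Yg B A A' u,
          finrank k ↥((A' ⊔ U) ⊓ (A ⊓ B.orthogonal U)) = finrank k ↥A' + b * u := by
        intro U hU
        rw [dimF_eq halt hnd hA hU, hβ u U hU]
      have hle1 : u ≤ finrank k ↥A + a * u := by
        have h := dimE_eq halt hnd hU₀
        rw [hα u U₀ hU₀] at h
        omega
      have hle2 : finrank k ↥A' + b * u ≤ finrank k ↥A + a * u - u := by
        have e1 := hdE U₀ hU₀
        have e2 := hdF U₀ hU₀
        have e3 : finrank k ↥((A' ⊔ U₀) ⊓ (A ⊓ B.orthogonal U₀))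
            ≤ finrank k ↥(A ⊓ B.orthogonal U₀) := Submodule.finrank_mono inf_le_right
        omega
      have hstep := frame_step halt hA u (finrank k ↥A + a * u - u) (finrank k ↥A' + b * u) hdE hdF
      have hc1 := frames_card B A A' u
      have hc2 := frames_card B A A' (u + 1)
      have hnat : (Yg B A A' (u+1)).ncard
            * ∏ i ∈ Finset.range (u+1), (Fintype.card k ^ (u+1) - Fintype.card k ^ i)
          = (Yg B A A' u).ncard * (∏ i ∈ Finset.range u, (Fintype.card k ^ u - Fintype.card k ^ i))
            * (Fintype.card k ^ (finrank k ↥A + a * u - u) - Fintype.card k ^ (finrank k ↥A' + b * u)) := by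
        rw [← hc1, ← hc2, hstep]
      have hcastc : ((Fintype.card k ^ (finrank k ↥A + a * u - u)
            - Fintype.card k ^ (finrank k ↥A' + b * u) : ℕ) : ℚ)
          = (Fintype.card k : ℚ) ^ ((finrank k ↥A : ℤ) + a * u - u)
            - (Fintype.card k : ℚ) ^ ((finrank k ↥A' : ℤ) + b * u) := by
        rw [Nat.cast_sub (Nat.pow_le_pow_right (by omega) hle2)]
        rw [Nat.cast_pow, Nat.cast_pow,
          ← zpow_natCast (Fintype.card k : ℚ) (finrank k ↥A + a * u - u),
          ← zpow_natCast (Fintype.card k : ℚ) (finrank k ↥A' + b * u)]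
        have e1 : ((finrank k ↥A + a * u - u : ℕ) : ℤ) = (finrank k ↥A : ℤ) + a * u - u := by
          omega
        have e2 : ((finrank k ↥A' + b * u : ℕ) : ℤ) = (finrank k ↥A' : ℤ) + b * u := by
          push_cast; ring
        rw [e1, e2]
      have hQ := congrArg (fun n : ℕ => (n : ℚ)) hnat
      simp only [Nat.cast_mul, hcastP, hcastc] at hQ
      rw [hQ, ih, Finset.prod_range_succ]
    · rw [Set.not_nonempty_iff_eq_empty] at hY
      have hzero : (Yg B A A' u).ncard = 0 := by rw [hY, Set.ncard_empty]
      have hstep := frame_step halt hA u 0 0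
        (by rw [hY]; intro U hU; exact absurd hU (Set.notMem_empty U))
        (by rw [hY]; intro U hU; exact absurd hU (Set.notMem_empty U))
      have hc1 := frames_card B A A' u
      have hc2 := frames_card B A A' (u + 1)
      rw [hc1, hzero, zero_mul] at hstep
      rw [hstep, zero_mul] at hc2
      have hpos : 0 < ∏ i ∈ Finset.range (u+1), (Fintype.card k ^ (u+1) - Fintype.card k ^ i) := by
        apply Finset.prod_pos
        intro i hi
        have : Fintype.card k ^ i < Fintype.card k ^ (u+1) :=
          Nat.pow_lt_pow_right (by omega) (Finset.mem_range.mp hi)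
        omega
      have hzero2 : (Yg B A A' (u+1)).ncard = 0 := by
        rcases Nat.mul_eq_zero.mp hc2.symm with h | h
        · exact h
        · omega
      rw [hzero2, Nat.cast_zero, zero_mul, Finset.prod_range_succ, ← ih, hzero,
        Nat.cast_zero, zero_mul, zero_mul]

end Master

section Algebra

variable (Q : ℚ)

lemma fac_ne (hQ : 1 < Q) (i : ℕ) : Q ^ (i + 1) - 1 ≠ 0 :=
  sub_ne_zero.mpr (ne_of_gt (one_lt_pow₀ hQ (by omega)))

lemma prodP (u : ℕ) :
    ∏ i ∈ Finset.range u, (Q ^ u - Q ^ i)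
      = Q ^ (∑ i ∈ Finset.range u, i) * ∏ i ∈ Finset.range u, (Q ^ (i + 1) - 1) := by
  calc ∏ i ∈ Finset.range u, (Q ^ u - Q ^ i)
      = ∏ i ∈ Finset.range u, (Q ^ i * (Q ^ (u - i) - 1)) := by
        refine Finset.prod_congr rfl fun i hi => ?_
        have hi' := Finset.mem_range.mp hi
        rw [mul_sub, mul_one, ← pow_add]
        congr 2
        omega
    _ = (∏ i ∈ Finset.range u, Q ^ i) * ∏ i ∈ Finset.range u, (Q ^ (u - i) - 1) :=
        Finset.prod_mul_distrib
    _ = Q ^ (∑ i ∈ Finset.range u, i) * ∏ i ∈ Finset.range u, (Q ^ (i + 1) - 1) := by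
        rw [Finset.prod_pow_eq_pow_sum]
        congr 1
        have hrefl := Finset.prod_range_reflect (fun j => Q ^ (j + 1) - 1) u
        rw [← hrefl]
        refine Finset.prod_congr rfl fun i hi => ?_
        have hi' := Finset.mem_range.mp hi
        congr 2
        omega

lemma prodP_ne (hQ : 1 < Q) (u : ℕ) :
    ∏ i ∈ Finset.range u, (Q ^ u - Q ^ i) ≠ 0 := by
  have hQ0 : Q ≠ 0 := by positivity
  rw [prodP]
  exact mul_ne_zero (pow_ne_zero _ hQ0)
    (Finset.prod_ne_zero_iff.mpr fun i _ => fac_ne Q hQ i)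

lemma alg12 (hQ : 1 < Q) (sN : ℕ) (c : ℕ → ℤ) (u : ℕ) (N : ℚ)
    (h : N * ∏ i ∈ Finset.range u, (Q ^ u - Q ^ i)
      = ∏ i ∈ Finset.range u, (Q ^ sN * Q ^ i * (Q ^ (c i) - 1))) :
    N = Q ^ (u * sN) * ∏ i ∈ Finset.range u, ((Q ^ (c i) - 1) / (Q ^ (i + 1) - 1)) := by
  have hQ0 : Q ≠ 0 := by positivity
  have hBne : ∏ i ∈ Finset.range u, (Q ^ (i + 1) - 1) ≠ 0 :=
    Finset.prod_ne_zero_iff.mpr fun i _ => fac_ne Q hQ i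
  have hQT : Q ^ (∑ i ∈ Finset.range u, i) ≠ 0 := pow_ne_zero _ hQ0
  rw [prodP] at h
  have expand : ∏ i ∈ Finset.range u, (Q ^ sN * Q ^ i * (Q ^ (c i) - 1))
      = Q ^ (u * sN) * Q ^ (∑ i ∈ Finset.range u, i)
        * ∏ i ∈ Finset.range u, (Q ^ (c i) - 1) := by
    rw [Finset.prod_mul_distrib, Finset.prod_mul_distrib, Finset.prod_const,
      Finset.card_range, ← pow_mul, Finset.prod_pow_eq_pow_sum, mul_comm sN u]
  rw [expand] at h
  have key : N * ∏ i ∈ Finset.range u, (Q ^ (i + 1) - 1)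
      = Q ^ (u * sN) * ∏ i ∈ Finset.range u, (Q ^ (c i) - 1) := by
    apply mul_right_cancel₀ hQT
    calc N * (∏ i ∈ Finset.range u, (Q ^ (i + 1) - 1)) * Q ^ (∑ i ∈ Finset.range u, i)
        = N * (Q ^ (∑ i ∈ Finset.range u, i) * ∏ i ∈ Finset.range u, (Q ^ (i + 1) - 1)) := by
          ring
      _ = Q ^ (u * sN) * Q ^ (∑ i ∈ Finset.range u, i)
            * ∏ i ∈ Finset.range u, (Q ^ (c i) - 1) := h
      _ = Q ^ (u * sN) * (∏ i ∈ Finset.range u, (Q ^ (c i) - 1))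
            * Q ^ (∑ i ∈ Finset.range u, i) := by ring
  rw [Finset.prod_div_distrib]
  rw [show Q ^ (u * sN) * ((∏ i ∈ Finset.range u, (Q ^ (c i) - 1)) /
      (∏ i ∈ Finset.range u, (Q ^ (i + 1) - 1)))
    = (Q ^ (u * sN) * ∏ i ∈ Finset.range u, (Q ^ (c i) - 1)) /
      (∏ i ∈ Finset.range u, (Q ^ (i + 1) - 1)) from by ring]
  rw [eq_div_iff hBne]
  exact key

lemma alg3 (hQ : 1 < Q) (sN : ℕ) (c : ℕ → ℤ) (u : ℕ) (N : ℚ)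
    (h : N * ∏ i ∈ Finset.range u, (Q ^ u - Q ^ i)
      = ∏ i ∈ Finset.range u, (Q ^ sN * (Q ^ (c i) - 1))) :
    N = Q ^ (((u * sN : ℕ) : ℤ) - ((u * (u - 1) / 2 : ℕ) : ℤ))
        * ∏ i ∈ Finset.range u, ((Q ^ (c i) - 1) / (Q ^ (i + 1) - 1)) := by
  have hQ0 : Q ≠ 0 := by positivity
  have hBne : ∏ i ∈ Finset.range u, (Q ^ (i + 1) - 1) ≠ 0 :=
    Finset.prod_ne_zero_iff.mpr fun i _ => fac_ne Q hQ i
  have hQT : Q ^ (∑ i ∈ Finset.range u, i) ≠ 0 := pow_ne_zero _ hQ0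
  rw [prodP] at h
  have expand : ∏ i ∈ Finset.range u, (Q ^ sN * (Q ^ (c i) - 1))
      = Q ^ (u * sN) * ∏ i ∈ Finset.range u, (Q ^ (c i) - 1) := by
    rw [Finset.prod_mul_distrib, Finset.prod_const, Finset.card_range, ← pow_mul,
      mul_comm sN u]
  rw [expand] at h
  have hz : Q ^ (((u * sN : ℕ) : ℤ) - ((u * (u - 1) / 2 : ℕ) : ℤ))
      = Q ^ (u * sN) / Q ^ (∑ i ∈ Finset.range u, i) := by
    rw [zpow_sub₀ hQ0, zpow_natCast, zpow_natCast, Finset.sum_range_id]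
  rw [hz, Finset.prod_div_distrib]
  rw [div_mul_div_comm, eq_div_iff (mul_ne_zero hQT hBne)]
  calc N * (Q ^ (∑ i ∈ Finset.range u, i) * ∏ i ∈ Finset.range u, (Q ^ (i + 1) - 1))
      = N * (Q ^ (∑ i ∈ Finset.range u, i) * ∏ i ∈ Finset.range u, (Q ^ (i + 1) - 1)) := rfl
    _ = Q ^ (u * sN) * ∏ i ∈ Finset.range u, (Q ^ (c i) - 1) := h

end Algebra

theorem cardinality_Yj
    (k : Type*) [Field k] [Fintype k] (q : ℕ) (hq : Fintype.card k = q)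
    (V : Type*) [AddCommGroup V] [Module k V] [FiniteDimensional k V]
    (hdim : ∃ d : ℕ, Module.finrank k V = 2 * d)
    (B : LinearMap.BilinForm k V) (halt : B.IsAlt) (hnd : B.Nondegenerate)
    (r : ℕ) (m : ℕ) (hm : m = 2 * r + 1)
    (W : ℕ → Submodule k V) (w : ℕ → ℕ)
    (hW0 : W 0 = ⊥) (hWm : W m = ⊤)
    (hWmono : ∀ i, i < m → W i ≤ W (i + 1))
    (hWtype : ∀ i, 1 ≤ i → i ≤ m →
      Module.finrank k ↥(W i) = Module.finrank k ↥(W (i - 1)) + w i)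
    (hWiso : ∀ i, i ≤ m → B.orthogonal (W i) = W (m - i))
    (j : ℕ) (hj1 : 1 ≤ j) (hjm : j ≤ m) (u : ℕ) :
    (j < r + 1 →
      ((Yj k B W j u).ncard : ℚ) =
        (q : ℚ) ^ (u * ∑ j' ∈ Finset.Ico 1 j, w j') * qBinom q (w j) u) ∧
    (j = r + 1 →
      ((Yj k B W j u).ncard : ℚ) =
        (q : ℚ) ^ (u * ∑ j' ∈ Finset.Ico 1 j, w j') *
          ∏ i ∈ Finset.range u, (qInt q ((w j : ℤ) - 2 * i) / qInt q ((i : ℤ) + 1))) ∧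
    (r + 1 < j →
      ((Yj k B W j u).ncard : ℚ) =
        (q : ℚ) ^ (((u * ∑ j' ∈ Finset.Ico 1 j, w j' : ℕ) : ℤ) - (u * (u - 1) / 2 : ℕ)) *
          qBinom q (w j) u) := by
  subst hq
  have hq2 : 2 ≤ Fintype.card k := Fintype.one_lt_card
  have hQ : (1 : ℚ) < (Fintype.card k : ℚ) := by exact_mod_cast hq2
  have hQ0 : (Fintype.card k : ℚ) ≠ 0 := by positivity
  have hQ1ne : (Fintype.card k : ℚ) - 1 ≠ 0 := sub_ne_zero.mpr (ne_of_gt hQ)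
  have hchain : ∀ b : ℕ, b ≤ m → ∀ a : ℕ, a ≤ b → W a ≤ W b := by
    intro b
    induction b with
    | zero =>
      intro _ a ha
      rw [Nat.le_zero.mp ha]
    | succ t ih =>
      intro hbm a ha
      rcases Nat.eq_or_lt_of_le ha with rfl | hlt
      · exact le_rfl
      · exact le_trans (ih (by omega) a (by omega)) (hWmono t (by omega))
  have hsum : ∀ t : ℕ, t ≤ m → finrank k ↥(W t) = ∑ j' ∈ Finset.Ico 1 (t + 1), w j' := by
    intro t
    induction t with
    | zero =>
      intro _
      rw [hW0]
      simp
    | succ t ih =>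
      intro htm
      rw [hWtype (t + 1) (by omega) htm]
      rw [show t + 1 - 1 = t from rfl, ih (by omega),
        Finset.sum_Ico_succ_top (show 1 ≤ t + 1 by omega) w]
  have hS : ∑ j' ∈ Finset.Ico 1 j, w j' = finrank k ↥(W (j - 1)) := by
    rw [hsum (j - 1) (by omega)]
    congr 2
    omega
  have hD : finrank k ↥(W j) = finrank k ↥(W (j - 1)) + w j := hWtype j hj1 hjm
  have hA : W (j - 1) ≤ W j := hchain j hjm (j - 1) (by omega)
  have hYg : Yj k B W j u = Yg B (W j) (W (j - 1)) u := rfl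
  have horthA : B.orthogonal (W j) = W (m - j) := hWiso j hjm
  have horthA' : B.orthogonal (W (j - 1)) = W (m - j + 1) := by
    rw [hWiso (j - 1) (by omega)]
    congr 1
    omega
  refine ⟨?_, ?_, ?_⟩
  · -- case j < r + 1
    intro hjr
    have hα : ∀ u' U, U ∈ Yg B (W j) (W (j - 1)) u' →
        finrank k ↥(U ⊓ B.orthogonal (W j)) = 1 * u' := by
      intro u' U hU
      rw [horthA, inf_eq_left.mpr (le_trans hU.2.2.1 (hchain (m - j) (by omega) j (by omega))),
        hU.2.1, one_mul]
    have hβ : ∀ u' U, U ∈ Yg B (W j) (W (j - 1)) u' →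
        finrank k ↥(U ⊓ B.orthogonal (W (j - 1))) = 1 * u' := by
      intro u' U hU
      rw [horthA', inf_eq_left.mpr (le_trans hU.2.2.1
        (hchain (m - j + 1) (by omega) j (by omega))), hU.2.1, one_mul]
    have hmas := master halt hnd hA 1 1 hα hβ u
    have hconv : ∏ i ∈ Finset.range u,
        ((Fintype.card k : ℚ) ^ ((finrank k ↥(W j) : ℤ) + 1 * i - i)
          - (Fintype.card k : ℚ) ^ ((finrank k ↥(W (j - 1)) : ℤ) + 1 * i))
        = ∏ i ∈ Finset.range u, ((Fintype.card k : ℚ) ^ (finrank k ↥(W (j - 1)))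
          * (Fintype.card k : ℚ) ^ i
          * ((Fintype.card k : ℚ) ^ ((w j : ℤ) - i) - 1)) := by
      refine Finset.prod_congr rfl fun i _ => ?_
      have e1 : (finrank k ↥(W j) : ℤ) + 1 * i - i
          = ((finrank k ↥(W (j - 1)) : ℤ) + (i : ℤ)) + ((w j : ℤ) - i) := by
        rw [hD]; push_cast; ring
      have e2 : (finrank k ↥(W (j - 1)) : ℤ) + 1 * i
          = (finrank k ↥(W (j - 1)) : ℤ) + (i : ℤ) := by ring
      rw [e1, e2, zpow_add₀ hQ0, zpow_add₀ hQ0, zpow_natCast, zpow_natCast]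
      ring
    simp only [Nat.cast_one, Nat.cast_zero] at hmas
    rw [hconv] at hmas
    have halg := alg12 (Fintype.card k : ℚ) hQ (finrank k ↥(W (j - 1)))
      (fun i => (w j : ℤ) - i) u _ hmas
    rw [hYg, halg, hS]
    rfl
  · -- case j = r + 1
    intro hjr
    have hα : ∀ u' U, U ∈ Yg B (W j) (W (j - 1)) u' →
        finrank k ↥(U ⊓ B.orthogonal (W j)) = 0 * u' := by
      intro u' U hU
      rw [horthA, show m - j = j - 1 from by omega, hU.2.2.2, finrank_bot, zero_mul]
    have hβ : ∀ u' U, U ∈ Yg B (W j) (W (j - 1)) u' →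
        finrank k ↥(U ⊓ B.orthogonal (W (j - 1))) = 1 * u' := by
      intro u' U hU
      rw [horthA', show m - j + 1 = j from by omega, inf_eq_left.mpr hU.2.2.1, hU.2.1, one_mul]
    have hmas := master halt hnd hA 0 1 hα hβ u
    have hconv : ∏ i ∈ Finset.range u,
        ((Fintype.card k : ℚ) ^ ((finrank k ↥(W j) : ℤ) + 0 * i - i)
          - (Fintype.card k : ℚ) ^ ((finrank k ↥(W (j - 1)) : ℤ) + 1 * i))
        = ∏ i ∈ Finset.range u, ((Fintype.card k : ℚ) ^ (finrank k ↥(W (j - 1)))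
          * (Fintype.card k : ℚ) ^ i
          * ((Fintype.card k : ℚ) ^ ((w j : ℤ) - 2 * i) - 1)) := by
      refine Finset.prod_congr rfl fun i _ => ?_
      have e1 : (finrank k ↥(W j) : ℤ) + 0 * i - i
          = ((finrank k ↥(W (j - 1)) : ℤ) + (i : ℤ)) + ((w j : ℤ) - 2 * i) := by
        rw [hD]; push_cast; ring
      have e2 : (finrank k ↥(W (j - 1)) : ℤ) + 1 * i
          = (finrank k ↥(W (j - 1)) : ℤ) + (i : ℤ) := by ring
      rw [e1, e2, zpow_add₀ hQ0, zpow_add₀ hQ0, zpow_natCast, zpow_natCast]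
      ring
    simp only [Nat.cast_one, Nat.cast_zero] at hmas
    rw [hconv] at hmas
    have halg := alg12 (Fintype.card k : ℚ) hQ (finrank k ↥(W (j - 1)))
      (fun i => (w j : ℤ) - 2 * i) u _ hmas
    rw [hYg, halg, hS]
    congr 1
    refine Finset.prod_congr rfl fun i _ => ?_
    have e3 : ((i : ℤ) + 1) = ((i + 1 : ℕ) : ℤ) := by push_cast; ring
    rw [qInt, qInt, e3, zpow_natCast, div_div_div_comm, div_self hQ1ne, div_one]
  · -- case r + 1 < j
    intro hjr
    have hα : ∀ u' U, U ∈ Yg B (W j) (W (j - 1)) u' →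
        finrank k ↥(U ⊓ B.orthogonal (W j)) = 0 * u' := by
      intro u' U hU
      have hle : U ⊓ W (m - j) ≤ U ⊓ W (j - 1) :=
        inf_le_inf_left U (hchain (j - 1) (by omega) (m - j) (by omega))
      rw [horthA]
      rw [hU.2.2.2] at hle
      rw [le_bot_iff.mp hle, finrank_bot, zero_mul]
    have hβ : ∀ u' U, U ∈ Yg B (W j) (W (j - 1)) u' →
        finrank k ↥(U ⊓ B.orthogonal (W (j - 1))) = 0 * u' := by
      intro u' U hU
      have hle : U ⊓ W (m - j + 1) ≤ U ⊓ W (j - 1) :=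
        inf_le_inf_left U (hchain (j - 1) (by omega) (m - j + 1) (by omega))
      rw [horthA']
      rw [hU.2.2.2] at hle
      rw [le_bot_iff.mp hle, finrank_bot, zero_mul]
    have hmas := master halt hnd hA 0 0 hα hβ u
    have hconv : ∏ i ∈ Finset.range u,
        ((Fintype.card k : ℚ) ^ ((finrank k ↥(W j) : ℤ) + 0 * i - i)
          - (Fintype.card k : ℚ) ^ ((finrank k ↥(W (j - 1)) : ℤ) + 0 * i))
        = ∏ i ∈ Finset.range u, ((Fintype.card k : ℚ) ^ (finrank k ↥(W (j - 1)))
          * ((Fintype.card k : ℚ) ^ ((w j : ℤ) - i) - 1)) := by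
      refine Finset.prod_congr rfl fun i _ => ?_
      have e1 : (finrank k ↥(W j) : ℤ) + 0 * i - i
          = (finrank k ↥(W (j - 1)) : ℤ) + ((w j : ℤ) - i) := by
        rw [hD]; push_cast; ring
      have e2 : (finrank k ↥(W (j - 1)) : ℤ) + 0 * i
          = (finrank k ↥(W (j - 1)) : ℤ) := by ring
      rw [e1, e2, zpow_add₀ hQ0, zpow_natCast]
      ring
    simp only [Nat.cast_one, Nat.cast_zero] at hmas
    rw [hconv] at hmas
    have halg := alg3 (Fintype.card k : ℚ) hQ (finrank k ↥(W (j - 1)))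
      (fun i => (w j : ℤ) - i) u _ hmas
    rw [hYg, halg, hS]
    rfl
end
end

section
/- Let V be an even-dimensional vector space over a finite field with a nondegenerate alternating bilinear form, m = 2r+1, and W an isotropic flag of type w (so W_i^⊥ = W_{m−i} for all i). For a ∈ ℕ^m, let ^spY_a(W) = {U ∈ Y_a(W) : U^⊥ ⊆ U} and Y^sp_{â}(W) = {U ∈ Y_{â}(W) : U ⊆ U^⊥}, where â = (â_j) with â_j = w_j − a_{m+1−j}. Then the assignment U ↦ U^⊥ defines a bijection from ^spY_a(W) onto Y^sp_{â}(W). -/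
open scoped Classical
noncomputable section

/-- `Y_a(W)` for an integer sequence `a`: subspaces `U` with
`dim(U ∩ W_i) − dim(U ∩ W_{i−1}) = a_i` for `1 ≤ i ≤ m`. -/
def YaZ (k : Type*) [Field k] {V : Type*} [AddCommGroup V] [Module k V]
    (m : ℕ) (W : ℕ → Submodule k V) (a : ℕ → ℤ) : Set (Submodule k V) :=
  {U | ∀ i, 1 ≤ i → i ≤ m →
    (Module.finrank k ↥(U ⊓ W i) : ℤ) = (Module.finrank k ↥(U ⊓ W (i - 1)) : ℤ) + a i}

lemma orth_sup_s9 {k : Type*} [Field k] {V : Type*} [AddCommGroup V] [Module k V]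
    (B : LinearMap.BilinForm k V) (A C : Submodule k V) :
    B.orthogonal (A ⊔ C) = B.orthogonal A ⊓ B.orthogonal C := by
  apply le_antisymm
  · exact le_inf (B.orthogonal_le le_sup_left) (B.orthogonal_le le_sup_right)
  · rintro x ⟨hxA, hxC⟩ n hn
    rcases Submodule.mem_sup.mp hn with ⟨a, ha, c, hc, rfl⟩
    have h1 : B a x = 0 := hxA a ha
    have h2 : B c x = 0 := hxC c hc
    simp [LinearMap.BilinForm.IsOrtho, h1, h2]

theorem perp_bijection_spY
    (k : Type*) [Field k] [Fintype k]
    (V : Type*) [AddCommGroup V] [Module k V] [FiniteDimensional k V]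
    (hdim : ∃ d : ℕ, Module.finrank k V = 2 * d)
    (B : LinearMap.BilinForm k V) (halt : B.IsAlt) (hnd : B.Nondegenerate)
    (r : ℕ) (m : ℕ) (hm : m = 2 * r + 1)
    (W : ℕ → Submodule k V) (w : ℕ → ℕ)
    (hW0 : W 0 = ⊥) (hWm : W m = ⊤)
    (hWmono : ∀ i, i < m → W i ≤ W (i + 1))
    (hWtype : ∀ i, 1 ≤ i → i ≤ m →
      Module.finrank k ↥(W i) = Module.finrank k ↥(W (i - 1)) + w i)
    (hWiso : ∀ i, i ≤ m → B.orthogonal (W i) = W (m - i))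
    (a : ℕ → ℤ) :
    Set.BijOn (fun U : Submodule k V => B.orthogonal U)
      {U ∈ YaZ k m W a | B.orthogonal U ≤ U}
      {U ∈ YaZ k m W (fun j => (w j : ℤ) - a (m + 1 - j)) | U ≤ B.orthogonal U} := by
  have hrefl : B.IsRefl := halt.isRefl
  have hoo : ∀ U : Submodule k V, B.orthogonal (B.orthogonal U) = U := fun U =>
    LinearMap.BilinForm.orthogonal_orthogonal hnd hrefl U
  set n := Module.finrank k V with hn
  have hfo : ∀ U : Submodule k V,
      (Module.finrank k ↥(B.orthogonal U) : ℤ) = (n : ℤ) - Module.finrank k ↥U := by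
    intro U
    have h := LinearMap.BilinForm.finrank_orthogonal hnd U
    have hle : Module.finrank k ↥U ≤ n := Submodule.finrank_le U
    omega
  -- finrank of W (m - i)
  have hWdim : ∀ i, i ≤ m →
      (Module.finrank k ↥(W (m - i)) : ℤ) = (n : ℤ) - Module.finrank k ↥(W i) := by
    intro i hi
    rw [← hWiso i hi]
    exact hfo (W i)
  -- key formula
  have key : ∀ (U : Submodule k V) (i : ℕ), i ≤ m →
      (Module.finrank k ↥(B.orthogonal U ⊓ W i) : ℤ) =
        (n : ℤ) - Module.finrank k ↥U - Module.finrank k ↥(W (m - i))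
          + Module.finrank k ↥(U ⊓ W (m - i)) := by
    intro U i hi
    have h1 : W i = B.orthogonal (W (m - i)) := by
      rw [hWiso (m - i) (Nat.sub_le m i), Nat.sub_sub_self hi]
    have h2 : B.orthogonal U ⊓ W i = B.orthogonal (U ⊔ W (m - i)) := by
      rw [h1, orth_sup_s9]
    rw [h2, hfo]
    have h3 := Submodule.finrank_sup_add_finrank_inf_eq U (W (m - i))
    have h4 : Module.finrank k ↥(U ⊔ W (m - i)) ≤ n := Submodule.finrank_le _
    omega
  -- symmetry of w
  have hwsym : ∀ j, 1 ≤ j → j ≤ m → (w (m + 1 - j) : ℤ) = w j := by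
    intro j h1 h2
    have e1 : (Module.finrank k ↥(W (m + 1 - j)) : ℤ)
        = Module.finrank k ↥(W (m - j)) + w (m + 1 - j) := by
      have h := hWtype (m + 1 - j) (by omega) (by omega)
      have : m + 1 - j - 1 = m - j := by omega
      rw [this] at h
      exact_mod_cast h
    have e2 : (Module.finrank k ↥(W j) : ℤ)
        = Module.finrank k ↥(W (j - 1)) + w j := by exact_mod_cast hWtype j h1 h2
    have e3 := hWdim j h2
    have e4 : (Module.finrank k ↥(W (m - (j - 1))) : ℤ)
        = (n : ℤ) - Module.finrank k ↥(W (j - 1)) := hWdim (j - 1) (by omega)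
    have e5 : m - (j - 1) = m + 1 - j := by omega
    rw [e5] at e4
    omega
  -- forward: U ∈ YaZ a → orth U ∈ YaZ â
  have fwd : ∀ (b : ℕ → ℤ) (U : Submodule k V), U ∈ YaZ k m W b →
      B.orthogonal U ∈ YaZ k m W (fun j => (w j : ℤ) - b (m + 1 - j)) := by
    intro b U hU i h1 h2
    have k1 := key U i h2
    have k2 := key U (i - 1) (by omega)
    have e5 : m - (i - 1) = m + 1 - i := by omega
    rw [e5] at k2
    have hb := hU (m + 1 - i) (by omega) (by omega)
    have e6 : m + 1 - i - 1 = m - i := by omega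
    rw [e6] at hb
    have hty : (Module.finrank k ↥(W (m + 1 - i)) : ℤ)
        = Module.finrank k ↥(W (m - i)) + w (m + 1 - i) := by
      have h := hWtype (m + 1 - i) (by omega) (by omega)
      have e : m + 1 - i - 1 = m - i := by omega
      rw [e] at h
      exact_mod_cast h
    have hw := hwsym i h1 h2
    simp only [k1, k2, hb]
    omega
  constructor
  · rintro U ⟨hUa, hUp⟩
    refine ⟨fwd a U hUa, ?_⟩
    show B.orthogonal U ≤ B.orthogonal (B.orthogonal U)
    rw [hoo U]
    exact hUp
  constructor
  · rintro U ⟨_, _⟩ U' ⟨_, _⟩ h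
    have : B.orthogonal (B.orthogonal U) = B.orthogonal (B.orthogonal U') :=
      congrArg B.orthogonal h
    rwa [hoo U, hoo U'] at this
  · rintro U' ⟨hU'a, hU'p⟩
    refine ⟨B.orthogonal U', ⟨?_, ?_⟩, hoo U'⟩
    · intro i h1 h2
      have h := fwd (fun j => (w j : ℤ) - a (m + 1 - j)) U' hU'a i h1 h2
      simp only at h
      have e : m + 1 - (m + 1 - i) = i := by omega
      rw [e] at h
      have hw := hwsym i h1 h2
      rw [h]
      have : (w i : ℤ) - ((w (m + 1 - i) : ℤ) - a i) = a i := by rw [hw]; ring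
      rw [this]
    · rw [hoo U']
      exact hU'p
end
end

section
/- Let n be a positive even integer. Let A ∈ Ξ_n and S, T ∈ Θ_n be such that A_{S,T} = A + S − T − (Š − Ť) has all entries in ℕ and lies in Θ_n. Then A_{S,T} ∈ Ξ_n (i.e., its entries satisfy a'_{ij} = a'_{−i,−j} for all i, j) if and only if S and T satisfy Condition (star): s_{ij} + s_{−i−1,−j} = t_{ij} + t_{−i−1,−j} for all i, j ∈ ℤ. -/
open scoped Classical
noncomputable section

/-- Membership in `Θ_n`: a ℤ×ℤ matrix with entries in ℕ, `n`-periodic along the diagonal,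
with finitely supported rows, such that `Σ_{i=i₀}^{i₀+n−1} Σ_{j∈ℤ} a_{ij}` is a constant `d`. -/
def IsTheta (n : ℕ) (A : ℤ → ℤ → ℕ) : Prop :=
  (∀ i j : ℤ, A (i + n) (j + n) = A i j) ∧
  (∀ i : ℤ, (Function.support (A i)).Finite) ∧
  ∃ d : ℕ, ∀ i0 : ℤ, ∑ i ∈ Finset.Ico i0 (i0 + n), ∑ᶠ j : ℤ, A i j = d

/-- The `(i,j)` entry of `A_{S,T} = A + S − T − (Š − Ť)`, where `Š` is the row shift. -/
def ASTent (A S T : ℤ → ℤ → ℕ) (i j : ℤ) : ℤ :=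
  (A i j : ℤ) + (S i j : ℤ) - (T i j : ℤ) - ((S (i - 1) j : ℤ) - (T (i - 1) j : ℤ))

theorem AST_symmetric_iff_star
    (n : ℕ) (hn : 0 < n) (hneven : Even n)
    (A : ℤ → ℤ → ℕ) (hATheta : IsTheta n A)
    (hAXi : ∀ i j : ℤ, A i j = A (-i) (-j))
    (S T : ℤ → ℤ → ℕ) (hS : IsTheta n S) (hT : IsTheta n T)
    -- A_{S,T} has all entries in ℕ and lies in Θ_n
    (hpos : ∀ i j : ℤ, 0 ≤ ASTent A S T i j)
    (hATheta' : IsTheta n (fun i j => (ASTent A S T i j).toNat)) :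
    (∀ i j : ℤ, ASTent A S T i j = ASTent A S T (-i) (-j)) ↔
      (∀ i j : ℤ, (S i j : ℤ) + (S (-i - 1) (-j) : ℤ) =
        (T i j : ℤ) + (T (-i - 1) (-j) : ℤ)) := by
  obtain ⟨hSper, hSfin, -⟩ := hS
  obtain ⟨hTper, hTfin, -⟩ := hT
  set F : ℤ → ℤ → ℤ := fun i j =>
    (S i j : ℤ) + (S (-i - 1) (-j) : ℤ) - (T i j : ℤ) - (T (-i - 1) (-j) : ℤ) with hF
  constructor
  · intro h
    have step : ∀ i j : ℤ, F i j = F (i - 1) j := by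
      intro i j
      have h1 := h i j
      have h2 : (A i j : ℤ) = (A (-i) (-j) : ℤ) := by exact_mod_cast hAXi i j
      simp only [ASTent] at h1
      simp only [hF]
      rw [show (-(i - 1) - 1 : ℤ) = -i by ring]
      linarith
    have const : ∀ i j : ℤ, F i j = F 0 j := by
      intro i j
      induction i using Int.induction_on with
      | zero => rfl
      | succ k ih =>
        have hs := step ((k : ℤ) + 1) j
        rw [show ((k : ℤ) + 1 - 1) = (k : ℤ) by ring] at hs
        rw [hs, ih]
      | pred k ih =>
        rw [← step (-(k : ℤ)) j]; exact ih
    have cper : ∀ j : ℤ, F 0 (j + n) = F 0 j := by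
      intro j
      have e1 : S ((n : ℤ)) (j + n) = S 0 j := by simpa using hSper 0 j
      have e3 : T ((n : ℤ)) (j + n) = T 0 j := by simpa using hTper 0 j
      have e2 : S (-(n : ℤ) - 1) (-(j + n)) = S (-1) (-j) := by
        have h' := hSper (-1 - n) (-j - n)
        rw [show (-1 - (n : ℤ) + n) = -1 by ring, show (-j - (n : ℤ) + n) = -j by ring] at h'
        rw [show (-(n : ℤ) - 1) = -1 - n by ring, show (-(j + (n : ℤ))) = -j - n by ring]
        exact h'.symm
      have e4 : T (-(n : ℤ) - 1) (-(j + n)) = T (-1) (-j) := by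
        have h' := hTper (-1 - n) (-j - n)
        rw [show (-1 - (n : ℤ) + n) = -1 by ring, show (-j - (n : ℤ) + n) = -j by ring] at h'
        rw [show (-(n : ℤ) - 1) = -1 - n by ring, show (-(j + (n : ℤ))) = -j - n by ring]
        exact h'.symm
      have hc := const (n : ℤ) (j + n)
      have : F (n : ℤ) (j + n) = F 0 j := by
        simp only [hF]
        rw [e1, e2, e3, e4]
        norm_num
      rw [← hc, this]
    have cperk : ∀ (k : ℕ) (j : ℤ), F 0 (j + k * n) = F 0 j := by
      intro k j
      induction k with
      | zero => simp
      | succ m ih =>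
        have : (j + ((m : ℤ) + 1) * n) = (j + m * n) + n := by push_cast; ring
        rw [show ((m + 1 : ℕ) : ℤ) = (m : ℤ) + 1 by push_cast; ring, this, cper, ih]
    have hfin : {j : ℤ | F 0 j ≠ 0}.Finite := by
      apply Set.Finite.subset
        ((((hSfin 0).union ((hSfin (-1)).image Neg.neg)).union
          ((hTfin 0).union ((hTfin (-1)).image Neg.neg)))
        )
      intro j hj
      by_contra hmem
      simp only [Set.mem_union, Set.mem_image, Function.mem_support, not_or, not_exists,
        not_and, not_not] at hmem
      obtain ⟨⟨hs0, hs1⟩, ht0, ht1⟩ := hmem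
      have hs1' : S (-1) (-j) = 0 := by
        by_contra hc
        exact hc (by simpa using hs1 (-j) (fun h => hc h))
      have ht1' : T (-1) (-j) = 0 := by
        by_contra hc
        exact hc (by simpa using ht1 (-j) (fun h => hc h))
      apply hj
      simp only [hF, show (-(0:ℤ) - 1) = -1 by ring, hs0, hs1', ht0, ht1']
      norm_num
    intro i j
    have hzero : F 0 j = 0 := by
      by_contra hne
      have hinf : {j : ℤ | F 0 j ≠ 0}.Infinite := by
        refine Set.infinite_of_injective_forall_mem
          (f := fun k : ℕ => j + k * n) ?_ ?_
        · intro a b hab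
          simp only at hab
          have : (a : ℤ) * n = b * n := by linarith
          have hn' : (0 : ℤ) < n := by exact_mod_cast hn
          have : (a : ℤ) = b := by
            exact mul_right_cancel₀ (by positivity) this
          exact_mod_cast this
        · intro k
          simp only [Set.mem_setOf_eq, cperk k j]
          exact hne
      exact hfin.not_infinite hinf
    have := const i j
    rw [hzero] at this
    simp only [hF] at this
    linarith
  · intro hstar i j
    simp only [ASTent]
    have h1 : (A i j : ℤ) = (A (-i) (-j) : ℤ) := by exact_mod_cast hAXi i j
    have h2 := hstar i j
    have h3 := hstar (i - 1) j
    rw [show (-(i - 1) - 1 : ℤ) = -i by ring] at h3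
    linarith
end
end

section
/- Let B = (b_{ij}) ∈ ^cΞ_{n,d}, let α = (α_i)_{i∈ℤ} ∈ ℕ^ℤ with α_i = α_{i+n} for all i, and suppose B − Σ_{i=1}^{n} α_i E^{i,i+1}_θ is a diagonal matrix. Let L ∈ X^c_{n,d} with dim_k(L_i/L_{i−1}) = ro(B)_i for all i. Then a chain L'' ∈ X^c_{n,d} with dim_k(L''_i/L''_{i−1}) = co(B)_i for all i satisfies M(L, L'') = B if and only if for every i ∈ ℤ: L_{i−1} ⊆ L''_i ⊆ L_{i+1}, dim_k((L_{i−1} + L''_{i−1})/L_{i−1}) = α_{n−i}, dim_k((L_i ∩ L''_i)/(L_{i−1} + L''_{i−1})) = b_{ii}, and dim_k(L_i/(L_i ∩ L''_i)) = α_i. -/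
set_option linter.unusedSectionVars false
set_option linter.unusedVariables false
set_option linter.unnecessarySimpa false
set_option synthInstance.maxHeartbeats 1000000
set_option maxHeartbeats 1000000


open scoped Classical
noncomputable section

section Lattices

variable (k : Type*) [Field k] [Fintype k]
variable (V : Type*) [AddCommGroup V] [Module (LaurentSeries k) V]
  [Module (PowerSeries k) V] [IsScalarTower (PowerSeries k) (LaurentSeries k) V]
  [Module k V] [IsScalarTower k (PowerSeries k) V]

/-- Multiplication by `ε` as a `k[[ε]]`-linear endomorphism of `V`. -/
def epsMap : V →ₗ[PowerSeries k] V :=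
  (LinearMap.lsmul (LaurentSeries k) V
    (algebraMap (PowerSeries k) (LaurentSeries k) PowerSeries.X)).restrictScalars
    (PowerSeries k)

/-- `dim_k (M / (N ∩ M))`, the relative dimension over `k` of a pair of `k[[ε]]`-lattices. -/
def rdim (N M : Submodule (PowerSeries k) V) : ℕ :=
  Module.finrank k
    (↥(M.restrictScalars k) ⧸ ((N.restrictScalars k).comap (M.restrictScalars k).subtype))

/-- Membership in `X^c_{n,d}`: a chain `(L_z)` of `k[[ε]]`-lattices in `V` with
`L_z ⊆ L_{z+1}`, `L_z = ε L_{z+n}` and `L_z^# = L_{−z−1}` for all `z`. -/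
def IsLatticeChain (n : ℕ)
    (B : V →ₗ[LaurentSeries k] V →ₗ[LaurentSeries k] LaurentSeries k)
    (L : ℤ → Submodule (PowerSeries k) V) : Prop :=
  (∀ z : ℤ, (L z).FG) ∧
  (∀ z : ℤ, Submodule.span (LaurentSeries k) (L z : Set V) = ⊤) ∧
  (∀ z : ℤ, L z ≤ L (z + 1)) ∧
  (∀ z : ℤ, L z = Submodule.map (epsMap k V) (L (z + n))) ∧
  (∀ z : ℤ,
    {v : V | ∀ u ∈ L z, B v u ∈ (algebraMap (PowerSeries k) (LaurentSeries k)).range}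
      = (L (-z - 1) : Set V))

/-- The matrix `M(L, L')` attached to a pair of lattice chains:
`a_{ij} = dim_k ( (L_i ∩ L'_j) / (L_{i−1} ∩ L'_j + L_i ∩ L'_{j−1}) )`. -/
def Mmat (L L' : ℤ → Submodule (PowerSeries k) V) (i j : ℤ) : ℕ :=
  rdim k V ((L (i - 1) ⊓ L' j) ⊔ (L i ⊓ L' (j - 1))) (L i ⊓ L' j)

variable {k V}

lemma epsMap_apply (v : V) :
    epsMap k V v = (PowerSeries.X : PowerSeries k) • v := by
  show (algebraMap (PowerSeries k) (LaurentSeries k) PowerSeries.X) • v = _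
  exact algebraMap_smul _ _ _

lemma epsMap_injective : Function.Injective (epsMap k V) := by
  intro a b h
  rw [epsMap_apply, epsMap_apply] at h
  have hX : (algebraMap (PowerSeries k) (LaurentSeries k) PowerSeries.X) ≠ 0 :=
    (map_ne_zero_iff _ (IsFractionRing.injective (PowerSeries k) (LaurentSeries k))).mpr
      PowerSeries.X_ne_zero
  have h' : (algebraMap (PowerSeries k) (LaurentSeries k) PowerSeries.X) • a
      = (algebraMap (PowerSeries k) (LaurentSeries k) PowerSeries.X) • b := by
    rw [algebraMap_smul, algebraMap_smul]; exact h
  have := congrArg (fun w => (algebraMap (PowerSeries k) (LaurentSeries k) PowerSeries.X)⁻¹ • w) h'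
  simpa [smul_smul, inv_mul_cancel₀ hX] using this

section Chain

variable {n : ℕ} {B : V →ₗ[LaurentSeries k] V →ₗ[LaurentSeries k] LaurentSeries k}
variable {L : ℤ → Submodule (PowerSeries k) V}

lemma chain_mono (hL : IsLatticeChain k V n B L) {z w : ℤ} (h : z ≤ w) : L z ≤ L w := by
  obtain ⟨t, rfl⟩ := Int.le.dest h
  clear h
  induction t with
  | zero => simp
  | succ t ih =>
    refine le_trans ih ?_
    have := hL.2.2.1 (z + t)
    rwa [show z + (t : ℤ) + 1 = z + ((t : ℕ) + 1 : ℕ) from by push_cast; ring] at this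

lemma chain_smul_mem (hL : IsLatticeChain k V n B L) {z : ℤ} {v : V} (hv : v ∈ L z) :
    (PowerSeries.X : PowerSeries k) • v ∈ L (z - n) := by
  have h := hL.2.2.2.1 (z - n)
  rw [show z - (n : ℤ) + n = z from by ring] at h
  rw [h, ← epsMap_apply]
  exact Submodule.mem_map_of_mem hv

lemma chain_smul_mem_up (hL : IsLatticeChain k V n B L) {z : ℤ} {v : V}
    (hv : (PowerSeries.X : PowerSeries k) • v ∈ L z) : v ∈ L (z + n) := by
  have h := hL.2.2.2.1 z
  rw [h] at hv
  obtain ⟨w, hw, hww⟩ := hv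
  have : epsMap k V w = epsMap k V v := by rw [hww, epsMap_apply]
  rwa [← epsMap_injective this]

lemma chain_pow_smul_mem_up (hL : IsLatticeChain k V n B L) :
    ∀ (s : ℕ) {z : ℤ} {v : V},
      ((PowerSeries.X : PowerSeries k) ^ s) • v ∈ L z → v ∈ L (z + s * n) := by
  intro s
  induction s with
  | zero => intro z v hv; simpa using hv
  | succ s ih =>
    intro z v hv
    rw [pow_succ, mul_smul] at hv
    have h1 := ih hv
    have h2 := chain_smul_mem_up hL h1
    rwa [show z + (s : ℤ) * n + n = z + ((s : ℕ) + 1 : ℕ) * n from by push_cast; ring] at h2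

lemma chain_pow_smul_mem_down (hL : IsLatticeChain k V n B L) :
    ∀ (s : ℕ) (z : ℤ) (v : V), v ∈ L (z - s * n) →
      ∃ w ∈ L z, v = ((PowerSeries.X : PowerSeries k) ^ s) • w := by
  intro s
  induction s with
  | zero => intro z v hv; exact ⟨v, by simpa using hv, by simp⟩
  | succ s ih =>
    intro z v hv
    have hv' : v ∈ L ((z - n) - s * n) := by
      rwa [show z - (n : ℤ) - s * n = z - ((s : ℕ) + 1 : ℕ) * n from by push_cast; ring]
    obtain ⟨w', hw', rfl⟩ := ih (z - n) v hv'
    have h := hL.2.2.2.1 (z - n)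
    rw [show z - (n : ℤ) + n = z from by ring] at h
    rw [h] at hw'
    obtain ⟨w, hw, rfl⟩ := hw'
    refine ⟨w, hw, ?_⟩
    rw [epsMap_apply, ← mul_smul, ← pow_succ]

/-- every vector is absorbed by `L z` after multiplying by a power of `X`. -/
lemma chain_exists_pow_smul_mem (hL : IsLatticeChain k V n B L) (v : V) (z : ℤ) :
    ∃ s : ℕ, ((PowerSeries.X : PowerSeries k) ^ s) • v ∈ L z := by
  have hv : v ∈ Submodule.span (LaurentSeries k) (L z : Set V) := by
    rw [hL.2.1 z]; trivial
  induction hv using Submodule.span_induction with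
  | mem x hx => exact ⟨0, by simpa using hx⟩
  | zero => exact ⟨0, by simp⟩
  | add x y hx hy ihx ihy =>
    obtain ⟨s, hs⟩ := ihx
    obtain ⟨t, ht⟩ := ihy
    refine ⟨s + t, ?_⟩
    have e : ((PowerSeries.X : PowerSeries k) ^ (s + t)) • (x + y)
        = (PowerSeries.X : PowerSeries k) ^ t • ((PowerSeries.X : PowerSeries k) ^ s • x)
          + (PowerSeries.X : PowerSeries k) ^ s • ((PowerSeries.X : PowerSeries k) ^ t • y) := by
      rw [smul_add, ← mul_smul, ← mul_smul, ← pow_add, ← pow_add, add_comm t s]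
    rw [e]
    exact add_mem (Submodule.smul_mem _ _ hs) (Submodule.smul_mem _ _ ht)
  | smul c x hx ihx =>
    obtain ⟨s, hs⟩ := ihx
    obtain ⟨⟨p, u⟩, hpu⟩ :=
      IsLocalization.surj (Submonoid.powers (PowerSeries.X : PowerSeries k)) c
    obtain ⟨N, hN⟩ := u.2
    refine ⟨N + s, ?_⟩
    have e : ((PowerSeries.X : PowerSeries k) ^ (N + s)) • (c • x) = p • ((PowerSeries.X : PowerSeries k) ^ s • x) := by
      rw [← algebraMap_smul (LaurentSeries k) ((PowerSeries.X : PowerSeries k) ^ (N + s)) (c • x),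
        smul_smul]
      rw [← algebraMap_smul (LaurentSeries k) p, ← algebraMap_smul (LaurentSeries k) ((PowerSeries.X : PowerSeries k) ^ s) x,
        smul_smul]
      congr 1
      have : (u : PowerSeries k) = PowerSeries.X ^ N := hN.symm
      calc algebraMap (PowerSeries k) (LaurentSeries k) (PowerSeries.X ^ (N + s)) * c
          = (c * algebraMap (PowerSeries k) (LaurentSeries k) (PowerSeries.X ^ N))
            * algebraMap (PowerSeries k) (LaurentSeries k) (PowerSeries.X ^ s) := by
            rw [map_pow, map_pow, map_pow, pow_add]; ring
        _ = algebraMap (PowerSeries k) (LaurentSeries k) p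
            * algebraMap (PowerSeries k) (LaurentSeries k) (PowerSeries.X ^ s) := by
            rw [← this, hpu]
    rw [e]
    exact Submodule.smul_mem _ _ hs

lemma chain_exists_mem (hL : IsLatticeChain k V n B L) (hn : 0 < n) (v : V) (z0 : ℤ) :
    ∃ z : ℤ, z0 ≤ z ∧ v ∈ L z := by
  obtain ⟨s, hs⟩ := chain_exists_pow_smul_mem hL v z0
  refine ⟨z0 + s * n, le_add_of_nonneg_right (Int.natCast_nonneg _), chain_pow_smul_mem_up hL s hs⟩

/-- boundedness: some `ε`-power of a stage of one chain lands inside any stage of another. -/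
lemma chain_bounded {B' : V →ₗ[LaurentSeries k] V →ₗ[LaurentSeries k] LaurentSeries k}
    {L'' : ℤ → Submodule (PowerSeries k) V}
    (hL : IsLatticeChain k V n B L) (hL'' : IsLatticeChain k V n B' L'')
    (i j : ℤ) : ∃ s : ℕ, L (i - s * n) ≤ L'' j := by
  obtain ⟨S, hS⟩ := hL.1 i
  have hch : ∀ g : V, ∃ s : ℕ, ((PowerSeries.X : PowerSeries k) ^ s) • g ∈ L'' j :=
    fun g => chain_exists_pow_smul_mem hL'' g j
  choose f hf using hch
  refine ⟨S.sup f, ?_⟩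
  intro v hv
  obtain ⟨w, hw, rfl⟩ := chain_pow_smul_mem_down hL (S.sup f) i v hv
  -- X^(sup) • w ∈ L'' j  whenever  w ∈ span R S
  have hspan : Submodule.span (PowerSeries k) (S : Set V)
      ≤ Submodule.comap (LinearMap.lsmul (PowerSeries k) V
          ((PowerSeries.X : PowerSeries k) ^ S.sup f)) (L'' j) := by
    rw [Submodule.span_le]
    intro g hg
    simp only [Submodule.mem_comap, LinearMap.lsmul_apply, SetLike.mem_coe] at *
    have hle : f g ≤ S.sup f := Finset.le_sup hg
    have : (PowerSeries.X : PowerSeries k) ^ S.sup f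
        = (PowerSeries.X : PowerSeries k) ^ (S.sup f - f g) * (PowerSeries.X : PowerSeries k) ^ (f g) := by
      rw [← pow_add, Nat.sub_add_cancel hle]
    rw [this, mul_smul]
    exact Submodule.smul_mem _ _ (hf g)
  have hw' : w ∈ Submodule.span (PowerSeries k) (S : Set V) := by rw [hS]; exact hw
  exact hspan hw'

lemma chain_inf_fg {N : Submodule (PowerSeries k) V} (hL : IsLatticeChain k V n B L)
    (i : ℤ) : (N ⊓ L i).FG := by
  haveI := isNoetherian_of_fg_of_noetherian (L i) (hL.1 i)
  have h1 : (Submodule.comap (L i).subtype (N ⊓ L i)).FG := IsNoetherian.noetherian _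
  have h2 := h1.map (L i).subtype
  rwa [Submodule.map_comap_subtype, inf_eq_right.mpr (inf_le_right : N ⊓ L i ≤ L i)] at h2

end Chain

/-- if the relative dimension vanishes and the quotient is `ε`-torsion, then `M ≤ N`. -/
lemma le_of_rdim_zero {N M : Submodule (PowerSeries k) V} (hfg : M.FG)
    (hXM : ∀ v ∈ M, (PowerSeries.X : PowerSeries k) • v ∈ N)
    (h0 : rdim k V N M = 0) : M ≤ N := by
  classical
  set M' := M.restrictScalars k with hM'
  set p := (N.restrictScalars k).comap M'.subtype with hp
  obtain ⟨S, hS⟩ := hfg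
  -- the quotient is spanned over k by the images of the generators
  set T0 : Set ↥M' := {x : ↥M' | (x : V) ∈ (S : Set V)} with hT0
  have hT0fin : T0.Finite := S.finite_toSet.preimage (Subtype.coe_injective.injOn)
  have core : ∀ x : ↥M', x ∈ Submodule.span k T0 ⊔ p := by
    rintro ⟨x, hx⟩
    have hx' : x ∈ Submodule.span (PowerSeries k) (S : Set V) := by rw [hS]; exact hx
    induction hx' using Submodule.span_induction with
    | mem g hg =>
      exact Submodule.mem_sup_left (Submodule.subset_span (by simpa [hT0] using hg))
    | zero =>
      have : (⟨(0 : V), ‹(0:V) ∈ M›⟩ : ↥M') = 0 := by ext; rfl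
      rw [this]; exact zero_mem _
    | add a b ha hb iha ihb =>
      have haM : a ∈ M := by rw [← hS]; exact ha
      have hbM : b ∈ M := by rw [← hS]; exact hb
      have : (⟨a + b, ‹a + b ∈ M›⟩ : ↥M') = ⟨a, haM⟩ + ⟨b, hbM⟩ := by ext; rfl
      rw [this]
      exact add_mem (iha haM) (ihb hbM)
    | smul c a ha iha =>
      have haM : a ∈ M := by rw [← hS]; exact ha
      set c0 := PowerSeries.constantCoeff c with hc0
      have hdvd : (PowerSeries.X : PowerSeries k) ∣ (c - PowerSeries.C c0) := by
        rw [PowerSeries.X_dvd_iff]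
        simp [hc0]
      obtain ⟨c', hc'⟩ := hdvd
      have hmemX : (PowerSeries.X : PowerSeries k) • (c' • a) ∈ M :=
        Submodule.smul_mem _ _ (Submodule.smul_mem _ _ haM)
      have hsplit : c • a = c0 • a + (PowerSeries.X : PowerSeries k) • (c' • a) := by
        have h1 : c = PowerSeries.C c0 + PowerSeries.X * c' := by rw [← hc']; ring
        calc c • a = (PowerSeries.C c0 + PowerSeries.X * c') • a := by rw [← h1]
          _ = (PowerSeries.C c0) • a + (PowerSeries.X * c') • a := add_smul _ _ _
          _ = c0 • a + (PowerSeries.X : PowerSeries k) • (c' • a) := by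
              rw [mul_smul]
              congr 1
              have : PowerSeries.C c0 = algebraMap k (PowerSeries k) c0 := rfl
              rw [this, algebraMap_smul]
      have hmem2 : c0 • a + (PowerSeries.X : PowerSeries k) • (c' • a) ∈ M := by
        rw [← hsplit]; exact Submodule.smul_mem _ _ haM
      have heq : (⟨c • a, ‹c • a ∈ M›⟩ : ↥M')
          = c0 • (⟨a, haM⟩ : ↥M') + ⟨(PowerSeries.X : PowerSeries k) • (c' • a), hmemX⟩ := by
        ext
        exact hsplit
      rw [heq]
      refine add_mem (Submodule.smul_mem _ _ (iha haM)) (Submodule.mem_sup_right ?_)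
      simp only [hp, Submodule.mem_comap, Submodule.coe_subtype, Submodule.restrictScalars_mem]
      exact hXM _ (Submodule.smul_mem _ _ haM)
  have hfin : Module.Finite k (↥M' ⧸ p) := by
    rw [Module.finite_def, Submodule.fg_def]
    refine ⟨p.mkQ '' T0, hT0fin.image _, ?_⟩
    rw [← Submodule.map_span]
    rw [eq_top_iff]
    rintro y -
    obtain ⟨x, rfl⟩ := p.mkQ_surjective y
    have hx := core x
    rw [Submodule.mem_sup] at hx
    obtain ⟨a, haa, b, hbb, hab⟩ := hx
    have : p.mkQ x = p.mkQ a := by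
      rw [← hab, map_add]
      have : p.mkQ b = 0 := by
        rwa [Submodule.mkQ_apply, Submodule.Quotient.mk_eq_zero]
      rw [this, add_zero]
    rw [this]
    exact Submodule.mem_map_of_mem haa
  have hsub : Subsingleton (↥M' ⧸ p) := by
    have h0' : Module.finrank k (↥M' ⧸ p) = 0 := h0
    exact Module.finrank_zero_iff.mp h0'
  have hptop : p = ⊤ := Submodule.Quotient.subsingleton_iff.mp hsub
  intro x hx
  have := Submodule.comap_subtype_eq_top.mp hptop
  exact this hx

lemma rdim_eq_zero_of_le {N M : Submodule (PowerSeries k) V} (h : M ≤ N) :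
    rdim k V N M = 0 := by
  unfold rdim
  have ht : ((N.restrictScalars k).comap (M.restrictScalars k).subtype) = ⊤ :=
    Submodule.comap_subtype_eq_top.mpr (fun x hx => h hx)
  rw [ht]
  have : Subsingleton (↥(M.restrictScalars k) ⧸ (⊤ : Submodule k ↥(M.restrictScalars k))) :=
    Submodule.Quotient.subsingleton_iff.mpr rfl
  exact Module.finrank_zero_of_subsingleton

lemma comap_subtype_inf {N M : Submodule (PowerSeries k) V} :
    ((N.restrictScalars k).comap (M.restrictScalars k).subtype)
      = (((N ⊓ M).restrictScalars k).comap (M.restrictScalars k).subtype) := by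
  ext x
  simp only [Submodule.mem_comap, Submodule.restrictScalars_mem, Submodule.mem_inf]
  exact ⟨fun h => ⟨h, x.2⟩, fun h => h.1⟩

lemma rdim_inf_right (N M : Submodule (PowerSeries k) V) :
    rdim k V N M = rdim k V (N ⊓ M) M := by
  unfold rdim; rw [comap_subtype_inf]

lemma restrictScalars_sup (N M : Submodule (PowerSeries k) V) :
    (N ⊔ M).restrictScalars k = N.restrictScalars k ⊔ M.restrictScalars k := by
  ext x
  simp only [Submodule.restrictScalars_mem, Submodule.mem_sup]

lemma rdim_sup (N M : Submodule (PowerSeries k) V) :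
    rdim k V N M = rdim k V N (N ⊔ M) := by
  unfold rdim
  have e1 := LinearMap.quotientInfEquivSupQuotient
      (M.restrictScalars k) (N.restrictScalars k)
  have h2 : ((N.restrictScalars k).comap (M.restrictScalars k).subtype)
      = ((M.restrictScalars k ⊓ N.restrictScalars k).comap (M.restrictScalars k).subtype) := by
    ext x
    simp only [Submodule.mem_comap, Submodule.restrictScalars_mem, Submodule.mem_inf]
    exact ⟨fun h => ⟨x.2, h⟩, fun h => h.2⟩
  have key : ∀ (A : Submodule k V), A = M.restrictScalars k ⊔ N.restrictScalars k →
      Module.finrank k (↥A ⧸ Submodule.comap A.subtype (N.restrictScalars k))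
        = Module.finrank k
          (↥(M.restrictScalars k ⊔ N.restrictScalars k) ⧸
            Submodule.comap (M.restrictScalars k ⊔ N.restrictScalars k).subtype
              (N.restrictScalars k)) := by
    rintro A rfl; rfl
  rw [h2, Submodule.comap_inf, e1.finrank_eq]
  exact (key _ ((restrictScalars_sup N M).trans (sup_comm _ _))).symm

lemma rdim_second_iso (A C : Submodule (PowerSeries k) V) :
    rdim k V (A ⊓ C) C = rdim k V A (A ⊔ C) :=
  (rdim_inf_right A C).symm.trans (rdim_sup A C)

/-- transpose symmetry of `Mmat`. -/
lemma Mmat_comm (L L'' : ℤ → Submodule (PowerSeries k) V) (i j : ℤ) :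
    Mmat k V L'' L j i = Mmat k V L L'' i j := by
  unfold Mmat
  rw [inf_comm (L'' j) (L i), inf_comm (L'' (j - 1)) (L i), inf_comm (L'' j) (L (i - 1)),
    sup_comm]

section Chain2

variable {n : ℕ} {B B' : V →ₗ[LaurentSeries k] V →ₗ[LaurentSeries k] LaurentSeries k}
variable {L L'' : ℤ → Submodule (PowerSeries k) V}

/-- a vanishing entry of `M(L,L'')` forces the corresponding corner to collapse. -/
lemma inf_eq_of_Mmat_zero (hn : 0 < n)
    (hL : IsLatticeChain k V n B L) (hL'' : IsLatticeChain k V n B' L'')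
    {i j : ℤ} (h0 : Mmat k V L L'' i j = 0) :
    L i ⊓ L'' j = (L (i - 1) ⊓ L'' j) ⊔ (L i ⊓ L'' (j - 1)) := by
  have hle1 : (L (i - 1) ⊓ L'' j) ⊔ (L i ⊓ L'' (j - 1)) ≤ L i ⊓ L'' j :=
    sup_le (inf_le_inf_right _ (chain_mono hL (by omega)))
      (inf_le_inf_left _ (chain_mono hL'' (by omega)))
  refine le_antisymm ?_ hle1
  refine le_of_rdim_zero (chain_inf_fg (N := L i) hL'' j) ?_ h0
  intro v hv
  have h1 : (PowerSeries.X : PowerSeries k) • v ∈ L (i - n) :=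
    chain_smul_mem hL (hv.1 : v ∈ L i)
  have h2 : (PowerSeries.X : PowerSeries k) • v ∈ L'' (j - n) :=
    chain_smul_mem hL'' (hv.2 : v ∈ L'' j)
  refine Submodule.mem_sup_left ?_
  exact ⟨chain_mono hL (by omega) h1, chain_mono hL'' (by omega) h2⟩

/-- key containment: vanishing of the lower-left block forces `L (i-1) ≤ L'' i`. -/
lemma chain_le_of_Mmat_zero (hn : 0 < n)
    (hL : IsLatticeChain k V n B L) (hL'' : IsLatticeChain k V n B' L'') (i : ℤ)
    (h0 : ∀ m J : ℤ, m ≤ i - 1 → i + 1 ≤ J → Mmat k V L L'' m J = 0) :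
    L (i - 1) ≤ L'' i := by
  have stepA : ∀ J : ℤ, i ≤ J → L (i - 1) ⊓ L'' (J + 1) ≤ L (i - 1) ⊓ L'' J := by
    intro J hJ
    obtain ⟨s, hs⟩ := chain_bounded hL hL'' (i - 1) J
    have Q : ∀ t : ℕ, L (i - 1) ⊓ L'' (J + 1)
        ≤ (L (i - 1 - t) ⊓ L'' (J + 1)) ⊔ (L (i - 1) ⊓ L'' J) := by
      intro t
      induction t with
      | zero => simpa using le_sup_left
      | succ t ih =>
        refine le_trans ih ?_
        have he := inf_eq_of_Mmat_zero hn hL hL''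
          (h0 (i - 1 - t) (J + 1) (by omega) (by omega))
        have he2 : L (i - 1 - t) ⊓ L'' (J + 1)
            ≤ (L (i - 1 - ((t : ℕ) + 1 : ℕ)) ⊓ L'' (J + 1)) ⊔ (L (i - 1) ⊓ L'' J) := by
          rw [he, show (i - 1 - (t : ℤ) - 1 : ℤ) = i - 1 - ((t : ℕ) + 1 : ℕ) from by push_cast; ring,
            show (J + 1 - 1 : ℤ) = J from by ring]
          exact sup_le_sup_left
            (le_trans (inf_le_inf_right _ (chain_mono hL (by omega))) le_rfl) _
        exact sup_le he2 le_sup_right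
    have hfin := Q (s * n)
    have hcomp : L (i - 1 - ((s * n : ℕ) : ℤ)) ⊓ L'' (J + 1) ≤ L (i - 1) ⊓ L'' J := by
      refine inf_le_of_left_le ?_
      refine le_inf (chain_mono hL (by omega)) ?_
      rw [show (i - 1 - ((s * n : ℕ) : ℤ)) = i - 1 - s * n from by push_cast; ring]
      exact hs
    exact le_trans hfin (sup_le hcomp le_rfl)
  have stepB : ∀ t : ℕ, L (i - 1) ⊓ L'' (i + t) ≤ L'' i := by
    intro t
    induction t with
    | zero => simpa using inf_le_right
    | succ t ih =>
      have := stepA (i + t) (by omega)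
      refine le_trans ?_ (le_trans this ih)
      rw [show (i + ((t : ℕ) + 1 : ℕ) : ℤ) = i + (t : ℤ) + 1 from by push_cast; ring]
  intro v hv
  obtain ⟨z, hz, hvz⟩ := chain_exists_mem hL'' hn v i
  have ht : z = i + ((z - i).toNat : ℤ) := by omega
  refine stepB (z - i).toNat ⟨hv, ?_⟩
  rwa [← ht]

end Chain2

end Lattices


/-- The `ℤ×ℤ` matrix `E^{ij}`, with entry `1` at all positions `(i + sn, j + sn)`, `s ∈ ℤ`. -/
def Emat (n : ℕ) (i j : ℤ) : ℤ → ℤ → ℕ :=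
  fun a b => if ∃ s : ℤ, a = i + s * n ∧ b = j + s * n then 1 else 0

/-- `E^{ij}_θ = E^{ij} + E^{−i,−j}`. -/
def Ematθ (n : ℕ) (i j : ℤ) : ℤ → ℤ → ℕ :=
  fun a b => Emat n i j a b + Emat n (-i) (-j) a b

/-- Membership in `^cΞ_{n,d}`: an `n`-periodic ℕ-matrix with finitely supported rows,
total mass `2d` per period, symmetric under `(i,j) ↦ (−i,−j)`, with even entries at
`(0,0)` and `(r+1, r+1)`. -/
def IsCXi (n r d : ℕ) (A : ℤ → ℤ → ℕ) : Prop :=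
  (∀ i j : ℤ, A (i + n) (j + n) = A i j) ∧
  (∀ i : ℤ, (Function.support (A i)).Finite) ∧
  (∀ i0 : ℤ, ∑ i ∈ Finset.Ico i0 (i0 + n), ∑ᶠ j : ℤ, A i j = 2 * d) ∧
  (∀ i j : ℤ, A i j = A (-i) (-j)) ∧
  Even (A 0 0) ∧ Even (A ((r : ℤ) + 1) ((r : ℤ) + 1))

section Nums
variable {n : ℕ} {α : ℤ → ℕ}

lemma alpha_per (hα : ∀ i : ℤ, α (i + n) = α i) : ∀ (t : ℤ) (i : ℤ), α (i + t * n) = α i := by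
  have hdown : ∀ i : ℤ, α (i - n) = α i := by
    intro i
    have h := hα (i - n)
    rw [show (i : ℤ) - n + n = i from by ring] at h
    exact h.symm
  intro t
  induction t using Int.induction_on with
  | zero => simp
  | succ m ih =>
    intro i
    rw [show i + ((m : ℤ) + 1) * n = (i + n) + m * n from by ring, ih, hα]
  | pred m ih =>
    intro i
    rw [show i + (-(m : ℤ) - 1) * n = (i - n) + (-(m : ℤ)) * n from by ring, ih, hdown]

lemma alpha_congr (hα : ∀ i : ℤ, α (i + n) = α i) {a b : ℤ} (h : ∃ t : ℤ, a = b + t * n) :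
    α a = α b := by
  obtain ⟨t, rfl⟩ := h
  exact alpha_per hα t b

lemma rep_exists (hn : 0 < n) (a : ℤ) : ∃ (m : ℕ) (s : ℤ), 1 ≤ m ∧ m ≤ n ∧ a = m + s * n := by
  have hn' : (0 : ℤ) < n := by exact_mod_cast hn
  have h2 : (n : ℤ) * ((a - 1) / n) + (a - 1) % n = a - 1 := Int.mul_ediv_add_emod _ _
  have h1 : 0 ≤ (a - 1) % n := Int.emod_nonneg _ hn'.ne'
  have h3 : (a - 1) % n < n := Int.emod_lt_of_pos _ hn'
  refine ⟨(a - n * ((a - 1) / n)).toNat, (a - 1) / n, by omega, by omega, ?_⟩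
  have : ((a - n * ((a - 1) / n)).toNat : ℤ) = a - n * ((a - 1) / n) := Int.toNat_of_nonneg (by omega)
  rw [this]; ring

lemma rep_unique (hn : 0 < n) {m m' s s' : ℤ} (hm : 1 ≤ m) (hm2 : m ≤ n) (hm' : 1 ≤ m')
    (hm'2 : m' ≤ n) (h : m + s * n = m' + s' * n) : m = m' := by
  have hn' : (0 : ℤ) < n := by exact_mod_cast hn
  have h2 : m - m' = (s' - s) * n := by linarith
  rcases lt_trichotomy (s' - s) 0 with hlt | heq | hgt
  · have h4 : (s' - s) * n ≤ (-1) * n := by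
      apply mul_le_mul_of_nonneg_right (by omega) hn'.le
    omega
  · rw [heq] at h2; omega
  · have h4 : 1 * n ≤ (s' - s) * n := by
      apply mul_le_mul_of_nonneg_right (by omega) hn'.le
    omega

lemma sum_up (hn : 0 < n) (hα : ∀ i : ℤ, α (i + n) = α i) (a : ℤ) :
    (∑ i ∈ Finset.Icc (1 : ℕ) n, α i * Ematθ n i ((i : ℤ) + 1) a (a + 1)) = α a := by
  obtain ⟨m, s, hm1, hm2, hms⟩ := rep_exists hn a
  rw [Finset.sum_eq_single_of_mem m (Finset.mem_Icc.mpr ⟨hm1, hm2⟩)]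
  · have e1 : Emat n m (m + 1) a (a + 1) = 1 := by
      unfold Emat
      rw [if_pos ⟨s, hms, by omega⟩]
    have e2 : Emat n (-(m : ℤ)) (-((m : ℤ) + 1)) a (a + 1) = 0 := by
      unfold Emat
      rw [if_neg]
      rintro ⟨t, h1, h2⟩
      omega
    unfold Ematθ
    rw [e1, e2]
    simp only [add_zero, mul_one]
    exact (alpha_congr hα ⟨s, hms⟩).symm
  · intro m' hm' hne
    rw [Finset.mem_Icc] at hm'
    have e1 : Emat n (m' : ℤ) ((m' : ℤ) + 1) a (a + 1) = 0 := by
      unfold Emat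
      rw [if_neg]
      rintro ⟨t, h1, h2⟩
      have hc : (m' : ℤ) = (m : ℤ) :=
        rep_unique hn (by exact_mod_cast hm'.1) (by exact_mod_cast hm'.2)
          (by exact_mod_cast hm1) (by exact_mod_cast hm2)
          (show (m' : ℤ) + t * n = m + s * n from by omega)
      exact hne (by exact_mod_cast hc)
    have e2 : Emat n (-(m' : ℤ)) (-((m' : ℤ) + 1)) a (a + 1) = 0 := by
      unfold Emat
      rw [if_neg]
      rintro ⟨t, h1, h2⟩
      omega
    unfold Ematθ
    rw [e1, e2]
    simp

lemma sum_down (hn : 0 < n) (hα : ∀ i : ℤ, α (i + n) = α i) (a : ℤ) :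
    (∑ i ∈ Finset.Icc (1 : ℕ) n, α i * Ematθ n i ((i : ℤ) + 1) a (a - 1)) = α ((n : ℤ) - a) := by
  obtain ⟨m, s, hm1, hm2, hms⟩ := rep_exists hn (-a)
  rw [Finset.sum_eq_single_of_mem m (Finset.mem_Icc.mpr ⟨hm1, hm2⟩)]
  · have e1 : Emat n m ((m : ℤ) + 1) a (a - 1) = 0 := by
      unfold Emat
      rw [if_neg]
      rintro ⟨t, h1, h2⟩
      omega
    have e2 : Emat n (-(m : ℤ)) (-((m : ℤ) + 1)) a (a - 1) = 1 := by
      unfold Emat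
      have hneg : (-s) * (n : ℤ) = -(s * n) := by ring
      rw [if_pos ⟨-s, by omega, by omega⟩]
    unfold Ematθ
    rw [e1, e2]
    simp only [zero_add, mul_one]
    refine alpha_congr hα ?_
    refine ⟨-s - 1, ?_⟩
    have hh : (-s - 1) * (n : ℤ) = -(s * n) - n := by ring
    omega
  · intro m' hm' hne
    rw [Finset.mem_Icc] at hm'
    have e1 : Emat n (m' : ℤ) ((m' : ℤ) + 1) a (a - 1) = 0 := by
      unfold Emat
      rw [if_neg]
      rintro ⟨t, h1, h2⟩
      omega
    have e2 : Emat n (-(m' : ℤ)) (-((m' : ℤ) + 1)) a (a - 1) = 0 := by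
      unfold Emat
      rw [if_neg]
      rintro ⟨t, h1, h2⟩
      have hh1 : (0 : ℤ) * (n : ℤ) = 0 := by ring
      have hh2 : (s + t) * (n : ℤ) = s * n + t * n := by ring
      have hc : (m' : ℤ) = (m : ℤ) :=
        rep_unique hn (by exact_mod_cast hm'.1) (by exact_mod_cast hm'.2)
          (by exact_mod_cast hm1) (by exact_mod_cast hm2)
          (show (m' : ℤ) + (0 : ℤ) * n = m + (s + t) * n from by omega)
      exact hne (by exact_mod_cast hc)
    unfold Ematθ
    rw [e1, e2]
    simp

lemma sum_far (a b : ℤ) (h1 : b ≠ a + 1) (h2 : b ≠ a - 1) :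
    (∑ i ∈ Finset.Icc (1 : ℕ) n, α i * Ematθ n i ((i : ℤ) + 1) a b) = 0 := by
  apply Finset.sum_eq_zero
  intro m _
  have e1 : Emat n (m : ℤ) ((m : ℤ) + 1) a b = 0 := by
    unfold Emat
    rw [if_neg]
    rintro ⟨t, ha, hb⟩
    omega
  have e2 : Emat n (-(m : ℤ)) (-((m : ℤ) + 1)) a b = 0 := by
    unfold Emat
    rw [if_neg]
    rintro ⟨t, ha, hb⟩
    omega
  unfold Ematθ
  rw [e1, e2]
  simp

end Nums

theorem characterization_of_Z
    (k : Type*) [Field k] [Fintype k] (q : ℕ) (hq : Fintype.card k = q)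
    (V : Type*) [AddCommGroup V] [Module (LaurentSeries k) V]
    [Module (PowerSeries k) V] [IsScalarTower (PowerSeries k) (LaurentSeries k) V]
    [Module k V] [IsScalarTower k (PowerSeries k) V]
    (r d : ℕ) (n : ℕ) (hn : n = 2 * r + 2)
    (B : V →ₗ[LaurentSeries k] V →ₗ[LaurentSeries k] LaurentSeries k)
    (halt : ∀ v : V, B v v = 0) (hnd : LinearMap.BilinForm.Nondegenerate B)
    (hdim : Module.finrank (LaurentSeries k) V = 2 * d)
    (Bm : ℤ → ℤ → ℕ) (hBm : IsCXi n r d Bm)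
    (α : ℤ → ℕ) (hα : ∀ i : ℤ, α (i + n) = α i)
    -- B − Σ_{i=1}^{n} α_i E^{i,i+1}_θ is diagonal
    (htri : ∀ a b : ℤ, a ≠ b →
      Bm a b = ∑ i ∈ Finset.Icc 1 n, α i * Ematθ n i ((i : ℤ) + 1) a b)
    (L : ℤ → Submodule (PowerSeries k) V) (hL : IsLatticeChain k V n B L)
    (hLro : ∀ i : ℤ, rdim k V (L (i - 1)) (L i) = ∑ᶠ j : ℤ, Bm i j)
    (L'' : ℤ → Submodule (PowerSeries k) V) (hL'' : IsLatticeChain k V n B L'')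
    (hLco : ∀ i : ℤ, rdim k V (L'' (i - 1)) (L'' i) = ∑ᶠ j : ℤ, Bm j i) :
    (∀ i j : ℤ, Mmat k V L L'' i j = Bm i j) ↔
      (∀ i : ℤ,
        L (i - 1) ≤ L'' i ∧ L'' i ≤ L (i + 1) ∧
        rdim k V (L (i - 1)) (L (i - 1) ⊔ L'' (i - 1)) = α ((n : ℤ) - i) ∧
        rdim k V (L (i - 1) ⊔ L'' (i - 1)) (L i ⊓ L'' i) = Bm i i ∧
        rdim k V (L i ⊓ L'' i) (L i) = α i) := by
  have hn0 : 0 < n := by omega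
  constructor
  · -- forward direction
    intro h
    -- containments, for all indices
    have c1 : ∀ m : ℤ, L (m - 1) ≤ L'' m := by
      intro m
      refine chain_le_of_Mmat_zero hn0 hL hL'' m ?_
      intro a J ha hJ
      rw [h a J, htri a J (by omega)]
      exact sum_far a J (by omega) (by omega)
    have c2 : ∀ m : ℤ, L'' m ≤ L (m + 1) := by
      intro m
      have hz : ∀ a J : ℤ, a ≤ (m + 1) - 1 → (m + 1) + 1 ≤ J → Mmat k V L'' L a J = 0 := by
        intro a J ha hJ
        rw [Mmat_comm, h J a, htri J a (by omega)]
        exact sum_far J a (by omega) (by omega)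
      have := chain_le_of_Mmat_zero hn0 hL'' hL (m + 1) hz
      rwa [show m + 1 - 1 = m from by ring] at this
    have c1' : ∀ m : ℤ, L m ≤ L'' (m + 1) := by
      intro m
      have := c1 (m + 1)
      rwa [show m + 1 - 1 = m from by ring] at this
    intro i
    refine ⟨c1 i, c2 i, ?_, ?_, ?_⟩
    · -- subdiagonal entry
      have hM : Mmat k V L L'' i (i - 1) = α ((n : ℤ) - i) := by
        rw [h i (i - 1), htri i (i - 1) (by omega), sum_down hn0 hα i]
      rw [← hM]
      unfold Mmat
      have e1 : L i ⊓ L'' (i - 1) = L'' (i - 1) := by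
        refine inf_eq_right.mpr ?_
        have := c2 (i - 1)
        rwa [show i - 1 + 1 = i from by ring] at this
      have e2 : L i ⊓ L'' (i - 1 - 1) = L'' (i - 1 - 1) := by
        refine inf_eq_right.mpr ?_
        have h1 := c2 (i - 1 - 1)
        refine le_trans h1 (chain_mono hL (by omega))
      have e3 : (L (i - 1) ⊓ L'' (i - 1)) ⊔ L'' (i - 1 - 1) = L (i - 1) ⊓ L'' (i - 1) := by
        refine sup_eq_left.mpr (le_inf ?_ (chain_mono hL'' (by omega)))
        have h1 := c2 (i - 1 - 1)
        rwa [show i - 1 - 1 + 1 = i - 1 from by ring] at h1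
      rw [e1, e2, e3]
      exact (rdim_second_iso (L (i - 1)) (L'' (i - 1))).symm
    · -- diagonal entry
      have hM := h i i
      unfold Mmat at hM
      have e1 : L (i - 1) ⊓ L'' i = L (i - 1) := inf_eq_left.mpr (c1 i)
      have e2 : L i ⊓ L'' (i - 1) = L'' (i - 1) := by
        refine inf_eq_right.mpr ?_
        have := c2 (i - 1)
        rwa [show i - 1 + 1 = i from by ring] at this
      rwa [e1, e2] at hM
    · -- superdiagonal entry
      have hM : Mmat k V L L'' i (i + 1) = α i := by
        rw [h i (i + 1), htri i (i + 1) (by omega), sum_up hn0 hα i]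
      rw [← hM]
      unfold Mmat
      have e1 : L i ⊓ L'' (i + 1) = L i := inf_eq_left.mpr (c1' i)
      have e2 : L (i - 1) ⊓ L'' (i + 1) = L (i - 1) :=
        inf_eq_left.mpr (le_trans (chain_mono hL (by omega)) (c1' i))
      have e3 : L (i - 1) ⊔ (L i ⊓ L'' (i + 1 - 1)) = L i ⊓ L'' i := by
        rw [show i + 1 - 1 = i from by ring]
        exact sup_eq_right.mpr (le_inf (chain_mono hL (by omega)) (c1 i))
      rw [e1, e2, e3]
  · -- backward direction
    intro h i j
    have c1 : ∀ m : ℤ, L (m - 1) ≤ L'' m := fun m => (h m).1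
    have c2 : ∀ m : ℤ, L'' m ≤ L (m + 1) := fun m => (h m).2.1
    have c1' : ∀ m : ℤ, L m ≤ L'' (m + 1) := by
      intro m
      have := c1 (m + 1)
      rwa [show m + 1 - 1 = m from by ring] at this
    rcases (show j = i ∨ j = i + 1 ∨ j = i - 1 ∨ i + 2 ≤ j ∨ j ≤ i - 2 from by omega) with
      heq | heq | heq | hj | hj
    · -- diagonal
      rw [heq]
      have hgoal := (h i).2.2.2.1
      unfold Mmat
      have e1 : L (i - 1) ⊓ L'' i = L (i - 1) := inf_eq_left.mpr (c1 i)
      have e2 : L i ⊓ L'' (i - 1) = L'' (i - 1) := by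
        refine inf_eq_right.mpr ?_
        have := c2 (i - 1)
        rwa [show i - 1 + 1 = i from by ring] at this
      rw [e1, e2]
      exact hgoal
    · -- superdiagonal
      rw [heq]
      have hB : Bm i (i + 1) = α i := by
        rw [htri i (i + 1) (by omega), sum_up hn0 hα i]
      rw [hB]
      unfold Mmat
      have e1 : L i ⊓ L'' (i + 1) = L i := inf_eq_left.mpr (c1' i)
      have e2 : L (i - 1) ⊓ L'' (i + 1) = L (i - 1) :=
        inf_eq_left.mpr (le_trans (chain_mono hL (by omega)) (c1' i))
      have e3 : L (i - 1) ⊔ (L i ⊓ L'' (i + 1 - 1)) = L i ⊓ L'' i := by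
        rw [show i + 1 - 1 = i from by ring]
        exact sup_eq_right.mpr (le_inf (chain_mono hL (by omega)) (c1 i))
      rw [e1, e2, e3]
      exact (h i).2.2.2.2
    · -- subdiagonal
      rw [heq]
      have hB : Bm i (i - 1) = α ((n : ℤ) - i) := by
        rw [htri i (i - 1) (by omega), sum_down hn0 hα i]
      rw [hB]
      unfold Mmat
      have e1 : L i ⊓ L'' (i - 1) = L'' (i - 1) := by
        refine inf_eq_right.mpr ?_
        have := c2 (i - 1)
        rwa [show i - 1 + 1 = i from by ring] at this
      have e2 : L i ⊓ L'' (i - 1 - 1) = L'' (i - 1 - 1) := by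
        refine inf_eq_right.mpr (le_trans (c2 (i - 1 - 1)) (chain_mono hL (by omega)))
      have e3 : (L (i - 1) ⊓ L'' (i - 1)) ⊔ L'' (i - 1 - 1) = L (i - 1) ⊓ L'' (i - 1) := by
        refine sup_eq_left.mpr (le_inf ?_ (chain_mono hL'' (by omega)))
        have h1 := c2 (i - 1 - 1)
        rwa [show i - 1 - 1 + 1 = i - 1 from by ring] at h1
      rw [e1, e2, e3, rdim_second_iso (L (i - 1)) (L'' (i - 1))]
      exact (h i).2.2.1
    · -- far above the diagonal
      have hB : Bm i j = 0 := by
        rw [htri i j (by omega)]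
        exact sum_far i j (by omega) (by omega)
      rw [hB]
      unfold Mmat
      refine rdim_eq_zero_of_le ?_
      have hLi : L i ≤ L'' (j - 1) := le_trans (c1' i) (chain_mono hL'' (by omega))
      refine le_trans ?_ le_sup_right
      exact le_inf inf_le_left (le_trans inf_le_left hLi)
    · -- far below the diagonal
      have hB : Bm i j = 0 := by
        rw [htri i j (by omega)]
        exact sum_far i j (by omega) (by omega)
      rw [hB]
      unfold Mmat
      refine rdim_eq_zero_of_le ?_
      have hLj : L'' j ≤ L (i - 1) :=
        le_trans (chain_mono hL'' (show j ≤ i - 2 from hj)) (by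
          have := c2 (i - 2)
          rwa [show i - 2 + 1 = i - 1 from by ring] at this)
      refine le_trans ?_ le_sup_left
      exact le_inf (le_trans inf_le_right hLj) inf_le_right
end
end
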